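/- arXiv:2103.03212 — 9 statements merged into one kernel-verified Lean document; each statement's English description precedes it below -/
import Mathlib

section
/- Let W be a real M×N matrix all of whose rows are nonzero. Then the number of connected components of the open set {x ∈ ℝ^N : (W x)_i ≠ 0 for all i = 1,…,M} equals the Whitney sum Σ_{B ⊆ {1,…,M}} (−1)^{|B| − rank(W_{B:})}, where W_{B:} denotes the submatrix of W formed by the rows indexed by B. -/
open Matrix Finset Module

variable {m n : ℕ}

/-- sign-compatibility of a sign vector with a value vector -/
def Compat {m : ℕ} (s : Fin m → Bool) (v : Fin m → ℝ) : Prop :=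
  ∀ i, if s i then 0 < v i else v i < 0

/-- achievable sign vectors -/
def Ach {m n : ℕ} (W : Matrix (Fin m) (Fin n) ℝ) (s : Fin m → Bool) : Prop :=
  ∃ x, Compat s (W.mulVec x)

lemma compat_combo {s : Fin m → Bool} {u v : Fin m → ℝ} (hu : Compat s u) (hv : Compat s v)
    {a b : ℝ} (ha : 0 ≤ a) (hb : 0 ≤ b) (hab : a + b = 1) :
    Compat s (a • u + b • v) := by
  intro i
  have hu' := hu i
  have hv' := hv i
  by_cases h : s i <;> simp_all <;>
    rcases ha.eq_or_lt with h0 | h0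
  · have hb1 : b = 1 := by linarith
    simp [← h0, hb1, hv']
  · nlinarith [mul_pos h0 hu', mul_nonneg hb hv'.le]
  · have hb1 : b = 1 := by linarith
    simp [← h0, hb1, hv']
  · nlinarith [mul_pos h0 (neg_pos.mpr hu'), mul_nonneg hb (neg_nonneg.mpr hv'.le)]

lemma ker_submatrix_mem {p : ℕ} {k : Type*} (A : Matrix (Fin p) (Fin n) ℝ) (c : k → Fin p)
    (x : Fin n → ℝ) :
    x ∈ LinearMap.ker (A.submatrix c id).mulVecLin ↔ ∀ j, A.mulVec x (c j) = 0 := by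
  simp [LinearMap.mem_ker, Matrix.mulVecLin_apply, funext_iff]
  rfl

lemma rank_add_ker {k : Type*} [Fintype k] (A : Matrix k (Fin n) ℝ) :
    A.rank + finrank ℝ (LinearMap.ker A.mulVecLin) = n := by
  have := LinearMap.finrank_range_add_finrank_ker A.mulVecLin
  simpa [Matrix.rank] using this

open Filter Topology in
lemma exists_pos_perturb (W₀ : Matrix (Fin m) (Fin n) ℝ) {w : Fin n → ℝ} (hw : w ≠ 0)
    {s : Fin m → Bool} {x : Fin n → ℝ} (h : Compat s (W₀.mulVec x)) (hx : 0 ≤ w ⬝ᵥ x) :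
    ∃ x', Compat s (W₀.mulVec x') ∧ 0 < w ⬝ᵥ x' := by
  have hww : 0 < w ⬝ᵥ w := by
    have h0 : 0 ≤ w ⬝ᵥ w := Finset.sum_nonneg fun i _ => mul_self_nonneg _
    rcases h0.eq_or_lt with h1 | h1
    · exact absurd ((dotProduct_self_eq_zero).mp h1.symm) hw
    · exact h1
  have hev : ∀ᶠ ε in 𝓝 (0 : ℝ), Compat s (W₀.mulVec (x + ε • w)) := by
    simp only [Compat]
    rw [Filter.eventually_all]
    intro i
    have hc : Continuous (fun ε : ℝ => W₀.mulVec x i + ε * W₀.mulVec w i) := by fun_prop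
    have ht : Filter.Tendsto (fun ε : ℝ => W₀.mulVec (x + ε • w) i) (𝓝 0)
        (𝓝 (W₀.mulVec x i)) := by
      simp only [Matrix.mulVec_add, Matrix.mulVec_smul, Pi.add_apply, Pi.smul_apply,
        smul_eq_mul]
      simpa using hc.tendsto 0
    have h' := h i
    by_cases hs : s i
    · simp only [hs, if_true] at h' ⊢
      exact ht.eventually (eventually_gt_nhds h')
    · simp only [hs, if_neg, Bool.false_eq_true, if_false] at h' ⊢
      exact ht.eventually (eventually_lt_nhds h')
  have hev' : ∀ᶠ ε in 𝓝[>] (0 : ℝ),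
      Compat s (W₀.mulVec (x + ε • w)) ∧ 0 < ε :=
    (hev.filter_mono nhdsWithin_le_nhds).and self_mem_nhdsWithin
  obtain ⟨ε, hc, hε⟩ := hev'.exists
  refine ⟨x + ε • w, hc, ?_⟩
  have : w ⬝ᵥ (x + ε • w) = w ⬝ᵥ x + ε * (w ⬝ᵥ w) := by
    simp [dotProduct_add, dotProduct_smul]
  rw [this]
  nlinarith

lemma exists_zero_between {W₀ : Matrix (Fin m) (Fin n) ℝ} {w : Fin n → ℝ}
    {s : Fin m → Bool} {x y : Fin n → ℝ} (hcx : Compat s (W₀.mulVec x))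
    (hcy : Compat s (W₀.mulVec y)) (hx : 0 < w ⬝ᵥ x) (hy : w ⬝ᵥ y < 0) :
    ∃ z, Compat s (W₀.mulVec z) ∧ w ⬝ᵥ z = 0 := by
  set a : ℝ := (-(w ⬝ᵥ y)) / (w ⬝ᵥ x - w ⬝ᵥ y) with ha
  set b : ℝ := (w ⬝ᵥ x) / (w ⬝ᵥ x - w ⬝ᵥ y) with hb
  have hd : 0 < w ⬝ᵥ x - w ⬝ᵥ y := by linarith
  refine ⟨a • x + b • y, ?_, ?_⟩
  · have : W₀.mulVec (a • x + b • y) = a • W₀.mulVec x + b • W₀.mulVec y := by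
      simp [Matrix.mulVec_add, Matrix.mulVec_smul]
    rw [this]
    have hd' : (w ⬝ᵥ x - w ⬝ᵥ y) ≠ 0 := ne_of_gt hd
    refine compat_combo hcx hcy (div_nonneg (by linarith) hd.le)
      (div_nonneg hx.le hd.le) ?_
    rw [ha, hb, ← add_div, div_eq_one_iff_eq hd']
    ring
  · have : w ⬝ᵥ (a • x + b • y) = a * (w ⬝ᵥ x) + b * (w ⬝ᵥ y) := by
      simp [dotProduct_add, dotProduct_smul]
    have hd' : (w ⬝ᵥ x - w ⬝ᵥ y) ≠ 0 := ne_of_gt hd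
    rw [this, ha, hb]
    field_simp
    ring

lemma last_not_mem_map (C : Finset (Fin m)) :
    Fin.last m ∉ C.map Fin.castSuccEmb := by
  simp only [Finset.mem_map, Fin.coe_castSuccEmb]
  rintro ⟨j, -, hj⟩
  exact (Fin.castSucc_lt_last j).ne hj

lemma sum_finset_split {A : Type*} [AddCommMonoid A] (f : Finset (Fin (m + 1)) → A) :
    ∑ B : Finset (Fin (m + 1)), f B
      = ∑ C : Finset (Fin m),
          (f (C.map Fin.castSuccEmb) + f (insert (Fin.last m) (C.map Fin.castSuccEmb))) := by
  classical
  let g : Finset (Fin m) × Bool → Finset (Fin (m + 1)) :=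
    fun p => if p.2 then insert (Fin.last m) (p.1.map Fin.castSuccEmb)
      else p.1.map Fin.castSuccEmb
  have hlast : ∀ (C : Finset (Fin m)) (b : Bool), (Fin.last m ∈ g (C, b)) ↔ b = true := by
    intro C b
    cases b <;> simp [g, last_not_mem_map C]
  have hg : Function.Bijective g := by
    constructor
    · rintro ⟨C, b⟩ ⟨C', b'⟩ h
      have hb : b = b' := by
        have h1 := hlast C b
        have h2 := hlast C' b'
        rw [h] at h1
        rw [h1] at h2
        cases b <;> cases b' <;> simp_all
      subst hb
      cases b
      · simp only [g, if_neg (Bool.false_ne_true)] at h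
        exact Prod.ext (Finset.map_injective _ h) rfl
      · simp only [g, if_pos rfl] at h
        refine Prod.ext (Finset.map_injective (α := Fin m) Fin.castSuccEmb ?_) rfl
        ext a
        constructor <;> intro ha
        · have : a ∈ insert (Fin.last m) (C'.map Fin.castSuccEmb) := by
            rw [← h]; exact Finset.mem_insert_of_mem ha
          rcases Finset.mem_insert.mp this with h' | h'
          · exact absurd (h' ▸ ha) (last_not_mem_map C)
          · exact h'
        · have : a ∈ insert (Fin.last m) (C.map Fin.castSuccEmb) := by
            rw [h]; exact Finset.mem_insert_of_mem ha
          rcases Finset.mem_insert.mp this with h' | h'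
          · exact absurd (h' ▸ ha) (last_not_mem_map C')
          · exact h'
    · intro B
      set C : Finset (Fin m) := Finset.univ.filter (fun j => j.castSucc ∈ B) with hC
      have hmapC : C.map Fin.castSuccEmb = B.erase (Fin.last m) := by
        ext a
        simp only [Finset.mem_map, Fin.coe_castSuccEmb, hC, Finset.mem_filter,
          Finset.mem_univ, true_and, Finset.mem_erase]
        constructor
        · rintro ⟨j, hj, rfl⟩
          exact ⟨(Fin.castSucc_lt_last j).ne, hj⟩
        · rintro ⟨ha, hb⟩
          obtain ⟨j, rfl⟩ := Fin.exists_castSucc_eq.mpr ha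
          exact ⟨j, hb, rfl⟩
      by_cases hB : Fin.last m ∈ B
      · refine ⟨(C, true), ?_⟩
        simp only [g, if_pos rfl, hmapC]
        exact Finset.insert_erase hB
      · refine ⟨(C, false), ?_⟩
        simp only [g, if_neg Bool.false_ne_true, hmapC]
        exact Finset.erase_eq_of_notMem hB
  calc ∑ B : Finset (Fin (m + 1)), f B
      = ∑ p : Finset (Fin m) × Bool, f (g p) := (Fintype.sum_bijective g hg _ _ fun p => rfl).symm
    _ = ∑ C : Finset (Fin m), ∑ b : Bool, f (g (C, b)) := Fintype.sum_prod_type _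
    _ = _ := by
        refine Finset.sum_congr rfl fun C _ => ?_
        rw [Fintype.sum_bool]
        simp only [g, if_pos rfl, if_neg Bool.false_ne_true]
        exact add_comm _ _

/-- dot product with `w` as a linear map. -/
def dotLin (w : Fin n → ℝ) : (Fin n → ℝ) →ₗ[ℝ] ℝ where
  toFun x := w ⬝ᵥ x
  map_add' x y := by simp [dotProduct_add]
  map_smul' a x := by simp [dotProduct_smul]

@[simp] lemma dotLin_apply (w x : Fin n → ℝ) : dotLin w x = w ⬝ᵥ x := rfl

lemma rank_eq_of_ker_eq {k k' : Type*} [Fintype k] [Fintype k']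
    (A : Matrix k (Fin n) ℝ) (A' : Matrix k' (Fin n) ℝ)
    (h : LinearMap.ker A.mulVecLin = LinearMap.ker A'.mulVecLin) : A.rank = A'.rank := by
  have h1 := rank_add_ker A
  have h2 := rank_add_ker A'
  rw [h] at h1
  omega

lemma compat_snoc_iff (W : Matrix (Fin (m + 1)) (Fin n) ℝ) (s : Fin (m + 1) → Bool)
    (x : Fin n → ℝ) :
    Compat s (W.mulVec x)
      ↔ Compat (s ∘ Fin.castSucc) ((W.submatrix Fin.castSucc id).mulVec x)
        ∧ (if s (Fin.last m) then 0 < W (Fin.last m) ⬝ᵥ x else W (Fin.last m) ⬝ᵥ x < 0) := by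
  constructor
  · intro h
    exact ⟨fun i => h (Fin.castSucc i), h (Fin.last m)⟩
  · rintro ⟨h1, h2⟩ i
    refine Fin.lastCases ?_ ?_ i
    · exact h2
    · exact fun j => h1 j

theorem key (m : ℕ) : ∀ (n : ℕ) (W : Matrix (Fin m) (Fin n) ℝ),
    (Nat.card {s : Fin m → Bool // Ach W s} : ℤ)
      = ∑ B : Finset (Fin m),
          (-1 : ℤ) ^ (B.card - (W.submatrix (fun i : B => (i : Fin m)) id).rank) := by
  induction m with
  | zero =>
    intro n W
    have hach : ∀ s : Fin 0 → Bool, Ach W s := fun s => ⟨0, fun i => i.elim0⟩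
    have h1 : Nat.card {s : Fin 0 → Bool // Ach W s} = 1 := by
      rw [Nat.card_congr (Equiv.subtypeUnivEquiv hach), Nat.card_eq_fintype_card]
      simp
    rw [h1]
    have huniv : (Finset.univ : Finset (Finset (Fin 0))) = {∅} := by
      have hB : ∀ B : Finset (Fin 0), B = ∅ := fun B =>
        Finset.eq_empty_of_forall_notMem (fun x => x.elim0)
      ext B
      simp [Finset.mem_singleton, hB B]
      exact (hB default).symm
    rw [huniv, Finset.sum_singleton]
    simp
  | succ m ih =>
    intro n W
    classical
    set W₀ : Matrix (Fin m) (Fin n) ℝ := W.submatrix Fin.castSucc id with hW₀def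
    set w : Fin n → ℝ := W (Fin.last m) with hwdef
    set P : Finset (Fin m → Bool) :=
      Finset.univ.filter (fun t => ∃ x, Compat t (W₀.mulVec x) ∧ 0 < w ⬝ᵥ x) with hPdef
    set Q : Finset (Fin m → Bool) :=
      Finset.univ.filter (fun t => ∃ x, Compat t (W₀.mulVec x) ∧ w ⬝ᵥ x < 0) with hQdef
    have hsplit : (Nat.card {s : Fin (m + 1) → Bool // Ach W s}) = P.card + Q.card := by
      rw [Nat.card_eq_fintype_card, Fintype.card_subtype]
      rw [← Finset.card_filter_add_card_filter_not
        (s := Finset.univ.filter fun s => Ach W s) (p := fun s => s (Fin.last m) = true)]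
      congr 1
      · refine Finset.card_bij' (fun s _ => s ∘ Fin.castSucc) (fun t _ => Fin.snoc t true)
          ?_ ?_ ?_ ?_
        · intro s hs
          simp only [hPdef, Finset.mem_filter, Finset.mem_univ, true_and] at hs ⊢
          obtain ⟨⟨x, hc⟩, hlast⟩ := hs
          rw [compat_snoc_iff] at hc
          refine ⟨x, hc.1, ?_⟩
          have := hc.2
          rwa [hlast, if_pos rfl] at this
        · intro t ht
          simp only [hPdef, Finset.mem_filter, Finset.mem_univ, true_and] at ht ⊢
          obtain ⟨x, hc, hx⟩ := ht
          refine ⟨⟨x, ?_⟩, by simp⟩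
          rw [compat_snoc_iff]
          constructor
          · have : (Fin.snoc t true : Fin (m + 1) → Bool) ∘ Fin.castSucc = t := by
              funext i; simp
            rwa [this]
          · simpa using hx
        · intro s hs
          simp only [Finset.mem_filter, Finset.mem_univ, true_and] at hs
          funext i
          refine Fin.lastCases ?_ ?_ i
          · simp [hs.2]
          · intro j; simp
        · intro t ht
          funext i; simp
      · refine Finset.card_bij' (fun s _ => s ∘ Fin.castSucc) (fun t _ => Fin.snoc t false)
          ?_ ?_ ?_ ?_
        · intro s hs
          simp only [hQdef, Finset.mem_filter, Finset.mem_univ, true_and] at hs ⊢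
          obtain ⟨⟨x, hc⟩, hlast⟩ := hs
          rw [Bool.not_eq_true] at hlast
          rw [compat_snoc_iff] at hc
          refine ⟨x, hc.1, ?_⟩
          have := hc.2
          rwa [hlast, if_neg Bool.false_ne_true] at this
        · intro t ht
          simp only [hQdef, Finset.mem_filter, Finset.mem_univ, true_and] at ht ⊢
          obtain ⟨x, hc, hx⟩ := ht
          refine ⟨⟨x, ?_⟩, by simp⟩
          rw [compat_snoc_iff]
          constructor
          · have : (Fin.snoc t false : Fin (m + 1) → Bool) ∘ Fin.castSucc = t := by
              funext i; simp
            rwa [this]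
          · simpa using hx
        · intro s hs
          simp only [Finset.mem_filter, Finset.mem_univ, true_and] at hs
          replace hs := hs.2
          rw [Bool.not_eq_true] at hs
          funext i
          refine Fin.lastCases ?_ ?_ i
          · simp [hs]
          · intro j; simp
        · intro t ht
          funext i; simp
    by_cases hw : w = 0
    · -- last row is zero
      have hempty : IsEmpty {s : Fin (m + 1) → Bool // Ach W s} := by
        refine ⟨?_⟩
        rintro ⟨s, x, hc⟩
        have h := hc (Fin.last m)
        have hzero : W.mulVec x (Fin.last m) = 0 := by
          show w ⬝ᵥ x = 0
          rw [hw, zero_dotProduct]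
        rw [hzero] at h
        by_cases hs : s (Fin.last m) <;> simp [hs] at h
      rw [Nat.card_of_isEmpty, Nat.cast_zero, sum_finset_split]
      refine (Finset.sum_eq_zero ?_).symm
      intro C _
      have hrk : (W.submatrix
            (fun i : ↥(insert (Fin.last m) (C.map Fin.castSuccEmb)) => (i : Fin (m + 1))) id).rank
          = (W.submatrix (fun i : ↥(C.map Fin.castSuccEmb) => (i : Fin (m + 1))) id).rank := by
        apply rank_eq_of_ker_eq
        ext x
        rw [ker_submatrix_mem, ker_submatrix_mem]
        constructor
        · intro h j
          exact h ⟨j.1, Finset.mem_insert_of_mem j.2⟩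
        · intro h j
          rcases Finset.mem_insert.mp j.2 with hj | hj
          · show W.mulVec x j.1 = 0
            rw [hj]
            show w ⬝ᵥ x = 0
            rw [hw, zero_dotProduct]
          · exact h ⟨j.1, hj⟩
      have hcard : (insert (Fin.last m) (C.map Fin.castSuccEmb)).card
          = (C.map Fin.castSuccEmb).card + 1 :=
        Finset.card_insert_of_notMem (last_not_mem_map C)
      have hle : (W.submatrix (fun i : ↥(C.map Fin.castSuccEmb) => (i : Fin (m + 1))) id).rank
          ≤ (C.map Fin.castSuccEmb).card := by
        have := Matrix.rank_le_card_height
          (W.submatrix (fun i : ↥(C.map Fin.castSuccEmb) => (i : Fin (m + 1))) id)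
        rwa [Fintype.card_coe] at this
      rw [hrk, hcard]
      have hexp : (C.map Fin.castSuccEmb).card + 1
            - (W.submatrix (fun i : ↥(C.map Fin.castSuccEmb) => (i : Fin (m + 1))) id).rank
          = ((C.map Fin.castSuccEmb).card
            - (W.submatrix (fun i : ↥(C.map Fin.castSuccEmb) => (i : Fin (m + 1))) id).rank) + 1 := by
        omega
      rw [hexp, pow_succ]
      ring
    · -- last row is nonzero
      have hPQu : P ∪ Q = Finset.univ.filter (fun t => Ach W₀ t) := by
        ext t
        simp only [hPdef, hQdef, Finset.mem_union, Finset.mem_filter, Finset.mem_univ, true_and]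
        constructor
        · rintro (⟨x, hc, _⟩ | ⟨x, hc, _⟩) <;> exact ⟨x, hc⟩
        · rintro ⟨x, hc⟩
          rcases le_or_gt 0 (w ⬝ᵥ x) with h0 | h0
          · obtain ⟨x', hc', hx'⟩ := exists_pos_perturb W₀ hw hc h0
            exact Or.inl ⟨x', hc', hx'⟩
          · exact Or.inr ⟨x, hc, h0⟩
      have hPQi : P ∩ Q = Finset.univ.filter
          (fun t => ∃ x, Compat t (W₀.mulVec x) ∧ w ⬝ᵥ x = 0) := by
        ext t
        simp only [hPdef, hQdef, Finset.mem_inter, Finset.mem_filter, Finset.mem_univ, true_and]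
        constructor
        · rintro ⟨⟨x, hcx, hx⟩, ⟨y, hcy, hy⟩⟩
          exact exists_zero_between hcx hcy hx hy
        · rintro ⟨x, hc, hx0⟩
          constructor
          · exact exists_pos_perturb W₀ hw hc (le_of_eq hx0.symm)
          · have hw' : -w ≠ 0 := neg_ne_zero.mpr hw
            have h0 : 0 ≤ (-w) ⬝ᵥ x := by rw [neg_dotProduct, hx0, neg_zero]
            obtain ⟨x', hc', hx'⟩ := exists_pos_perturb W₀ hw' hc h0
            rw [neg_dotProduct] at hx'
            exact ⟨x', hc', by linarith⟩
      obtain ⟨j0, hj0⟩ : ∃ j, w j ≠ 0 := by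
        by_contra h
        push_neg at h
        exact hw (funext h)
      have hsurj : Function.Surjective (dotLin w) := by
        intro r
        refine ⟨(r / w j0) • ((Pi.single j0 1 : Fin n → ℝ)), ?_⟩
        rw [_root_.map_smul]
        have hws : dotLin w (Pi.single j0 1) = w j0 := by
          simp [dotLin_apply, dotProduct_single]
        rw [hws, smul_eq_mul]
        field_simp
      have hRN := LinearMap.finrank_range_add_finrank_ker (dotLin w)
      rw [LinearMap.range_eq_top.mpr hsurj, finrank_top] at hRN
      simp only [Module.finrank_self, Module.finrank_fintype_fun_eq_card,
        Fintype.card_fin] at hRN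
      set K := LinearMap.ker (dotLin w) with hKdef
      have hn1 : 1 ≤ n := by omega
      have hKfr : Module.finrank ℝ K = n - 1 := by omega
      let bK : Basis (Fin (n - 1)) ℝ K := Module.finBasisOfFinrankEq ℝ K hKfr
      let ιe : (Fin (n - 1) → ℝ) ≃ₗ[ℝ] K := bK.equivFun.symm
      let ι : (Fin (n - 1) → ℝ) →ₗ[ℝ] (Fin n → ℝ) := K.subtype ∘ₗ ιe.toLinearMap
      have hιinj : Function.Injective ι := (Submodule.injective_subtype K).comp ιe.injective
      have hιrange : LinearMap.range ι = K := by
        rw [LinearMap.range_comp, LinearEquiv.range, Submodule.map_top, Submodule.range_subtype]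
      have hιK : ∀ y, w ⬝ᵥ ι y = 0 := by
        intro y
        have h2 := (ιe y).2
        exact LinearMap.mem_ker.mp h2
      set W' : Matrix (Fin m) (Fin (n - 1)) ℝ := LinearMap.toMatrix' (W₀.mulVecLin ∘ₗ ι)
        with hW'def
      have hW' : ∀ y, W'.mulVec y = W₀.mulVec (ι y) := by
        intro y
        rw [← Matrix.toLin'_apply, hW'def, Matrix.toLin'_toMatrix']
        rfl
      have hZ : Finset.univ.filter (fun t => ∃ x, Compat t (W₀.mulVec x) ∧ w ⬝ᵥ x = 0)
          = Finset.univ.filter (fun t => Ach W' t) := by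
        ext t
        simp only [Finset.mem_filter, Finset.mem_univ, true_and]
        constructor
        · rintro ⟨x, hc, hx0⟩
          have hxK : x ∈ LinearMap.range ι := by
            rw [hιrange]
            exact LinearMap.mem_ker.mpr hx0
          obtain ⟨y, rfl⟩ := hxK
          exact ⟨y, by rwa [hW' y]⟩
        · rintro ⟨y, hc⟩
          exact ⟨ι y, by rwa [hW' y] at hc, hιK y⟩
      have hcard₀ : P.card + Q.card
          = Nat.card {t : Fin m → Bool // Ach W₀ t}
            + Nat.card {t : Fin m → Bool // Ach W' t} := by
        rw [← Finset.card_union_add_card_inter, hPQu, hPQi, hZ,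
          Nat.card_eq_fintype_card, Nat.card_eq_fintype_card,
          Fintype.card_subtype, Fintype.card_subtype]
      rw [hsplit, hcard₀]
      push_cast
      rw [ih n W₀, ih (n - 1) W', sum_finset_split, Finset.sum_add_distrib]
      congr 1
      · refine Finset.sum_congr rfl fun C _ => ?_
        have hcard : (C.map Fin.castSuccEmb).card = C.card := Finset.card_map _
        have hrk : (W.submatrix (fun i : ↥(C.map Fin.castSuccEmb) => (i : Fin (m + 1))) id).rank
            = (W₀.submatrix (fun i : ↥C => (i : Fin m)) id).rank := by
          apply rank_eq_of_ker_eq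
          ext x
          rw [ker_submatrix_mem, ker_submatrix_mem]
          constructor
          · intro h i
            exact h ⟨Fin.castSucc i.1, Finset.mem_map_of_mem _ i.2⟩
          · intro h j
            obtain ⟨i, hi, hij⟩ := Finset.mem_map.mp j.2
            show W.mulVec x j.1 = 0
            rw [← hij]
            exact h ⟨i, hi⟩
        rw [hcard, hrk]
      · refine Finset.sum_congr rfl fun C _ => ?_
        have hcard : (insert (Fin.last m) (C.map Fin.castSuccEmb)).card = C.card + 1 := by
          rw [Finset.card_insert_of_notMem (last_not_mem_map C), Finset.card_map]
        have hker : Submodule.map ι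
              (LinearMap.ker ((W'.submatrix (fun i : ↥C => (i : Fin m)) id).mulVecLin))
            = LinearMap.ker ((W.submatrix
              (fun i : ↥(insert (Fin.last m) (C.map Fin.castSuccEmb)) => (i : Fin (m + 1)))
                id).mulVecLin) := by
          ext x
          simp only [Submodule.mem_map]
          constructor
          · rintro ⟨y, hy, rfl⟩
            rw [ker_submatrix_mem] at hy
            rw [ker_submatrix_mem]
            intro j
            rcases Finset.mem_insert.mp j.2 with hj | hj
            · show W.mulVec (ι y) j.1 = 0
              rw [hj]
              exact hιK y
            · obtain ⟨i, hi, hij⟩ := Finset.mem_map.mp hj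
              have hyi := hy ⟨i, hi⟩
              rw [hW' y] at hyi
              show W.mulVec (ι y) j.1 = 0
              rw [← hij]
              exact hyi
          · intro hx
            rw [ker_submatrix_mem] at hx
            have hxK : x ∈ LinearMap.range ι := by
              rw [hιrange]
              exact LinearMap.mem_ker.mpr (hx ⟨Fin.last m, Finset.mem_insert_self _ _⟩)
            obtain ⟨y, rfl⟩ := hxK
            refine ⟨y, ?_, rfl⟩
            rw [ker_submatrix_mem]
            intro i
            rw [hW' y]
            exact hx ⟨Fin.castSucc i.1,
              Finset.mem_insert_of_mem (Finset.mem_map_of_mem _ i.2)⟩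
        have h1 := rank_add_ker (W.submatrix
          (fun i : ↥(insert (Fin.last m) (C.map Fin.castSuccEmb)) => (i : Fin (m + 1))) id)
        have h2 := rank_add_ker (W'.submatrix (fun i : ↥C => (i : Fin m)) id)
        have h3 : Module.finrank ℝ
              (LinearMap.ker ((W'.submatrix (fun i : ↥C => (i : Fin m)) id).mulVecLin))
            = Module.finrank ℝ (LinearMap.ker ((W.submatrix
              (fun i : ↥(insert (Fin.last m) (C.map Fin.castSuccEmb)) => (i : Fin (m + 1)))
                id).mulVecLin)) := by
          rw [← hker]
          exact LinearEquiv.finrank_eq (Submodule.equivMapOfInjective ι hιinj _)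
        have hrk : (W.submatrix
              (fun i : ↥(insert (Fin.last m) (C.map Fin.castSuccEmb)) => (i : Fin (m + 1)))
                id).rank
            = (W'.submatrix (fun i : ↥C => (i : Fin m)) id).rank + 1 := by omega
        rw [hcard, hrk, Nat.succ_sub_succ]


lemma compat_ne {s : Fin m → Bool} {v : Fin m → ℝ} (h : Compat s v) (i : Fin m) : v i ≠ 0 := by
  have hi := h i
  by_cases hs : s i
  · rw [hs, if_pos rfl] at hi
    exact ne_of_gt hi
  · rw [Bool.not_eq_true] at hs
    rw [hs, if_neg Bool.false_ne_true] at hi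
    exact ne_of_lt hi

theorem bridge (W : Matrix (Fin m) (Fin n) ℝ) :
    Nat.card (ConnectedComponents {x : Fin n → ℝ // ∀ i, W.mulVec x i ≠ 0})
      = Nat.card {s : Fin m → Bool // Ach W s} := by
  classical
  set X := {x : Fin n → ℝ // ∀ i, W.mulVec x i ≠ 0} with hXdef
  set sgn : X → (Fin m → Bool) := fun x i => decide (0 < W.mulVec x.1 i) with hsgndef
  have hcont : ∀ i : Fin m, Continuous fun z : X => W.mulVec z.1 i := by
    intro i
    have h1 : Continuous fun v : Fin n → ℝ => W.mulVec v i := by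
      show Continuous fun v : Fin n → ℝ => ∑ j, W i j * v j
      exact continuous_finset_sum _ fun j _ => continuous_const.mul (continuous_apply j)
    exact h1.comp continuous_subtype_val
  have hsgn_compat : ∀ x : X, Compat (sgn x) (W.mulVec x.1) := by
    intro x i
    by_cases h : 0 < W.mulVec x.1 i
    · simp [hsgndef, h]
    · have hlt : W.mulVec x.1 i < 0 := lt_of_le_of_ne (not_lt.mp h) (x.2 i)
      simp [hsgndef, h, hlt]
  have hcompat_sgn : ∀ (s : Fin m → Bool) (x : X), Compat s (W.mulVec x.1) → sgn x = s := by
    intro s x h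
    funext i
    have hi := h i
    by_cases hs : s i
    · rw [hs, if_pos rfl] at hi
      simp [hsgndef, hi, hs]
    · rw [Bool.not_eq_true] at hs
      rw [hs, if_neg Bool.false_ne_true] at hi
      simp [hsgndef, hs, not_lt.mpr hi.le]
  have hsplit2 : ∀ (x y : X), (ConnectedComponents.mk x = ConnectedComponents.mk y) →
      ∀ i, 0 < W.mulVec x.1 i → W.mulVec y.1 i < 0 → False := by
    intro x y hmk i hx hy
    have hcc : connectedComponent x = connectedComponent y :=
      ConnectedComponents.coe_eq_coe.mp hmk
    have hyc : y ∈ connectedComponent x := by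
      rw [hcc]
      exact mem_connectedComponent
    have hUo : IsOpen {z : X | 0 < W.mulVec z.1 i} :=
      isOpen_Ioi.preimage (hcont i)
    have hVo : IsOpen {z : X | W.mulVec z.1 i < 0} :=
      isOpen_Iio.preimage (hcont i)
    have hcov : connectedComponent x ⊆
        {z : X | 0 < W.mulVec z.1 i} ∪ {z : X | W.mulVec z.1 i < 0} := by
      intro z _
      rcases (z.2 i).lt_or_gt with h | h
      · exact Or.inr h
      · exact Or.inl h
    obtain ⟨z, -, hzU, hzV⟩ := isPreconnected_connectedComponent (x := x) _ _ hUo hVo hcov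
      ⟨x, mem_connectedComponent, hx⟩ ⟨y, hyc, hy⟩
    simp only [Set.mem_setOf_eq] at hzU hzV
    linarith
  have hconst : ∀ x y : X, ConnectedComponents.mk x = ConnectedComponents.mk y →
      sgn x = sgn y := by
    intro x y hmk
    funext i
    by_contra hne'
    have hx' := hsgn_compat x i
    have hy' := hsgn_compat y i
    cases hsx : sgn x i <;> cases hsy : sgn y i <;> rw [hsx] at hx' <;> rw [hsy] at hy' <;>
      simp only [hsx, hsy, if_pos rfl, if_neg Bool.false_ne_true] at hx' hy' hne' ⊢
    · exact hne' trivial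
    · exact hsplit2 y x hmk.symm i hy' hx'
    · exact hsplit2 x y hmk i hx' hy'
    · exact hne' trivial
  have hsame : ∀ x y : X, sgn x = sgn y →
      (ConnectedComponents.mk x = ConnectedComponents.mk y) := by
    intro x y hxy
    have hcy : Compat (sgn x) (W.mulVec y.1) := by
      rw [hxy]
      exact hsgn_compat y
    have hsub : ∀ z ∈ segment ℝ x.1 y.1, Compat (sgn x) (W.mulVec z) := by
      rintro z ⟨a, b, ha, hb, hab, rfl⟩
      have hmv : W.mulVec (a • x.1 + b • y.1) = a • W.mulVec x.1 + b • W.mulVec y.1 := by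
        simp [Matrix.mulVec_add, Matrix.mulVec_smul]
      rw [hmv]
      exact compat_combo (hsgn_compat x) hcy ha hb hab
    set C : Set X := Subtype.val ⁻¹' (segment ℝ x.1 y.1) with hCdef
    have himg : Subtype.val '' C = segment ℝ x.1 y.1 := by
      rw [hCdef, Set.image_preimage_eq_inter_range, Subtype.range_coe_subtype]
      refine Set.inter_eq_self_of_subset_left ?_
      intro z hz
      exact fun i => compat_ne (hsub z hz) i
    have hCpre : IsPreconnected C := by
      have h2 : IsPreconnected (Subtype.val '' C) :=
        himg ▸ (convex_segment x.1 y.1).isPreconnected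
      exact Topology.IsInducing.subtypeVal.isPreconnected_image.mp h2
    have hxC : x ∈ C := left_mem_segment ℝ x.1 y.1
    have hyC : y ∈ C := right_mem_segment ℝ x.1 y.1
    rw [ConnectedComponents.coe_eq_coe]
    exact connectedComponent_eq (hCpre.subset_connectedComponent hxC hyC)
  have hne : ∀ (s : {s : Fin m → Bool // Ach W s}) (i), W.mulVec s.2.choose i ≠ 0 :=
    fun s i => compat_ne s.2.choose_spec i
  let pick : {s : Fin m → Bool // Ach W s} → X := fun s => ⟨s.2.choose, hne s⟩
  have hpick : ∀ s, sgn (pick s) = s.1 := fun s => hcompat_sgn s.1 (pick s) s.2.choose_spec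
  refine (Nat.card_eq_of_bijective (fun s => ConnectedComponents.mk (pick s)) ⟨?_, ?_⟩).symm
  · intro s t h
    have h2 := hconst _ _ h
    rw [hpick s, hpick t] at h2
    exact Subtype.ext h2
  · intro c
    obtain ⟨x, rfl⟩ := ConnectedComponents.surjective_coe c
    refine ⟨⟨sgn x, ⟨x.1, hsgn_compat x⟩⟩, ?_⟩
    exact hsame _ _ (hpick _)

open Matrix in
/-- The number of regions of the central hyperplane arrangement whose normals are the
(nonzero) rows of `W` equals the Whitney sum `Σ_B (−1)^{|B| − rank(W_{B:})}`. -/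
theorem card_regions_eq_whitney_sum {M N : ℕ} (W : Matrix (Fin M) (Fin N) ℝ)
    (hrows : ∀ i, W i ≠ 0) :
    (Nat.card (ConnectedComponents {x : Fin N → ℝ // ∀ i, W.mulVec x i ≠ 0}) : ℤ)
      = ∑ B : Finset (Fin M),
          (-1 : ℤ) ^ (B.card - (W.submatrix (fun i : B => (i : Fin M)) id).rank) := by
  rw [bridge W]
  exact key M N W
end

section
/- Let M ≥ 1 and let w₁, …, w_M ∈ ℝ^N be vectors in general position for a central arrangement, i.e. any subset of at most N of the vectors w_i is linearly independent. Then the number of connected components of {x ∈ ℝ^N : ⟨w_i, x⟩ ≠ 0 for all i = 1,…,M} equals 2 · Σ_{j=0}^{N−1} C(M−1, j), where C denotes the binomial coefficient. -/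
open Matrix
open Matrix Finset

noncomputable section
namespace CRCGP

def sg (b : Bool) : ℝ := if b then 1 else -1

lemma sg_pos_mul {t : ℝ} (ht : t ≠ 0) : 0 < sg (decide (0 < t)) * t := by
  rcases lt_or_gt_of_ne ht with h | h
  · have : decide (0 < t) = false := by simp [h.not_gt]
    rw [this]; simp only [sg, if_neg Bool.false_ne_true]
    linarith
  · simp [sg, h]

lemma sg_mul_pos_iff {b : Bool} {t : ℝ} (h : 0 < sg b * t) :
    t ≠ 0 ∧ b = decide (0 < t) := by
  cases b <;> simp [sg] at h <;>
    constructor <;> simp_all [ne_of_gt, ne_of_lt] <;> linarith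

lemma abs_sg (b : Bool) : |sg b| = 1 := by cases b <;> simp [sg]

def Reg {M d : ℕ} (v : Fin M → (Fin d → ℝ)) (s : Fin M → Bool) : Set (Fin d → ℝ) :=
  {x | ∀ i, 0 < sg (s i) * (v i ⬝ᵥ x)}

def GP {M d : ℕ} (v : Fin M → (Fin d → ℝ)) : Prop :=
  ∀ c : Fin M → ℝ, (univ.filter fun i => c i ≠ 0).card ≤ d →
    ∑ i, c i • v i = 0 → c = 0

lemma dot_self_pos {d : ℕ} {w : Fin d → ℝ} (hw : w ≠ 0) : 0 < w ⬝ᵥ w := by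
  have h0 : 0 ≤ w ⬝ᵥ w := Finset.sum_nonneg fun i _ => mul_self_nonneg _
  rcases h0.lt_or_eq with h | h
  · exact h
  · exact absurd (dotProduct_self_eq_zero.1 h.symm) hw

lemma eq_smul_of_forall_dot {d : ℕ} (u w : Fin d → ℝ) (hw : w ≠ 0)
    (h : ∀ x, w ⬝ᵥ x = 0 → u ⬝ᵥ x = 0) : ∃ l : ℝ, u = l • w := by
  have hww : (0:ℝ) < w ⬝ᵥ w := dot_self_pos hw
  refine ⟨(u ⬝ᵥ w) / (w ⬝ᵥ w), ?_⟩
  funext j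
  have key : ∀ x, u ⬝ᵥ x = (u ⬝ᵥ w) / (w ⬝ᵥ w) * (w ⬝ᵥ x) := by
    intro x
    have hker : w ⬝ᵥ (x - ((w ⬝ᵥ x) / (w ⬝ᵥ w)) • w) = 0 := by
      rw [dotProduct_sub, dotProduct_smul, smul_eq_mul]
      rw [div_mul_cancel₀ _ hww.ne', sub_self]
    have := h _ hker
    rw [dotProduct_sub, dotProduct_smul, sub_eq_zero, smul_eq_mul] at this
    rw [this]; field_simp
  have := key (Pi.single j 1)
  simpa [dotProduct_single] using this

lemma perturb {M d : ℕ} (hM : 1 ≤ M) (v : Fin M → (Fin d → ℝ)) (s : Fin M → Bool)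
    (x wl : Fin d → ℝ) (hx : x ∈ Reg v s) :
    ∃ ε : ℝ, 0 < ε ∧ ∀ t : ℝ, |t| ≤ ε → (x + t • wl) ∈ Reg v s := by
  have hne : (univ : Finset (Fin M)).Nonempty := by
    have : Nonempty (Fin M) := ⟨⟨0, hM⟩⟩
    exact univ_nonempty
  set a : Fin M → ℝ := fun i => sg (s i) * (v i ⬝ᵥ x) with ha
  set q : Fin M → ℝ := fun i => |v i ⬝ᵥ wl| with hq
  set A := univ.inf' hne a with hA
  set Q := univ.sup' hne q with hQ
  have hApos : 0 < A := by
    rw [hA, Finset.lt_inf'_iff]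
    exact fun i _ => hx i
  have hQ0 : 0 ≤ Q := by
    obtain ⟨i, hi⟩ := hne
    exact le_trans (abs_nonneg _) (Finset.le_sup' q hi)
  refine ⟨A / (2 * (Q + 1)), by positivity, ?_⟩
  intro t ht i
  have hai : A ≤ a i := Finset.inf'_le a (mem_univ i)
  have hqi : q i ≤ Q := Finset.le_sup' q (mem_univ i)
  have hval : sg (s i) * (v i ⬝ᵥ (x + t • wl)) = a i + t * (sg (s i) * (v i ⬝ᵥ wl)) := by
    rw [dotProduct_add, dotProduct_smul]
    simp only [ha, smul_eq_mul]
    ring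
  rw [hval]
  have habs : |t * (sg (s i) * (v i ⬝ᵥ wl))| ≤ (A / (2 * (Q + 1))) * q i := by
    rw [abs_mul, abs_mul, abs_sg, one_mul]
    exact mul_le_mul ht le_rfl (abs_nonneg _) (by positivity)
  have hlt : (A / (2 * (Q + 1))) * q i < A := by
    have h1 : (A / (2 * (Q + 1))) * q i ≤ (A / (2 * (Q + 1))) * Q :=
      mul_le_mul_of_nonneg_left hqi (by positivity)
    have h2 : (A / (2 * (Q + 1))) * Q < A := by
      rw [div_mul_eq_mul_div, div_lt_iff₀ (by positivity)]
      nlinarith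
    linarith
  have := neg_abs_le (t * (sg (s i) * (v i ⬝ᵥ wl)))
  linarith

end CRCGP
namespace CRCGP
-- chunk 3 : snoc lemmas
lemma mem_reg_snoc {M d : ℕ} (v : Fin (M+1) → (Fin d → ℝ)) (s : Fin M → Bool) (b : Bool)
    (x : Fin d → ℝ) :
    x ∈ Reg v (Fin.snoc s b) ↔
      x ∈ Reg (fun i : Fin M => v i.castSucc) s ∧ 0 < sg b * (v (Fin.last M) ⬝ᵥ x) := by
  constructor
  · intro h
    exact ⟨fun i => by simpa [Fin.snoc_castSucc] using h i.castSucc,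
      by simpa [Fin.snoc_last] using h (Fin.last M)⟩
  · rintro ⟨h1, h2⟩ i
    refine Fin.lastCases ?_ ?_ i
    · simpa [Fin.snoc_last] using h2
    · intro j; simpa [Fin.snoc_castSucc] using h1 j

lemma snoc_eq_self {M : ℕ} (s' : Fin (M+1) → Bool) :
    Fin.snoc (fun i : Fin M => s' i.castSucc) (s' (Fin.last M)) = s' :=
  funext fun i => Fin.lastCases (by simp) (fun j => by simp) i

lemma filter_snoc_subset {M : ℕ} (c : Fin M → ℝ) (a : ℝ) :
    (univ.filter fun i : Fin (M+1) => (Fin.snoc c a : Fin (M+1) → ℝ) i ≠ 0) ⊆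
      insert (Fin.last M) ((univ.filter fun i => c i ≠ 0).map Fin.castSuccEmb) := by
  intro i hi
  rw [mem_filter] at hi
  refine Fin.lastCases ?_ ?_ i hi.2
  · intro _; exact mem_insert_self _ _
  · intro j hj
    rw [Fin.snoc_castSucc] at hj
    exact mem_insert_of_mem (mem_map_of_mem _ (mem_filter.2 ⟨mem_univ _, hj⟩))

lemma filter_snoc_card {M : ℕ} (c : Fin M → ℝ) (a : ℝ) :
    (univ.filter fun i : Fin (M+1) => (Fin.snoc c a : Fin (M+1) → ℝ) i ≠ 0).card ≤
      (univ.filter fun i => c i ≠ 0).card + 1 := by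
  calc (univ.filter fun i : Fin (M+1) => (Fin.snoc c a : Fin (M+1) → ℝ) i ≠ 0).card
      ≤ (insert (Fin.last M) ((univ.filter fun i => c i ≠ 0).map Fin.castSuccEmb)).card :=
        Finset.card_le_card (filter_snoc_subset c a)
    _ ≤ ((univ.filter fun i => c i ≠ 0).map Fin.castSuccEmb).card + 1 :=
        Finset.card_insert_le _ _
    _ = (univ.filter fun i => c i ≠ 0).card + 1 := by rw [Finset.card_map]

lemma filter_snoc_zero_card {M : ℕ} (c : Fin M → ℝ) :
    (univ.filter fun i : Fin (M+1) => (Fin.snoc c (0:ℝ) : Fin (M+1) → ℝ) i ≠ 0).card =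
      (univ.filter fun i => c i ≠ 0).card := by
  refine (Finset.card_bij (fun (j : Fin M) _ => j.castSucc) ?_ ?_ ?_).symm
  · intro j hj
    rw [mem_filter] at hj ⊢
    exact ⟨mem_univ _, by rw [Fin.snoc_castSucc]; exact hj.2⟩
  · intro a _ b _ h
    exact Fin.castSucc_injective M h
  · intro b hb
    rw [mem_filter] at hb
    refine Fin.lastCases ?_ ?_ b hb.2
    · intro h; rw [Fin.snoc_last] at h; exact absurd rfl h
    · intro j h
      rw [Fin.snoc_castSucc] at h
      exact ⟨j, mem_filter.2 ⟨mem_univ _, h⟩, rfl⟩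

lemma sum_snoc {M d : ℕ} (v : Fin (M+1) → (Fin d → ℝ)) (c : Fin M → ℝ) (a : ℝ) :
    ∑ i, (Fin.snoc c a : Fin (M+1) → ℝ) i • v i =
      (∑ i : Fin M, c i • v i.castSucc) + a • v (Fin.last M) := by
  rw [Fin.sum_univ_castSucc]
  simp [Fin.snoc_castSucc, Fin.snoc_last]

lemma GP_old {M d : ℕ} {v : Fin (M+1) → (Fin d → ℝ)} (hv : GP v) :
    GP (fun i : Fin M => v i.castSucc) := by
  intro c hc hsum
  have h0 : (Fin.snoc c (0:ℝ) : Fin (M+1) → ℝ) = 0 := by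
    apply hv
    · rw [filter_snoc_zero_card]; exact hc
    · rw [sum_snoc, hsum]; simp
  funext j
  have := congrFun h0 j.castSucc
  simpa [Fin.snoc_castSucc] using this

lemma GP_ne_zero {M d : ℕ} {v : Fin M → (Fin d → ℝ)} (hv : GP v) (hd : 1 ≤ d)
    (i : Fin M) : v i ≠ 0 := by
  intro h
  have hcard : (univ.filter fun j : Fin M => (Pi.single i (1:ℝ) : Fin M → ℝ) j ≠ 0).card ≤ d := by
    have : (univ.filter fun j : Fin M => (Pi.single i (1:ℝ) : Fin M → ℝ) j ≠ 0) = {i} := by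
      ext j
      simp only [mem_filter, mem_univ, true_and, mem_singleton]
      constructor
      · intro h
        by_contra hj
        exact h (Pi.single_eq_of_ne hj 1)
      · intro h
        subst h
        rw [Pi.single_eq_same]
        exact one_ne_zero
    rw [this, Finset.card_singleton]; exact hd
  have hsum : ∑ j, (Pi.single i (1:ℝ) : Fin M → ℝ) j • v j = 0 := by
    rw [Finset.sum_eq_single i]
    · simp [h]
    · intro j _ hj; simp [Pi.single_apply, hj]
    · intro hi; exact absurd (mem_univ i) hi
  have := congrFun (hv _ hcard hsum) i
  simp at this
end CRCGP

namespace CRCGP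
open Module


variable {e : ℕ} (wl : Fin (e+1) → ℝ)

def dotMap : (Fin (e+1) → ℝ) →ₗ[ℝ] ℝ where
  toFun x := wl ⬝ᵥ x
  map_add' x y := dotProduct_add wl x y
  map_smul' c x := by simp [dotProduct_smul]


lemma finrank_ker (hw : wl ≠ 0) : finrank ℝ (LinearMap.ker (dotMap wl)) = e := by
  have hsurj : LinearMap.range (dotMap wl) = ⊤ := by
    rw [LinearMap.range_eq_top]
    intro r
    refine ⟨(r / (wl ⬝ᵥ wl)) • wl, ?_⟩
    have := dot_self_pos hw
    simp only [dotMap, LinearMap.coe_mk, AddHom.coe_mk, dotProduct_smul, smul_eq_mul]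
    field_simp
  have := LinearMap.finrank_range_add_finrank_ker (dotMap wl)
  rw [hsurj, finrank_top, finrank_self, Module.finrank_fin_fun] at this
  omega

def Amap (hw : wl ≠ 0) : (Fin e → ℝ) →ₗ[ℝ] (Fin (e+1) → ℝ) :=
  (LinearMap.ker (dotMap wl)).subtype ∘ₗ
    (((Module.finBasis ℝ (LinearMap.ker (dotMap wl))).reindex
      (finCongr (finrank_ker wl hw))).equivFun.symm : (Fin e → ℝ) ≃ₗ[ℝ] _).toLinearMap

lemma Amap_mem (hw : wl ≠ 0) (y : Fin e → ℝ) : wl ⬝ᵥ Amap wl hw y = 0 := by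
  have : Amap wl hw y ∈ LinearMap.ker (dotMap wl) := by
    simp only [Amap, LinearMap.comp_apply, Submodule.coe_subtype]
    exact SetLike.coe_mem _
  exact this

lemma Amap_surj (hw : wl ≠ 0) (x : Fin (e+1) → ℝ) (hx : wl ⬝ᵥ x = 0) :
    ∃ y, Amap wl hw y = x := by
  set b := (Module.finBasis ℝ (LinearMap.ker (dotMap wl))).reindex
      (finCongr (finrank_ker wl hw)) with hb
  have hx' : x ∈ LinearMap.ker (dotMap wl) := hx
  refine ⟨b.equivFun ⟨x, hx'⟩, ?_⟩
  show (LinearMap.ker (dotMap wl)).subtype (b.equivFun.symm (b.equivFun ⟨x, hx'⟩)) = x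
  rw [LinearEquiv.symm_apply_apply]
  rfl



variable {e : ℕ}
def vres (wl : Fin (e+1) → ℝ) (hw : wl ≠ 0) (u : Fin (e+1) → ℝ) : Fin e → ℝ :=
  fun j => u ⬝ᵥ Amap wl hw ((Pi.single j 1 : Fin e → ℝ))

lemma dot_vres (wl : Fin (e+1) → ℝ) (hw : wl ≠ 0) (u : Fin (e+1) → ℝ) (y : Fin e → ℝ) :
    vres wl hw u ⬝ᵥ y = u ⬝ᵥ Amap wl hw y := by
  have hy : Amap wl hw y = ∑ j, y j • Amap wl hw (Pi.single j 1) := by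
    conv_lhs => rw [show y = ∑ j, Pi.single j (y j) from (Finset.univ_sum_single y).symm]
    rw [map_sum]
    refine Finset.sum_congr rfl fun j _ => ?_
    rw [show (Pi.single j (y j) : Fin e → ℝ) = y j • (Pi.single j 1 : Fin e → ℝ) by
      rw [← Pi.single_smul, smul_eq_mul, mul_one], _root_.map_smul]
  rw [hy]
  simp only [vres, dotProduct, Finset.sum_apply, Pi.smul_apply, smul_eq_mul,
    Finset.mul_sum, Finset.sum_mul]
  rw [Finset.sum_comm]
  exact Finset.sum_congr rfl fun k _ => Finset.sum_congr rfl fun j _ => by ring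


end CRCGP
namespace CRCGP

lemma sg_mul_self (b : Bool) : sg b * sg b = 1 := by cases b <;> simp [sg]

lemma sum_dot {n : ℕ} {ι : Type*} (s : Finset ι) (f : ι → (Fin n → ℝ)) (y : Fin n → ℝ) :
    (∑ i ∈ s, f i) ⬝ᵥ y = ∑ i ∈ s, f i ⬝ᵥ y := by
  simp only [dotProduct, Finset.sum_apply, Finset.sum_mul]
  exact Finset.sum_comm

lemma GP_res {M e : ℕ} {v : Fin (M+1) → (Fin (e+1) → ℝ)} (hv : GP v)
    (hw : v (Fin.last M) ≠ 0) :
    GP (fun i : Fin M => vres (v (Fin.last M)) hw (v i.castSucc)) := by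
  intro c hc hsum
  set wl := v (Fin.last M) with hwl
  set u : Fin (e+1) → ℝ := ∑ i, c i • v i.castSucc with hu
  have hud : ∀ x, wl ⬝ᵥ x = 0 → u ⬝ᵥ x = 0 := by
    intro x hx
    obtain ⟨y, rfl⟩ := Amap_surj wl hw x hx
    have h1 : u ⬝ᵥ Amap wl hw y
        = (∑ i, c i • (fun i : Fin M => vres wl hw (v i.castSucc)) i) ⬝ᵥ y := by
      rw [hu, sum_dot, sum_dot]
      refine Finset.sum_congr rfl fun i _ => ?_
      rw [smul_dotProduct, smul_dotProduct, dot_vres]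
    rw [h1, hsum, zero_dotProduct]
  obtain ⟨l, hl⟩ := eq_smul_of_forall_dot u wl hw hud
  have hsum2 : ∑ i, (Fin.snoc c (-l) : Fin (M+1) → ℝ) i • v i = 0 := by
    rw [sum_snoc, ← hu, hl]
    simp [hwl]
  have hcard : (univ.filter fun i : Fin (M+1) =>
      (Fin.snoc c (-l) : Fin (M+1) → ℝ) i ≠ 0).card ≤ e + 1 := by
    have := filter_snoc_card c (-l)
    omega
  have h0 := hv _ hcard hsum2
  funext j
  have := congrFun h0 j.castSucc
  simpa [Fin.snoc_castSucc] using this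

lemma cross_iff {M e : ℕ} (v : Fin (M+1) → (Fin (e+1) → ℝ)) (hw : v (Fin.last M) ≠ 0)
    (s : Fin M → Bool) :
    (Reg (fun i : Fin M => v i.castSucc) s ∩ {x | v (Fin.last M) ⬝ᵥ x = 0}).Nonempty ↔
      (Reg (fun i : Fin M => vres (v (Fin.last M)) hw (v i.castSucc)) s).Nonempty := by
  constructor
  · rintro ⟨x, hx, hker⟩
    obtain ⟨y, rfl⟩ := Amap_surj _ hw x hker
    exact ⟨y, fun i => by rw [show vres (v (Fin.last M)) hw (v i.castSucc) ⬝ᵥ y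
      = v i.castSucc ⬝ᵥ Amap (v (Fin.last M)) hw y from dot_vres _ hw _ y]; exact hx i⟩
  · rintro ⟨y, hy⟩
    refine ⟨Amap _ hw y, fun i => ?_, Amap_mem _ hw y⟩
    have := hy i
    rwa [dot_vres] at this

lemma ext_both {M e : ℕ} (hM : 1 ≤ M) (v : Fin (M+1) → (Fin (e+1) → ℝ))
    (hw : v (Fin.last M) ≠ 0) (s : Fin M → Bool)
    (h : (Reg (fun i : Fin M => v i.castSucc) s ∩ {x | v (Fin.last M) ⬝ᵥ x = 0}).Nonempty) :
    ∀ b, (Reg v (Fin.snoc s b)).Nonempty := by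
  obtain ⟨x, hx, hker⟩ := h
  intro b
  obtain ⟨ε, hε, hmem⟩ := perturb hM _ s x (v (Fin.last M)) hx
  refine ⟨x + (sg b * ε) • v (Fin.last M), (mem_reg_snoc v s b _).2 ⟨hmem _ ?_, ?_⟩⟩
  · rw [abs_mul, abs_sg, one_mul, abs_of_pos hε]
  · have hker' : v (Fin.last M) ⬝ᵥ x = 0 := hker
    rw [dotProduct_add, dotProduct_smul, hker', smul_eq_mul]
    have h1 : sg b * (0 + sg b * ε * (v (Fin.last M) ⬝ᵥ v (Fin.last M)))
        = (sg b * sg b) * (ε * (v (Fin.last M) ⬝ᵥ v (Fin.last M))) := by ring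
    rw [h1, sg_mul_self, one_mul]
    exact mul_pos hε (dot_self_pos hw)

lemma ext_exists {M e : ℕ} (hM : 1 ≤ M) (v : Fin (M+1) → (Fin (e+1) → ℝ))
    (hw : v (Fin.last M) ≠ 0) (s : Fin M → Bool)
    (h : (Reg (fun i : Fin M => v i.castSucc) s).Nonempty) :
    ∃ b, (Reg v (Fin.snoc s b)).Nonempty := by
  obtain ⟨x, hx⟩ := h
  by_cases h0 : v (Fin.last M) ⬝ᵥ x = 0
  · exact ⟨true, ext_both hM v hw s ⟨x, hx, h0⟩ true⟩
  · exact ⟨decide (0 < v (Fin.last M) ⬝ᵥ x),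
      ⟨x, (mem_reg_snoc v s _ x).2 ⟨hx, sg_pos_mul h0⟩⟩⟩

lemma ext_both_rev {M e : ℕ} (v : Fin (M+1) → (Fin (e+1) → ℝ)) (s : Fin M → Bool)
    (hpos : (Reg v (Fin.snoc s true)).Nonempty) (hneg : (Reg v (Fin.snoc s false)).Nonempty) :
    (Reg (fun i : Fin M => v i.castSucc) s ∩ {x | v (Fin.last M) ⬝ᵥ x = 0}).Nonempty := by
  obtain ⟨x, hx⟩ := hpos
  obtain ⟨x', hx'⟩ := hneg
  rw [mem_reg_snoc] at hx hx'
  set wl := v (Fin.last M) with hwl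
  have hp0 : 0 < wl ⬝ᵥ x := by have := hx.2; simp [sg] at this; linarith
  have hq0 : wl ⬝ᵥ x' < 0 := by have := hx'.2; simp [sg] at this; linarith
  set p := wl ⬝ᵥ x with hp
  set q := -(wl ⬝ᵥ x') with hq
  have hq0' : 0 < q := by rw [hq]; linarith
  refine ⟨(p+q)⁻¹ • (q • x + p • x'), fun i => ?_, ?_⟩
  · have h1 := hx.1 i
    have h2 := hx'.1 i
    have heq : sg (s i) * (v i.castSucc ⬝ᵥ ((p+q)⁻¹ • (q • x + p • x'))) =
        (p+q)⁻¹ * (q * (sg (s i) * (v i.castSucc ⬝ᵥ x))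
          + p * (sg (s i) * (v i.castSucc ⬝ᵥ x'))) := by
      rw [dotProduct_smul, dotProduct_add, dotProduct_smul, dotProduct_smul]
      simp only [smul_eq_mul]
      ring
    rw [heq]
    have hpq : 0 < p + q := by linarith
    exact mul_pos (inv_pos.2 hpq) (add_pos (mul_pos hq0' h1) (mul_pos hp0 h2))
  · show wl ⬝ᵥ ((p+q)⁻¹ • (q • x + p • x')) = 0
    rw [dotProduct_smul, dotProduct_add, dotProduct_smul, dotProduct_smul, ← hp]
    have : wl ⬝ᵥ x' = -q := by rw [hq]; ring
    rw [this]
    simp only [smul_eq_mul]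
    ring

end CRCGP
namespace CRCGP

lemma sum_choose_zero {d : ℕ} (hd : 1 ≤ d) :
    ∑ j ∈ Finset.range d, Nat.choose 0 j = 1 := by
  rw [Finset.sum_eq_single 0]
  · rfl
  · intro b _ hb
    obtain ⟨c, rfl⟩ : ∃ c, b = c + 1 := ⟨b - 1, by omega⟩
    exact Nat.choose_zero_succ c
  · intro h
    exact absurd (Finset.mem_range.2 hd) h

lemma binom_sum (n d : ℕ) :
    ∑ j ∈ Finset.range (d+1), (n+1).choose j
      = ∑ j ∈ Finset.range (d+1), n.choose j + ∑ j ∈ Finset.range d, n.choose j := by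
  induction d with
  | zero => simp
  | succ d ih =>
    rw [Finset.sum_range_succ, ih, Finset.sum_range_succ (f := fun j => n.choose j) (n := d+1),
      Finset.sum_range_succ (f := fun j => n.choose j) (n := d), Nat.choose_succ_succ]
    simp only [Nat.succ_eq_add_one]
    omega

lemma binom_arith {m e : ℕ} (hm : 1 ≤ m) :
    2 * ∑ j ∈ Finset.range (e+1), (m - 1).choose j
      + 2 * ∑ j ∈ Finset.range e, (m - 1).choose j
      = 2 * ∑ j ∈ Finset.range (e+1), (m + 1 - 1).choose j := by
  obtain ⟨k, rfl⟩ : ∃ k, m = k + 1 := ⟨m - 1, by omega⟩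
  simp only [Nat.add_sub_cancel]
  rw [binom_sum k e]
  ring

lemma card_zero_dim {M : ℕ} (hM : 1 ≤ M) (v : Fin M → (Fin 0 → ℝ)) :
    Nat.card {s : Fin M → Bool // (Reg v s).Nonempty} = 0 := by
  have : IsEmpty {s : Fin M → Bool // (Reg v s).Nonempty} := by
    refine ⟨fun ⟨s, ⟨x, hx⟩⟩ => ?_⟩
    have h := hx ⟨0, hM⟩
    have : v ⟨0, hM⟩ ⬝ᵥ x = 0 := by
      simp [dotProduct]
    rw [this, mul_zero] at h
    exact lt_irrefl 0 h
  exact Nat.card_of_isEmpty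

lemma count_regions : ∀ M : ℕ, 1 ≤ M → ∀ d : ℕ, ∀ v : Fin M → (Fin d → ℝ), GP v →
    Nat.card {s : Fin M → Bool // (Reg v s).Nonempty}
      = 2 * ∑ j ∈ Finset.range d, (M - 1).choose j := by
  intro M hM
  induction M, hM using Nat.le_induction with
  | base =>
    intro d v hv
    match d with
    | 0 => simp [card_zero_dim le_rfl v]
    | e + 1 =>
      have hall : ∀ s : Fin 1 → Bool, (Reg v s).Nonempty := by
        intro s
        refine ⟨sg (s 0) • v 0, fun i => ?_⟩
        have hi : i = 0 := Subsingleton.elim i 0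
        subst hi
        rw [dotProduct_smul, smul_eq_mul, ← mul_assoc, sg_mul_self, one_mul]
        exact dot_self_pos (GP_ne_zero hv (Nat.succ_le_succ (Nat.zero_le e)) 0)
      rw [Nat.card_congr (Equiv.subtypeUnivEquiv hall), Nat.card_eq_fintype_card]
      rw [sum_choose_zero (Nat.succ_le_succ (Nat.zero_le e))]
      simp
  | succ M hM1 ih =>
    intro d v hv
    match d with
    | 0 => simp [card_zero_dim (by omega) v]
    | e + 1 =>
      classical
      set vold : Fin M → (Fin (e+1) → ℝ) := fun i => v i.castSucc with hvolddef
      have hvold : GP vold := GP_old hv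
      set wl := v (Fin.last M) with hwl
      have hw : wl ≠ 0 := GP_ne_zero hv (Nat.succ_le_succ (Nat.zero_le e)) (Fin.last M)
      set v' : Fin M → (Fin e → ℝ) := fun i => vres wl hw (v i.castSucc) with hv'def
      have hv' : GP v' := GP_res hv hw
      set Anew := univ.filter (fun s' : Fin (M+1) → Bool => (Reg v s').Nonempty) with hAnew
      set Aold := univ.filter (fun s : Fin M → Bool => (Reg vold s).Nonempty) with hAold
      set Across := univ.filter
        (fun s : Fin M → Bool => (Reg vold s ∩ {x | wl ⬝ᵥ x = 0}).Nonempty) with hAcross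
      -- fiberwise count
      have hmapsto : ∀ s' ∈ Anew, (fun i : Fin M => s' i.castSucc) ∈ Aold := by
        intro s' hs'
        obtain ⟨x, hx⟩ := (mem_filter.1 hs').2
        exact mem_filter.2 ⟨mem_univ _, ⟨x, fun i => hx i.castSucc⟩⟩
      have hfibersum := Finset.card_eq_sum_card_fiberwise hmapsto
      have hfiber : ∀ s ∈ Aold,
          (Anew.filter (fun s' => (fun i : Fin M => s' i.castSucc) = s)).card
            = 1 + (if s ∈ Across then 1 else 0) := by
        intro s hs
        have hsne : (Reg vold s).Nonempty := (mem_filter.1 hs).2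
        have himg : Anew.filter (fun s' => (fun i : Fin M => s' i.castSucc) = s)
            = (univ.filter fun b : Bool => (Reg v (Fin.snoc s b)).Nonempty).image
                (fun b => Fin.snoc s b) := by
          ext s'
          simp only [hAnew, mem_filter, mem_univ, true_and, Finset.mem_image]
          constructor
          · rintro ⟨hne, hrest⟩
            have hself : (Fin.snoc s (s' (Fin.last M)) : Fin (M+1) → Bool) = s' := by
              rw [← hrest]; exact snoc_eq_self s'
            exact ⟨s' (Fin.last M), by rw [hself]; exact hne, hself⟩
          · rintro ⟨b, hb, rfl⟩
            refine ⟨hb, ?_⟩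
            funext i
            simp [Fin.snoc_castSucc]
        have hinj : Function.Injective (fun b : Bool => (Fin.snoc s b : Fin (M+1) → Bool)) := by
          intro b b' h
          have := congrFun h (Fin.last M)
          simpa [Fin.snoc_last] using this
        rw [himg, Finset.card_image_of_injective _ hinj]
        by_cases hcr : s ∈ Across
        · have hboth := ext_both hM1 v hw s (mem_filter.1 hcr).2
          have : (univ.filter fun b : Bool => (Reg v (Fin.snoc s b)).Nonempty) = univ := by
            ext b; simp [hboth b]
          rw [this, if_pos hcr]
          simp
        · have hnotboth : ¬((Reg v (Fin.snoc s true)).Nonempty ∧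
              (Reg v (Fin.snoc s false)).Nonempty) := by
            rintro ⟨h1, h2⟩
            exact hcr (mem_filter.2 ⟨mem_univ _, ext_both_rev v s h1 h2⟩)
          obtain ⟨b0, hb0⟩ := ext_exists hM1 v hw s hsne
          rw [if_neg hcr]
          have : (univ.filter fun b : Bool => (Reg v (Fin.snoc s b)).Nonempty) = {b0} := by
            ext b
            simp only [mem_filter, mem_univ, true_and, mem_singleton]
            constructor
            · intro hb
              by_contra hbb
              have : b = !b0 := by
                cases b <;> cases b0 <;> simp_all
              subst this
              cases b0
              · exact hnotboth ⟨hb, hb0⟩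
              · exact hnotboth ⟨hb0, hb⟩
            · rintro rfl; exact hb0
          rw [this]
          simp
      have hsum : Anew.card = Aold.card + Across.card := by
        rw [hfibersum, Finset.sum_congr rfl hfiber, Finset.sum_add_distrib]
        have hsub : Across ⊆ Aold := by
          intro s hs
          obtain ⟨x, hx, _⟩ := (mem_filter.1 hs).2
          exact mem_filter.2 ⟨mem_univ _, ⟨x, hx⟩⟩
        rw [Finset.sum_const, Finset.sum_ite_mem, Finset.inter_comm,
          (Finset.inter_eq_left.2 hsub)]
        simp [add_comm]
      -- translate the three cards
      have hC1 : Nat.card {s' : Fin (M+1) → Bool // (Reg v s').Nonempty} = Anew.card := by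
        rw [Nat.card_eq_fintype_card, Fintype.card_subtype]
      have hC2 : Aold.card = 2 * ∑ j ∈ Finset.range (e+1), (M - 1).choose j := by
        rw [← ih (e+1) vold hvold, Nat.card_eq_fintype_card, Fintype.card_subtype]
      have hcrosseq : Across = univ.filter (fun s : Fin M → Bool => (Reg v' s).Nonempty) := by
        ext s
        simp only [hAcross, mem_filter, mem_univ, true_and]
        exact cross_iff v hw s
      have hC3 : Across.card = 2 * ∑ j ∈ Finset.range e, (M - 1).choose j := by
        rw [hcrosseq, ← ih e v' hv', Nat.card_eq_fintype_card, Fintype.card_subtype]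
      rw [hC1, hsum, hC2, hC3]
      exact binom_arith hM1

end CRCGP
namespace CRCGP

lemma dot_continuous {N : ℕ} (u : Fin N → ℝ) : Continuous (fun x : Fin N → ℝ => u ⬝ᵥ x) := by
  simp only [dotProduct]
  exact continuous_finset_sum _ fun k _ => continuous_const.mul (continuous_apply k)

lemma reg_open {M N : ℕ} (w : Fin M → (Fin N → ℝ)) (s : Fin M → Bool) :
    IsOpen (Reg w s) := by
  have : Reg w s = ⋂ i, {x | 0 < sg (s i) * (w i ⬝ᵥ x)} := by
    ext x; simp [Reg, Set.mem_iInter]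
  rw [this]
  exact isOpen_iInter_of_finite fun i =>
    isOpen_lt continuous_const (continuous_const.mul (dot_continuous (w i)))

lemma reg_convex {M N : ℕ} (w : Fin M → (Fin N → ℝ)) (s : Fin M → Bool) :
    Convex ℝ (Reg w s) := by
  have : Reg w s = ⋂ i, {x | (0:ℝ) < sg (s i) * (w i ⬝ᵥ x)} := by
    ext x; simp [Reg, Set.mem_iInter]
  rw [this]
  refine convex_iInter fun i => convex_halfSpace_gt ?_ 0
  constructor
  · intro x y; rw [dotProduct_add]; ring
  · intro c x; rw [dotProduct_smul]; simp only [smul_eq_mul]; ring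

lemma mem_reg_self {M N : ℕ} (w : Fin M → (Fin N → ℝ)) (x : Fin N → ℝ)
    (h : ∀ i, w i ⬝ᵥ x ≠ 0) : x ∈ Reg w (fun i => decide (0 < w i ⬝ᵥ x)) :=
  fun i => sg_pos_mul (h i)

lemma reg_mem_iff {M N : ℕ} {w : Fin M → (Fin N → ℝ)} {s : Fin M → Bool} {x : Fin N → ℝ}
    (h : x ∈ Reg w s) : (∀ i, w i ⬝ᵥ x ≠ 0) ∧ s = fun i => decide (0 < w i ⬝ᵥ x) := by
  constructor
  · intro i; exact (sg_mul_pos_iff (h i)).1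
  · funext i; exact (sg_mul_pos_iff (h i)).2

lemma components_card {M N : ℕ} (w : Fin M → (Fin N → ℝ)) :
    Nat.card (ConnectedComponents {x : Fin N → ℝ // ∀ i, w i ⬝ᵥ x ≠ 0})
      = Nat.card {s : Fin M → Bool // (Reg w s).Nonempty} := by
  classical
  set σ : {x : Fin N → ℝ // ∀ i, w i ⬝ᵥ x ≠ 0} → {s : Fin M → Bool // (Reg w s).Nonempty} :=
    fun x => ⟨fun i => decide (0 < w i ⬝ᵥ x.1), ⟨x.1, mem_reg_self w x.1 x.2⟩⟩ with hσ
  have hfib : ∀ s : {s : Fin M → Bool // (Reg w s).Nonempty},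
      σ ⁻¹' {s} = Subtype.val ⁻¹' (Reg w s.1) := by
    intro s
    ext x
    simp only [Set.mem_preimage, Set.mem_singleton_iff, hσ]
    constructor
    · intro h
      rw [← (Subtype.ext_iff.1 h : _)]
      exact mem_reg_self w x.1 x.2
    · intro h
      exact Subtype.ext ((reg_mem_iff h).2).symm
  have hcont : Continuous σ := by
    rw [continuous_discrete_rng]
    intro s
    rw [hfib s]
    exact (reg_open w s.1).preimage continuous_subtype_val
  have hsurj : Function.Surjective σ := by
    rintro ⟨s, x, hx⟩
    have hmem := reg_mem_iff hx
    refine ⟨⟨x, hmem.1⟩, ?_⟩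
    exact Subtype.ext hmem.2.symm
  have hlift := hcont.connectedComponentsLift_apply_coe
  refine Nat.card_eq_of_bijective hcont.connectedComponentsLift ⟨?_, ?_⟩
  · rintro ⟨x⟩ ⟨y⟩ hxy
    have hxy' : σ x = σ y := by
      rw [← hlift x, ← hlift y]
      exact hxy
    clear hxy
    rename' hxy' => hxy
    have hx : x.1 ∈ Reg w (σ x).1 := by
      exact mem_reg_self w x.1 x.2
    have hy : y.1 ∈ Reg w (σ x).1 := by
      rw [hxy]; exact mem_reg_self w y.1 y.2
    -- x and y lie in the preconnected set val ⁻¹' Reg w (σ x).1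
    have hpre : IsPreconnected (Subtype.val ⁻¹' (Reg w (σ x).1) : Set {x : Fin N → ℝ // ∀ i, w i ⬝ᵥ x ≠ 0}) := by
      have himg : Subtype.val '' (Subtype.val ⁻¹' (Reg w (σ x).1) : Set {x : Fin N → ℝ // ∀ i, w i ⬝ᵥ x ≠ 0}) = Reg w (σ x).1 := by
        refine Set.image_preimage_eq_of_subset ?_
        rw [Subtype.range_coe_subtype]
        intro z hz
        exact (reg_mem_iff hz).1
      have h2 : IsPreconnected (Subtype.val '' (Subtype.val ⁻¹' (Reg w (σ x).1) : Set {x : Fin N → ℝ // ∀ i, w i ⬝ᵥ x ≠ 0})) := by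
        rw [himg]
        exact (reg_convex w (σ x).1).isPreconnected
      exact Topology.IsInducing.subtypeVal.isPreconnected_image.mp h2
    have hmem := hpre.subset_connectedComponent (x := x) hx hy
    exact ConnectedComponents.coe_eq_coe.2 (connectedComponent_eq hmem)
  · rintro s
    obtain ⟨x, hx⟩ := hsurj s
    exact ⟨x, by rw [hlift x, hx]⟩

end CRCGP


open Finset in
/-- A central arrangement of `M ≥ 1` hyperplanes in general position in `ℝ^N`
(any at most `N` of the normal vectors are linearly independent) has exactly
`2 Σ_{j<N} C(M−1, j)` regions. -/
theorem card_regions_central_general_position {M N : ℕ} (hM : 1 ≤ M)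
    (w : Fin M → (Fin N → ℝ))
    (hgen : ∀ B : Finset (Fin M), B.card ≤ N →
      LinearIndependent ℝ (fun i : B => w i)) :
    Nat.card (ConnectedComponents {x : Fin N → ℝ // ∀ i, w i ⬝ᵥ x ≠ 0})
      = 2 * ∑ j ∈ Finset.range N, (M - 1).choose j := by
  rw [CRCGP.components_card w]
  refine CRCGP.count_regions M hM N w ?_
  intro c hc hsum
  have hli := hgen (univ.filter fun i => c i ≠ 0) hc
  rw [Fintype.linearIndependent_iff] at hli
  have hsum' : ∑ i : (univ.filter fun i => c i ≠ 0 : Finset (Fin M)), c i.1 • w i.1 = 0 := by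
    rw [Finset.sum_coe_sort (univ.filter fun i => c i ≠ 0) (fun i => c i • w i)]
    rw [Finset.sum_filter_of_ne]
    · exact hsum
    · intro i _ h0 hci
      rw [hci, zero_smul] at h0
      exact h0 rfl
  funext i
  show c i = 0
  by_cases hci : c i = 0
  · exact hci
  · exact hli (fun j => c j.1) hsum' ⟨i, mem_filter.2 ⟨mem_univ _, hci⟩⟩
end
end

section
/- Let M ≥ 1 and let w₁, …, w_M ∈ ℝ^N be arbitrary vectors. Then the number of connected components of {x ∈ ℝ^N : ⟨w_i, x⟩ ≠ 0 for all i = 1,…,M} is at most 2 · Σ_{j=0}^{N−1} C(M−1, j), where C denotes the binomial coefficient. -/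
open Matrix Module

/-- The set of sign vectors realized by a family of linear functionals. -/
def SignSet {M : ℕ} {V : Type*} [AddCommGroup V] [Module ℝ V]
    (f : Fin M → V →ₗ[ℝ] ℝ) : Set (Fin M → Bool) :=
  {s | ∃ x : V, ∀ i, if s i then 0 < f i x else f i x < 0}

lemma ivt_mem {M : ℕ} {V : Type*} [AddCommGroup V] [Module ℝ V]
    (f : Fin (M + 1) → V →ₗ[ℝ] ℝ) (s : Fin M → Bool) {x y : V}
    (hx : ∀ i : Fin M, if s i then 0 < f i.castSucc x else f i.castSucc x < 0)
    (hy : ∀ i : Fin M, if s i then 0 < f i.castSucc y else f i.castSucc y < 0)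
    (hxl : 0 < f (Fin.last M) x) (hyl : f (Fin.last M) y < 0) :
    s ∈ SignSet (fun i : Fin M =>
      (f i.castSucc).comp (LinearMap.ker (f (Fin.last M))).subtype) := by
  set L := f (Fin.last M) with hLdef
  set a := L y with ha
  set b := L x with hb
  have hba : 0 < b - a := by linarith
  set t : ℝ := (-a) / (b - a) with ht
  have ht0 : 0 < t := by
    apply div_pos (by linarith) hba
  have ht1 : t < 1 := by
    rw [ht, div_lt_one hba]; linarith
  set z := y + t • (x - y) with hz
  have hLz : L z = 0 := by
    have h1 : L z = a + t * (b - a) := by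
      simp only [hz, map_add, LinearMap.map_smul, map_sub, smul_eq_mul, ha, hb]
    rw [h1, ht]
    field_simp
    ring
  refine ⟨⟨z, hLz⟩, ?_⟩
  intro i
  have hfz : f i.castSucc z = (1 - t) * f i.castSucc y + t * f i.castSucc x := by
    simp only [hz, map_add, LinearMap.map_smul, map_sub, smul_eq_mul]
    ring
  have hgoal : ((f i.castSucc).comp (LinearMap.ker L).subtype) ⟨z, hLz⟩ = f i.castSucc z := rfl
  have hxi := hx i
  have hyi := hy i
  rcases Bool.eq_false_or_eq_true (s i) with hsi | hsi
  · rw [if_pos hsi] at hxi hyi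
    rw [if_pos hsi]
    show 0 < f i.castSucc z
    rw [hfz]
    nlinarith
  · rw [if_neg (by simp [hsi])] at hxi hyi
    rw [if_neg (by simp [hsi])]
    show f i.castSucc z < 0
    rw [hfz]
    nlinarith

lemma pascal_sum (m d : ℕ) :
    2 * ∑ j ∈ Finset.range (d + 1), m.choose j
      + 2 * ∑ j ∈ Finset.range d, m.choose j
      = 2 * ∑ j ∈ Finset.range (d + 1), (m + 1).choose j := by
  have h1 : ∑ j ∈ Finset.range (d + 1), (m + 1).choose j
      = ∑ j ∈ Finset.range d, (m + 1).choose (j + 1) + 1 := by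
    rw [Finset.sum_range_succ' (fun j => (m + 1).choose j) d]
    simp
  have h2 : ∑ j ∈ Finset.range (d + 1), m.choose j
      = ∑ j ∈ Finset.range d, m.choose (j + 1) + 1 := by
    rw [Finset.sum_range_succ' (fun j => m.choose j) d]
    simp
  have h3 : ∀ j, (m + 1).choose (j + 1) = m.choose j + m.choose (j + 1) :=
    fun j => Nat.choose_succ_succ m j
  rw [h1, h2]
  rw [Finset.sum_congr rfl (fun j _ => h3 j), Finset.sum_add_distrib]
  ring

lemma signset_card_le (M : ℕ) (hM : 1 ≤ M) :
    ∀ (V : Type) (_ : AddCommGroup V), ∀ (_ : Module ℝ V) (_ : FiniteDimensional ℝ V)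
      (f : Fin M → V →ₗ[ℝ] ℝ),
    Nat.card (SignSet f) ≤ 2 * ∑ j ∈ Finset.range (finrank ℝ V), (M - 1).choose j := by
  induction M, hM using Nat.le_induction with
  | base =>
    intro V _ _ _ f
    rcases Nat.eq_zero_or_pos (finrank ℝ V) with h0 | hpos
    · have hsub : Subsingleton V := finrank_zero_iff.mp h0
      have hempty : SignSet f = ∅ := by
        ext s
        simp only [SignSet, Set.mem_setOf_eq, Set.mem_empty_iff_false, iff_false, not_exists]
        intro x hx
        have h := hx 0
        have hx0 : x = 0 := Subsingleton.elim _ _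
        rw [hx0, map_zero] at h
        split at h <;> linarith
      rw [hempty]
      simp
    · have h2 : Nat.card (SignSet f) ≤ Nat.card (Fin 1 → Bool) :=
        Nat.card_le_card_of_injective _ Subtype.val_injective
      have h3 : Nat.card (Fin 1 → Bool) = 2 := by
        simp [Nat.card_eq_fintype_card]
      have h4 : 1 ≤ ∑ j ∈ Finset.range (finrank ℝ V), (1 - 1 : ℕ).choose j := by
        calc 1 = (1 - 1 : ℕ).choose 0 := by simp
        _ ≤ _ := Finset.single_le_sum (f := fun j => (1 - 1 : ℕ).choose j)
            (fun _ _ => Nat.zero_le _) (Finset.mem_range.mpr hpos)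
      omega
  | succ M hM ih =>
    intro V _ _ _ f
    classical
    set L := f (Fin.last M) with hLdef
    by_cases hL0 : L = 0
    · have hempty : SignSet f = ∅ := by
        ext s
        simp only [SignSet, Set.mem_setOf_eq, Set.mem_empty_iff_false, iff_false, not_exists]
        intro x hx
        have h := hx (Fin.last M)
        rw [← hLdef, hL0] at h
        simp only [LinearMap.zero_apply] at h
        split at h <;> linarith
      rw [hempty]
      simp
    · -- L ≠ 0 : rank of kernel is finrank V - 1
      obtain ⟨x₀, hx₀⟩ : ∃ x, L x ≠ 0 := by
        by_contra h
        push_neg at h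
        exact hL0 (LinearMap.ext fun x => by simp [h x])
      have hsurj : Function.Surjective L := by
        intro c
        exact ⟨(c / L x₀) • x₀, by rw [map_smul, smul_eq_mul]; field_simp⟩
      have hrange : LinearMap.range L = ⊤ := LinearMap.range_eq_top.mpr hsurj
      have hrank := LinearMap.finrank_range_add_finrank_ker L
      rw [hrange] at hrank
      rw [finrank_top, finrank_self] at hrank
      -- hrank : 1 + finrank ℝ ↥(ker L) = finrank ℝ V
      obtain ⟨d, hd⟩ : ∃ d, finrank ℝ V = d + 1 := ⟨finrank ℝ ↥(LinearMap.ker L), by omega⟩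
      have hdK : finrank ℝ ↥(LinearMap.ker L) = d := by omega
      set f' : Fin M → V →ₗ[ℝ] ℝ := fun i => f i.castSucc with hf'
      set g : Fin M → ↥(LinearMap.ker L) →ₗ[ℝ] ℝ :=
        fun i => (f i.castSucc).comp (LinearMap.ker L).subtype with hg
      set S := SignSet f with hS
      set S' := SignSet f' with hS'
      set T := SignSet g with hT
      have key : ∀ s₁ s₂ : Fin (M + 1) → Bool, s₁ ∈ S → s₂ ∈ S →
          (fun i : Fin M => s₁ i.castSucc) = (fun i : Fin M => s₂ i.castSucc) →
          s₁ (Fin.last M) = true → s₂ (Fin.last M) = false →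
          (fun i : Fin M => s₁ i.castSucc) ∈ T := by
        rintro s₁ s₂ ⟨x, hx⟩ ⟨y, hy⟩ heq h₁ h₂
        have hxl : 0 < L x := by
          have := hx (Fin.last M); rw [h₁] at this; simpa using this
        have hyl : L y < 0 := by
          have := hy (Fin.last M); rw [h₂] at this; simpa using this
        exact ivt_mem f (fun i => s₁ i.castSucc)
          (fun i => hx i.castSucc)
          (fun i => by
            show if s₁ i.castSucc = true then 0 < f i.castSucc y else f i.castSucc y < 0
            rw [congrFun heq i]
            exact hy i.castSucc)
          hxl hyl
      have hres : ∀ s : ↥S, (fun i : Fin M => (s : Fin (M + 1) → Bool) i.castSucc) ∈ S' := by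
        rintro ⟨s, x, hx⟩
        exact ⟨x, fun i => hx i.castSucc⟩
      let F : ↥S → ↥S' ⊕ ↥T := fun s =>
        if h : (s : Fin (M + 1) → Bool) (Fin.last M) = true
            ∧ (fun i : Fin M => (s : Fin (M + 1) → Bool) i.castSucc) ∈ T
        then Sum.inr ⟨_, h.2⟩
        else Sum.inl ⟨_, hres s⟩
      have hFinj : Function.Injective F := by
        rintro ⟨s₁, hs₁⟩ ⟨s₂, hs₂⟩ hF
        have ext_of : (fun i : Fin M => s₁ i.castSucc) = (fun i : Fin M => s₂ i.castSucc) →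
            s₁ (Fin.last M) = s₂ (Fin.last M) → (⟨s₁, hs₁⟩ : ↥S) = ⟨s₂, hs₂⟩ := by
          intro h₁ h₂
          refine Subtype.ext (funext fun j => ?_)
          exact Fin.lastCases h₂ (fun i => congrFun h₁ i) j
        simp only [F] at hF
        by_cases c₁ : (s₁ (Fin.last M) = true ∧ (fun i : Fin M => s₁ i.castSucc) ∈ T) <;>
          by_cases c₂ : (s₂ (Fin.last M) = true ∧ (fun i : Fin M => s₂ i.castSucc) ∈ T)
        · rw [dif_pos c₁, dif_pos c₂] at hF
          have h' := congrArg Subtype.val (Sum.inr.inj hF)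
          exact ext_of h' (c₁.1.trans c₂.1.symm)
        · rw [dif_pos c₁, dif_neg c₂] at hF
          exact absurd hF (by simp)
        · rw [dif_neg c₁, dif_pos c₂] at hF
          exact absurd hF (by simp)
        · rw [dif_neg c₁, dif_neg c₂] at hF
          have h' := congrArg Subtype.val (Sum.inl.inj hF)
          refine ext_of h' ?_
          by_contra hne
          rcases Bool.eq_false_or_eq_true (s₁ (Fin.last M)) with hb1 | hb1 <;>
            rcases Bool.eq_false_or_eq_true (s₂ (Fin.last M)) with hb2 | hb2
          · exact hne (hb1.trans hb2.symm)
          · -- s₁ last = true, s₂ last = false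
            have hmem := key s₁ s₂ hs₁ hs₂ h' hb1 hb2
            exact c₁ ⟨hb1, hmem⟩
          · -- s₁ last = false, s₂ last = true
            have hmem := key s₂ s₁ hs₂ hs₁ h'.symm hb2 hb1
            exact c₂ ⟨hb2, hmem⟩
          · exact hne (hb1.trans hb2.symm)
      have hcard : Nat.card ↥S ≤ Nat.card ↥S' + Nat.card ↥T := by
        calc Nat.card ↥S ≤ Nat.card (↥S' ⊕ ↥T) := Nat.card_le_card_of_injective F hFinj
        _ = Nat.card ↥S' + Nat.card ↥T := Nat.card_sum
      have h1 := ih V ‹_› ‹_› ‹_› f'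
      have h2 := ih ↥(LinearMap.ker L) inferInstance inferInstance inferInstance g
      rw [hdK] at h2
      rw [hd] at h1 ⊢
      have hfinal := pascal_sum (M - 1) d
      have hM1 : M - 1 + 1 = M := by omega
      rw [hM1] at hfinal
      have hM2 : (M + 1 - 1 : ℕ) = M := by omega
      rw [hM2]
      simp only [hS, hS', hT] at hcard ⊢
      omega

/-- Any central arrangement of `M ≥ 1` hyperplanes in `ℝ^N` has at most
`2 Σ_{j<N} C(M−1, j)` regions. -/
theorem card_regions_central_le {M N : ℕ} (hM : 1 ≤ M)
    (w : Fin M → (Fin N → ℝ)) :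
    Nat.card (ConnectedComponents {x : Fin N → ℝ // ∀ i, w i ⬝ᵥ x ≠ 0})
      ≤ 2 * ∑ j ∈ Finset.range N, (M - 1).choose j := by
  classical
  set X := {x : Fin N → ℝ // ∀ i, w i ⬝ᵥ x ≠ 0} with hX
  let f : Fin M → (Fin N → ℝ) →ₗ[ℝ] ℝ := fun i =>
    { toFun := fun x => w i ⬝ᵥ x
      map_add' := fun x y => dotProduct_add _ _ _
      map_smul' := fun c x => by simp [dotProduct_smul] }
  let sgn : X → (Fin M → Bool) := fun x i => decide (0 < w i ⬝ᵥ (x : Fin N → ℝ))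
  have hsgn : ∀ (x : X) (i : Fin M),
      if sgn x i then 0 < w i ⬝ᵥ (x : Fin N → ℝ) else w i ⬝ᵥ (x : Fin N → ℝ) < 0 := by
    intro x i
    by_cases h : 0 < w i ⬝ᵥ (x : Fin N → ℝ)
    · simp [sgn, h]
    · have hne := x.2 i
      have : w i ⬝ᵥ (x : Fin N → ℝ) < 0 := lt_of_le_of_ne (not_lt.mp h) hne
      simp [sgn, h, this]
  have hsgn_mem : ∀ x : X, sgn x ∈ SignSet f := fun x => ⟨x, hsgn x⟩
  have hcomp : ∀ x y : X, sgn x = sgn y →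
      ConnectedComponents.mk x = ConnectedComponents.mk y := by
    intro x y hxy
    set A : Set (Fin N → ℝ) :=
      ⋂ i, (f i) ⁻¹' (if sgn x i then Set.Ioi (0 : ℝ) else Set.Iio (0 : ℝ)) with hA
    have hconv : Convex ℝ A := by
      apply convex_iInter
      intro i
      by_cases h : sgn x i
      · simp only [h, if_true]
        exact (convex_Ioi (0 : ℝ)).linear_preimage (f i)
      · simp only [h, if_false]
        exact (convex_Iio (0 : ℝ)).linear_preimage (f i)
    have hmemA : ∀ z : X, sgn z = sgn x → (z : Fin N → ℝ) ∈ A := by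
      intro z hz
      rw [hA, Set.mem_iInter]
      intro i
      have h := hsgn z i
      rw [hz] at h
      by_cases hb : sgn x i
      · simp only [hb, if_true] at h ⊢
        exact h
      · simp only [hb, if_false] at h ⊢
        exact h
    have hAsub : ∀ z ∈ A, ∀ i, w i ⬝ᵥ z ≠ 0 := by
      intro z hz i
      rw [hA, Set.mem_iInter] at hz
      have := hz i
      split at this
      · exact ne_of_gt this
      · exact ne_of_lt this
    have hpre : IsPreconnected ((Subtype.val : X → Fin N → ℝ) ⁻¹' A) := by
      have himg : (Subtype.val : X → Fin N → ℝ) '' ((Subtype.val : X → Fin N → ℝ) ⁻¹' A) = A := by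
        ext z
        constructor
        · rintro ⟨u, hu, rfl⟩
          exact hu
        · intro hz
          exact ⟨⟨z, hAsub z hz⟩, hz, rfl⟩
      have hpc := hconv.isPreconnected
      rw [← himg] at hpc
      exact (Topology.IsInducing.subtypeVal.isPreconnected_image).mp hpc
    have hxA : x ∈ (Subtype.val : X → Fin N → ℝ) ⁻¹' A := hmemA x rfl
    have hyA : y ∈ (Subtype.val : X → Fin N → ℝ) ⁻¹' A := hmemA y hxy.symm
    rw [ConnectedComponents.coe_eq_coe]
    exact connectedComponent_eq (hpre.subset_connectedComponent hxA hyA)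
  obtain ⟨ρ, hρ⟩ := (ConnectedComponents.surjective_coe (α := X)).hasRightInverse
  let F : ConnectedComponents X → ↥(SignSet f) := fun c => ⟨sgn (ρ c), hsgn_mem _⟩
  have hFinj : Function.Injective F := by
    intro c₁ c₂ h
    have hs : sgn (ρ c₁) = sgn (ρ c₂) := congrArg Subtype.val h
    have := hcomp (ρ c₁) (ρ c₂) hs
    rwa [hρ c₁, hρ c₂] at this
  calc Nat.card (ConnectedComponents X)
      ≤ Nat.card (SignSet f) := Nat.card_le_card_of_injective F hFinj
    _ ≤ 2 * ∑ j ∈ Finset.range (finrank ℝ (Fin N → ℝ)), (M - 1).choose j :=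
        signset_card_le M hM (Fin N → ℝ) inferInstance inferInstance inferInstance f
    _ = 2 * ∑ j ∈ Finset.range N, (M - 1).choose j := by rw [finrank_fin_fun]
end

section
/- Fix natural numbers S₀, d ≥ 1 and m ≥ 1, and let L be an ℝ-linear equivalence (an invertible linear map) of the space of real S₀×d matrices. For a weight matrix W ∈ ℝ^{d×m}, consider the region set R(W) = {H ∈ ℝ^{S₀×d} : (L(H) · W)_{ij} ≠ 0 for all i, j}. Then: (a) for every W ∈ ℝ^{d×m}, the number of connected components of R(W) is at most (2 · Σ_{i=0}^{d−1} C(m−1, i))^{S₀}; and (b) there exists W ∈ ℝ^{d×m} for which the number of connected components of R(W) equals this bound. -/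
open Matrix Finset

noncomputable section
namespace GnnAux

/-- Achievability of a strict sign vector by a family of linear functionals. -/
def Ach {V : Type} [AddCommGroup V] [Module ℝ V] {m : ℕ}
    (f : Fin m → V →ₗ[ℝ] ℝ) (σ : Fin m → Bool) : Prop :=
  ∃ x : V, ∀ j, if σ j then 0 < f j x else f j x < 0

/-- The linear functional given by a column of a matrix. -/
def colF {d m : ℕ} (W : Matrix (Fin d) (Fin m) ℝ) (j : Fin m) :
    (Fin d → ℝ) →ₗ[ℝ] ℝ where
  toFun x := ∑ k, x k * W k j
  map_add' x y := by simp [add_mul, Finset.sum_add_distrib]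
  map_smul' c x := by simp [Finset.mul_sum, mul_assoc]

section segment
variable {V : Type} [AddCommGroup V] [Module ℝ V] {m : ℕ}

lemma ach_tail {f : Fin (m+1) → V →ₗ[ℝ] ℝ} {σ : Fin (m+1) → Bool} (h : Ach f σ) :
    Ach (fun j : Fin m => f j.castSucc) (fun j => σ j.castSucc) := by
  obtain ⟨x, hx⟩ := h
  exact ⟨x, fun j => hx j.castSucc⟩

lemma ach_restrict (f : Fin (m+1) → V →ₗ[ℝ] ℝ) (σ : Fin m → Bool)
    (h₁ : Ach f (Fin.snoc σ true)) (h₂ : Ach f (Fin.snoc σ false)) :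
    Ach (fun j : Fin m =>
      (f j.castSucc).comp (LinearMap.ker (f (Fin.last m))).subtype) σ := by
  obtain ⟨x, hx⟩ := h₁
  obtain ⟨y, hy⟩ := h₂
  have hxl : 0 < f (Fin.last m) x := by have := hx (Fin.last m); simpa using this
  have hyl : f (Fin.last m) y < 0 := by have := hy (Fin.last m); simpa using this
  set a := f (Fin.last m) x with ha
  set b := f (Fin.last m) y with hb
  have hab : 0 < a - b := by linarith
  set t : ℝ := a / (a - b) with ht
  have ht0 : 0 < t := div_pos hxl hab
  have ht1 : t < 1 := (div_lt_one hab).mpr (by linarith)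
  set z : V := (1 - t) • x + t • y with hz
  have hzk : z ∈ LinearMap.ker (f (Fin.last m)) := by
    simp only [LinearMap.mem_ker, hz, map_add, _root_.map_smul, smul_eq_mul, ← ha, ← hb, ht]
    field_simp
    ring
  refine ⟨⟨z, hzk⟩, fun j => ?_⟩
  have hxj := hx j.castSucc
  have hyj := hy j.castSucc
  rw [Fin.snoc_castSucc] at hxj hyj
  have hval : f j.castSucc z = (1 - t) * f j.castSucc x + t * f j.castSucc y := by
    simp [hz, map_add, _root_.map_smul, smul_eq_mul]
  simp only [LinearMap.comp_apply, Submodule.coe_subtype]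
  have hgoal : ((f j.castSucc).comp (LinearMap.ker (f (Fin.last m))).subtype) ⟨z, hzk⟩
      = (1 - t) * f j.castSucc x + t * f j.castSucc y := by
    simpa using hval
  cases hσ : σ j <;> rw [hσ] at hxj hyj <;>
    simp only [↓reduceIte, Bool.false_eq_true, if_false] at hxj hyj ⊢ <;>
    rw [hval] <;> nlinarith

lemma ach_card_succ (f : Fin (m+1) → V →ₗ[ℝ] ℝ) :
    Nat.card {σ : Fin (m+1) → Bool // Ach f σ} ≤
      Nat.card {σ : Fin m → Bool // Ach (fun j : Fin m => f j.castSucc) σ} +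
      Nat.card {σ : Fin m → Bool // Ach (fun j : Fin m =>
        (f j.castSucc).comp (LinearMap.ker (f (Fin.last m))).subtype) σ} := by
  classical
  rw [← Nat.card_sum]
  apply Nat.card_le_card_of_injective
    (f := fun p : {σ : Fin (m+1) → Bool // Ach f σ} =>
      if hc : p.1 (Fin.last m) = false ∧ Ach f (Fin.snoc (fun j : Fin m => p.1 j.castSucc) true)
      then Sum.inr ⟨fun j => p.1 j.castSucc,
        ach_restrict f _ hc.2 (by
          have hσeq : Fin.snoc (fun j : Fin m => p.1 j.castSucc) false = p.1 := by
            funext j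
            refine Fin.lastCases ?_ (fun i => ?_) j
            · rw [Fin.snoc_last, hc.1]
            · rw [Fin.snoc_castSucc]
          rw [hσeq]; exact p.2)⟩
      else Sum.inl ⟨fun j => p.1 j.castSucc, ach_tail p.2⟩)
  rintro ⟨σ₁, h₁⟩ ⟨σ₂, h₂⟩ heq
  dsimp only at heq
  have hext : ∀ (τ₁ τ₂ : Fin (m+1) → Bool),
      (fun j : Fin m => τ₁ j.castSucc) = (fun j : Fin m => τ₂ j.castSucc) →
      τ₁ (Fin.last m) = τ₂ (Fin.last m) → τ₁ = τ₂ := by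
    intro τ₁ τ₂ ht hl
    funext j
    refine Fin.lastCases hl (fun i => ?_) j
    exact congrFun ht i
  by_cases hc₁ : σ₁ (Fin.last m) = false ∧ Ach f (Fin.snoc (fun j : Fin m => σ₁ j.castSucc) true) <;>
    by_cases hc₂ : σ₂ (Fin.last m) = false ∧ Ach f (Fin.snoc (fun j : Fin m => σ₂ j.castSucc) true)
  · rw [dif_pos hc₁, dif_pos hc₂] at heq
    have htail : (fun j : Fin m => σ₁ j.castSucc) = fun j : Fin m => σ₂ j.castSucc :=
      congrArg Subtype.val (Sum.inr.inj heq)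
    exact Subtype.ext (hext _ _ htail (hc₁.1.trans hc₂.1.symm))
  · rw [dif_pos hc₁, dif_neg hc₂] at heq
    exact absurd heq (by simp)
  · rw [dif_neg hc₁, dif_pos hc₂] at heq
    exact absurd heq (by simp)
  · rw [dif_neg hc₁, dif_neg hc₂] at heq
    have htail : (fun j : Fin m => σ₁ j.castSucc) = fun j : Fin m => σ₂ j.castSucc :=
      congrArg Subtype.val (Sum.inl.inj heq)
    apply Subtype.ext
    apply hext _ _ htail
    by_contra hne
    have hsnoc : ∀ σ : Fin (m+1) → Bool,
        Fin.snoc (fun j : Fin m => σ j.castSucc) (σ (Fin.last m)) = σ := by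
      intro σ
      funext j
      refine Fin.lastCases ?_ (fun i => ?_) j
      · rw [Fin.snoc_last]
      · rw [Fin.snoc_castSucc]
    rcases Bool.eq_false_or_eq_true (σ₁ (Fin.last m)) with hb₁ | hb₁ <;>
      rcases Bool.eq_false_or_eq_true (σ₂ (Fin.last m)) with hb₂ | hb₂ <;>
      try (rw [hb₁, hb₂] at hne; exact hne rfl)
    · apply hc₂
      refine ⟨hb₂, ?_⟩
      rw [← htail]
      have hs1 : Fin.snoc (fun j : Fin m => σ₁ j.castSucc) true = σ₁ := by
        rw [← hb₁]; exact hsnoc σ₁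
      rw [hs1]; exact h₁
    · apply hc₁
      refine ⟨hb₁, ?_⟩
      rw [htail]
      have hs2 : Fin.snoc (fun j : Fin m => σ₂ j.castSucc) true = σ₂ := by
        rw [← hb₂]; exact hsnoc σ₂
      rw [hs2]; exact h₂

end segment

lemma ach_empty_of_finrank_zero {V : Type} [AddCommGroup V] [Module ℝ V]
    [FiniteDimensional ℝ V] (h : Module.finrank ℝ V = 0) {m : ℕ}
    (f : Fin m → V →ₗ[ℝ] ℝ) (σ : Fin m → Bool) (j : Fin m) : ¬ Ach f σ := by
  rintro ⟨x, hx⟩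
  have hsub : Subsingleton V := Module.finrank_zero_iff.mp h
  have hx0 : x = 0 := Subsingleton.elim _ _
  have := hx j
  rw [hx0, map_zero] at this
  split at this <;> simp at this

lemma cover_ub (m : ℕ) (hm : 1 ≤ m) :
    ∀ (V : Type) [AddCommGroup V] [Module ℝ V] [FiniteDimensional ℝ V] (d : ℕ),
      Module.finrank ℝ V ≤ d → ∀ f : Fin m → V →ₗ[ℝ] ℝ,
      Nat.card {σ : Fin m → Bool // Ach f σ} ≤ 2 * ∑ i ∈ Finset.range d, Nat.choose (m-1) i := by
  induction m, hm using Nat.le_induction with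
  | base =>
    intro V _ _ _ d hd f
    by_cases h0 : Module.finrank ℝ V = 0
    · have : IsEmpty {σ : Fin 1 → Bool // Ach f σ} :=
        ⟨fun ⟨σ, hσ⟩ => ach_empty_of_finrank_zero h0 f σ 0 hσ⟩
      simp [Nat.card_of_isEmpty]
    · obtain ⟨e, rfl⟩ : ∃ e, d = e + 1 := ⟨d - 1, by omega⟩
      have hsum : ∑ i ∈ Finset.range (e+1), Nat.choose 0 i = 1 := by
        rw [Finset.sum_range_succ']
        simp
      rw [hsum]
      calc Nat.card {σ : Fin 1 → Bool // Ach f σ}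
          ≤ Nat.card (Fin 1 → Bool) := Nat.card_le_card_of_injective _ Subtype.val_injective
        _ = 2 := by simp [Nat.card_eq_fintype_card]
  | succ m hm IH =>
    intro V _ _ _ d hd f
    by_cases h0 : Module.finrank ℝ V = 0
    · have : IsEmpty {σ : Fin (m+1) → Bool // Ach f σ} :=
        ⟨fun ⟨σ, hσ⟩ => ach_empty_of_finrank_zero h0 f σ 0 hσ⟩
      simp [Nat.card_of_isEmpty]
    by_cases hf0 : f (Fin.last m) = 0
    · have : IsEmpty {σ : Fin (m+1) → Bool // Ach f σ} := by
        constructor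
        rintro ⟨σ, x, hx⟩
        have := hx (Fin.last m)
        rw [hf0] at this
        simp only [LinearMap.zero_apply] at this
        split at this <;> simp at this
      simp [Nat.card_of_isEmpty]
    -- main case
    have hd1 : 1 ≤ d := by
      have : 1 ≤ Module.finrank ℝ V := by omega
      omega
    have hker : Module.finrank ℝ (LinearMap.ker (f (Fin.last m))) ≤ d - 1 := by
      have hrange : LinearMap.range (f (Fin.last m)) = ⊤ := by
        rw [eq_top_iff]
        rintro r -
        obtain ⟨v, hv⟩ : ∃ v, f (Fin.last m) v ≠ 0 := by
          by_contra hc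
          push_neg at hc
          exact hf0 (LinearMap.ext fun v => by simp [hc v])
        refine ⟨(r / f (Fin.last m) v) • v, ?_⟩
        rw [_root_.map_smul, smul_eq_mul]
        field_simp
      have := LinearMap.finrank_range_add_finrank_ker (f (Fin.last m))
      rw [hrange] at this
      simp only [finrank_top, Module.finrank_self] at this
      omega
    have h1 := IH V d hd (fun j : Fin m => f j.castSucc)
    have h2 := IH (LinearMap.ker (f (Fin.last m))) (d-1) hker
      (fun j : Fin m => (f j.castSucc).comp (LinearMap.ker (f (Fin.last m))).subtype)
    have h3 := ach_card_succ f
    -- numeric identity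
    obtain ⟨n, rfl⟩ : ∃ n, m = n + 1 := ⟨m - 1, by omega⟩
    obtain ⟨e, rfl⟩ : ∃ e, d = e + 1 := ⟨d - 1, by omega⟩
    have key : ∑ i ∈ Finset.range (e+1), Nat.choose (n+1) i
        = ∑ i ∈ Finset.range (e+1), Nat.choose n i + ∑ i ∈ Finset.range e, Nat.choose n i := by
      rw [Finset.sum_range_succ' (fun i => Nat.choose (n+1) i) e]
      simp only [Nat.choose_succ_succ]
      rw [Finset.sum_add_distrib]
      rw [Finset.sum_range_succ' (fun i => Nat.choose n i) e]
      simp [Nat.choose_zero_right]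
      ring
    simp only [Nat.add_sub_cancel] at h1 h2 h3 ⊢
    rw [key]
    omega


section pipeline

variable {S₀ d m : ℕ} (L : Matrix (Fin S₀) (Fin d) ℝ ≃ₗ[ℝ] Matrix (Fin S₀) (Fin d) ℝ)
  (W : Matrix (Fin d) (Fin m) ℝ)

/-- entry of `L H * W` as a linear functional of `H` -/
def entryL (i : Fin S₀) (j : Fin m) : Matrix (Fin S₀) (Fin d) ℝ →ₗ[ℝ] ℝ where
  toFun H := (L H * W) i j
  map_add' H₁ H₂ := by simp [map_add, Matrix.add_mul]
  map_smul' c H := by simp [_root_.map_smul, Matrix.smul_mul]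

/-- matrix-level achievable sign patterns -/
def AchM (τ : Fin S₀ × Fin m → Bool) : Prop :=
  ∃ H : Matrix (Fin S₀) (Fin d) ℝ, ∀ p : Fin S₀ × Fin m,
    if τ p then 0 < (L H * W) p.1 p.2 else (L H * W) p.1 p.2 < 0

lemma card_components_eq_achM :
    Nat.card (ConnectedComponents
        {H : Matrix (Fin S₀) (Fin d) ℝ // ∀ i j, (L H * W) i j ≠ 0})
      = Nat.card {τ : Fin S₀ × Fin m → Bool // AchM L W τ} := by
  classical
  set X := {H : Matrix (Fin S₀) (Fin d) ℝ // ∀ i j, (L H * W) i j ≠ 0} with hX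
  let e : X → (Fin S₀ × Fin m → Bool) := fun H p => decide (0 < (L H.1 * W) p.1 p.2)
  have hlin : ∀ p : Fin S₀ × Fin m, Continuous fun H : X => (L H.1 * W) p.1 p.2 := by
    intro p
    exact ((entryL L W p.1 p.2).continuous_of_finiteDimensional).comp continuous_subtype_val
  have hcont : Continuous e := by
    rw [continuous_discrete_rng]
    intro τ
    have hpre : e ⁻¹' {τ} = ⋂ p : Fin S₀ × Fin m,
        {H : X | if τ p then 0 < (L H.1 * W) p.1 p.2 else (L H.1 * W) p.1 p.2 < 0} := by
      ext H
      simp only [Set.mem_preimage, Set.mem_singleton_iff, funext_iff, Set.mem_iInter,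
        Set.mem_setOf_eq, e]
      refine forall_congr' fun p => ?_
      cases hτ : τ p
      · simp only [decide_eq_false_iff_not, not_lt, Bool.false_eq_true, if_false, ↓reduceIte]
        constructor
        · intro h; exact lt_of_le_of_ne h (H.2 p.1 p.2)
        · intro h; exact le_of_lt h
      · simp
    rw [hpre]
    apply isOpen_iInter_of_finite
    intro p
    cases hτ : τ p
    · simpa only [hτ, Bool.false_eq_true, if_false, Set.preimage, Set.mem_Iio] using
        (isOpen_Iio (a := (0:ℝ))).preimage (hlin p)
    · simpa only [hτ, if_true, Set.preimage, Set.mem_Ioi] using (isOpen_Ioi (a := (0:ℝ))).preimage (hlin p)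
  -- lift to components
  have hach : ∀ c : ConnectedComponents X, AchM L W (hcont.connectedComponentsLift c) := by
    intro c
    obtain ⟨H, rfl⟩ := ConnectedComponents.surjective_coe c
    rw [hcont.connectedComponentsLift_apply_coe]
    refine ⟨H.1, fun p => ?_⟩
    by_cases h0 : 0 < (L H.1 * W) p.1 p.2
    · simp [e, h0]
    · have hlt : (L H.1 * W) p.1 p.2 < 0 :=
        lt_of_le_of_ne (not_lt.mp h0) (H.2 p.1 p.2)
      simp [e, h0, hlt]
  let G : ConnectedComponents X → {τ : Fin S₀ × Fin m → Bool // AchM L W τ} :=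
    fun c => ⟨hcont.connectedComponentsLift c, hach c⟩
  have hGbij : Function.Bijective G := by
    constructor
    · intro c₁ c₂ hG
      obtain ⟨H₁, rfl⟩ := ConnectedComponents.surjective_coe c₁
      obtain ⟨H₂, rfl⟩ := ConnectedComponents.surjective_coe c₂
      have hee : e H₁ = e H₂ := by
        have := congrArg Subtype.val hG
        simpa only [G, hcont.connectedComponentsLift_apply_coe] using this
      set τ := e H₁ with hτdef
      set C₀ : Set (Matrix (Fin S₀) (Fin d) ℝ) :=
        {M | ∀ p : Fin S₀ × Fin m,
          if τ p then 0 < (L M * W) p.1 p.2 else (L M * W) p.1 p.2 < 0} with hC₀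
      have hval : ∀ (a b : ℝ) (M₁ M₂ : Matrix (Fin S₀) (Fin d) ℝ) (p : Fin S₀ × Fin m),
          (L (a • M₁ + b • M₂) * W) p.1 p.2
            = a * (L M₁ * W) p.1 p.2 + b * (L M₂ * W) p.1 p.2 := by
        intro a b M₁ M₂ p
        rw [map_add, _root_.map_smul, _root_.map_smul, Matrix.add_mul,
          Matrix.smul_mul, Matrix.smul_mul]
        simp [Matrix.add_apply, Matrix.smul_apply, smul_eq_mul]
      have hconv : Convex ℝ C₀ := by
        intro M₁ h₁ M₂ h₂ a b ha hb hab
        intro p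
        have e₁ := h₁ p
        have e₂ := h₂ p
        rcases ha.eq_or_lt with ha0 | ha0
        · have hb1 : b = 1 := by linarith
          simpa [← ha0, hb1, hval] using e₂
        · cases hτp : τ p <;> rw [hτp] at e₁ e₂ <;>
            simp only [if_true, Bool.false_eq_true, if_false, ↓reduceIte] at e₁ e₂ ⊢ <;>
            rw [hval] <;> nlinarith
      have hmem : ∀ (H : X), e H = τ → H.1 ∈ C₀ := by
        intro H hH p
        have := congrFun hH p
        simp only [e, hX] at this
        cases hτp : τ p <;> rw [hτp] at this <;>
          simp only [decide_eq_true_eq, decide_eq_false_iff_not, not_lt] at this <;>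
          simp only [hτp, if_true, Bool.false_eq_true, if_false, ↓reduceIte]
        · exact lt_of_le_of_ne this (H.2 p.1 p.2)
        · exact this
      have hpc : PreconnectedSpace C₀ := Subtype.preconnectedSpace hconv.isPreconnected
      let g : C₀ → X := fun M => ⟨M.1, fun i j => by
        have hM := M.2 (i, j)
        split at hM
        · exact ne_of_gt hM
        · exact ne_of_lt hM⟩
      have hgcont : Continuous g := Continuous.subtype_mk continuous_subtype_val _
      have hpreconn : IsPreconnected (Set.range g) := isPreconnected_range hgcont
      have h₁ : H₁ ∈ Set.range g := ⟨⟨H₁.1, hmem H₁ rfl⟩, Subtype.ext rfl⟩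
      have h₂ : H₂ ∈ Set.range g := ⟨⟨H₂.1, hmem H₂ hee.symm⟩, Subtype.ext rfl⟩
      rw [ConnectedComponents.coe_eq_coe']
      exact hpreconn.subset_connectedComponent h₂ h₁
    · rintro ⟨τ, H₀, hH₀⟩
      have hX0 : ∀ i j, (L H₀ * W) i j ≠ 0 := by
        intro i j
        have := hH₀ (i, j)
        split at this
        · exact ne_of_gt this
        · exact ne_of_lt this
      refine ⟨(⟨H₀, hX0⟩ : X), ?_⟩
      apply Subtype.ext
      simp only [G, hcont.connectedComponentsLift_apply_coe]
      funext p
      have := hH₀ p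
      cases hτ : τ p <;> rw [hτ] at this <;>
        simp only [if_true, Bool.false_eq_true, if_false, ↓reduceIte] at this <;>
        simp [e, this, asymm this]
  exact Nat.card_eq_of_bijective G hGbij

lemma achM_iff (τ : Fin S₀ × Fin m → Bool) :
    AchM L W τ ↔ ∀ i, Ach (colF W) (fun j => τ (i, j)) := by
  constructor
  · rintro ⟨H, hH⟩ i
    refine ⟨fun k => L H i k, fun j => ?_⟩
    have := hH (i, j)
    simpa only [colF, LinearMap.coe_mk, AddHom.coe_mk, ← Matrix.mul_apply] using this
  · intro h
    choose x hx using h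
    refine ⟨L.symm (Matrix.of fun i k => x i k), fun p => ?_⟩
    rw [L.apply_symm_apply]
    have := hx p.1 p.2
    simpa only [colF, LinearMap.coe_mk, AddHom.coe_mk, Matrix.mul_apply, Matrix.of_apply]
      using this

lemma card_components :
    Nat.card (ConnectedComponents
        {H : Matrix (Fin S₀) (Fin d) ℝ // ∀ i j, (L H * W) i j ≠ 0})
      = Nat.card {σ : Fin m → Bool // Ach (colF W) σ} ^ S₀ := by
  rw [card_components_eq_achM L W]
  have e1 : {τ : Fin S₀ × Fin m → Bool // AchM L W τ}
      ≃ {τ : Fin S₀ → Fin m → Bool // ∀ i, Ach (colF W) (τ i)} := by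
    refine (Equiv.curry _ _ _).subtypeEquiv fun τ => ?_
    rw [achM_iff]
    exact Iff.rfl
  have e2 : {τ : Fin S₀ → Fin m → Bool // ∀ i, Ach (colF W) (τ i)}
      ≃ (Fin S₀ → {σ : Fin m → Bool // Ach (colF W) σ}) :=
    Equiv.subtypePiEquivPi
  rw [Nat.card_congr (e1.trans e2), Nat.card_fun]
  simp [Nat.card_eq_fintype_card]

end pipeline

variable {n : ℕ}

/-- number of elements of `s` below `J` -/
def cnt (s : Finset (Fin n)) (J : ℕ) : ℕ := (s.filter fun i : Fin n => (i : ℕ) < J).card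

/-- sign vector with initial sign `b` and change set `s` -/
def sigmaOf (b : Bool) (s : Finset (Fin n)) : Fin (n+1) → Bool :=
  fun j => xor b (decide (Odd (cnt s (j : ℕ))))

lemma cnt_zero (s : Finset (Fin n)) : cnt s 0 = 0 := by simp [cnt]

lemma cnt_le (s : Finset (Fin n)) (J : ℕ) : cnt s J ≤ s.card := card_filter_le _ _

lemma cnt_succ (s : Finset (Fin n)) (J : ℕ) (hJ : J < n) :
    cnt s (J + 1) = cnt s J + if (⟨J, hJ⟩ : Fin n) ∈ s then 1 else 0 := by
  classical
  unfold cnt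
  have hsplit : (s.filter fun i : Fin n => (i : ℕ) < J + 1)
      = (s.filter fun i : Fin n => (i : ℕ) < J) ∪ (s.filter fun i : Fin n => (i : ℕ) = J) := by
    rw [← Finset.filter_or]
    exact Finset.filter_congr fun i _ => by omega
  rw [hsplit, Finset.card_union_of_disjoint]
  · congr 1
    have : (s.filter fun i : Fin n => (i : ℕ) = J) = if (⟨J, hJ⟩ : Fin n) ∈ s then {⟨J, hJ⟩} else ∅ := by
      split <;> ext a <;> simp only [Finset.mem_filter, Finset.mem_singleton,
        Finset.notMem_empty, iff_false, not_and] <;>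
        [skip; (intro ha hv; exact (by rename_i h; exact h (by
          have : a = (⟨J, hJ⟩ : Fin n) := Fin.ext hv
          rwa [this] at ha)))]
      constructor
      · rintro ⟨ha, hv⟩; exact Fin.ext hv
      · rintro rfl; exact ⟨by assumption, rfl⟩
    rw [this]
    split <;> simp
  · rw [Finset.disjoint_left]
    intro a h1 h2
    rw [Finset.mem_filter] at h1 h2
    omega

lemma sigmaOf_zero (b : Bool) (s : Finset (Fin n)) (j : Fin (n+1)) (hj : (j : ℕ) = 0) :
    sigmaOf b s j = b := by
  simp [sigmaOf, hj, cnt_zero]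

lemma sigmaOf_succ (b : Bool) (s : Finset (Fin n)) (J : ℕ) (hJ : J < n) (hJ1 : J + 1 < n + 1) :
    sigmaOf b s ⟨J + 1, hJ1⟩
      = xor (sigmaOf b s ⟨J, by omega⟩) (decide ((⟨J, hJ⟩ : Fin n) ∈ s)) := by
  classical
  simp only [sigmaOf, cnt_succ s J hJ]
  by_cases hmem : (⟨J, hJ⟩ : Fin n) ∈ s <;>
    simp [hmem, Nat.odd_add_one, Bool.xor_assoc] <;>
    cases b <;> cases hx : decide (Odd (cnt s J)) <;> simp_all [Nat.not_odd_iff_even]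

lemma sigmaOf_step (b : Bool) (s : Finset (Fin n)) (i : Fin n) :
    (sigmaOf b s i.castSucc ≠ sigmaOf b s i.succ) ↔ i ∈ s := by
  classical
  have h1 : i.castSucc = (⟨(i : ℕ), by omega⟩ : Fin (n+1)) := rfl
  have h2 : i.succ = (⟨(i : ℕ) + 1, by omega⟩ : Fin (n+1)) := rfl
  rw [h1, h2, sigmaOf_succ b s (i : ℕ) i.2 (by omega)]
  have : (⟨(i : ℕ), i.2⟩ : Fin n) = i := rfl
  rw [this]
  by_cases hmem : i ∈ s <;>
    cases hx : sigmaOf b s ⟨(i : ℕ), by omega⟩ <;> simp [hmem]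

/-- every sign vector arises as `sigmaOf` of its value at 0 and its change set -/
lemma sigmaOf_reconstruct (σ : Fin (n+1) → Bool) :
    sigmaOf (σ ⟨0, Nat.succ_pos n⟩)
      (Finset.univ.filter fun i : Fin n => σ i.castSucc ≠ σ i.succ) = σ := by
  classical
  set s := Finset.univ.filter fun i : Fin n => σ i.castSucc ≠ σ i.succ with hs
  set b := σ ⟨0, Nat.succ_pos n⟩ with hb
  funext j
  obtain ⟨J, hJ⟩ := j
  induction J with
  | zero => exact sigmaOf_zero b s ⟨0, hJ⟩ rfl
  | succ J ih =>
    have hJn : J < n := by omega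
    have hprev := ih (by omega)
    rw [sigmaOf_succ b s J hJn hJ, hprev]
    have hcs : (⟨J, hJn⟩ : Fin n).castSucc = (⟨J, by omega⟩ : Fin (n+1)) := rfl
    have hsc : (⟨J, hJn⟩ : Fin n).succ = (⟨J + 1, hJ⟩ : Fin (n+1)) := rfl
    by_cases hmem : (⟨J, hJn⟩ : Fin n) ∈ s
    · have hne : σ ⟨J, by omega⟩ ≠ σ ⟨J + 1, hJ⟩ := by
        have := (Finset.mem_filter.mp hmem).2
        rwa [hcs, hsc] at this
      cases h1 : σ (⟨J, by omega⟩ : Fin (n+1)) <;> cases h2 : σ (⟨J + 1, hJ⟩ : Fin (n+1)) <;>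
        simp_all [hmem]
    · have heq : σ ⟨J, by omega⟩ = σ ⟨J + 1, hJ⟩ := by
        by_contra hne
        exact hmem (Finset.mem_filter.mpr ⟨Finset.mem_univ _, by rwa [hcs, hsc]⟩)
      simp [hmem, ← heq]

/-- sign of a product of nonzero reals -/
lemma prod_pos_iff_even {ι : Type*} [DecidableEq ι] (s : Finset ι) (c : ι → ℝ)
    (h : ∀ i ∈ s, c i ≠ 0) :
    (0 < ∏ i ∈ s, c i) ↔ Even (s.filter fun i => c i < 0).card := by
  classical
  induction s using Finset.induction_on with
  | empty => simp
  | @insert a s' ha ih =>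
    have hc := h a (Finset.mem_insert_self a s')
    have h' : ∀ i ∈ s', c i ≠ 0 := fun i hi => h i (Finset.mem_insert_of_mem hi)
    have hP : ∏ i ∈ s', c i ≠ 0 := Finset.prod_ne_zero_iff.mpr h'
    rw [Finset.prod_insert ha, Finset.filter_insert]
    rcases lt_trichotomy (c a) 0 with hca | hca | hca
    · rw [if_pos hca, Finset.card_insert_of_notMem (fun hmem => ha (Finset.mem_filter.mp hmem).1)]
      rw [Nat.even_add_one, ← ih h']
      constructor
      · intro hpos
        intro hpos'
        nlinarith
      · intro hneg
        rcases hP.lt_or_gt with hn | hp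
        · nlinarith
        · exact absurd hp hneg
    · exact absurd hca hc
    · rw [if_neg (asymm hca), ← ih h']
      constructor
      · intro hpos
        nlinarith
      · intro hpos
        exact mul_pos hca hpos

/-- moment-curve weight matrix -/
def Wb (d n : ℕ) : Matrix (Fin d) (Fin (n+1)) ℝ := fun k j => ((j : ℕ) : ℝ) ^ (k : ℕ)

lemma ach_sigmaOf {n d : ℕ} (b : Bool) (s : Finset (Fin n)) (hs : s.card < d) :
    Ach (colF (Wb d n)) (sigmaOf b s) := by
  classical
  set ε : ℝ := if xor b (decide (Odd s.card)) then 1 else -1 with hε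
  have hε0 : ε ≠ 0 := by rw [hε]; split <;> norm_num
  set P : Polynomial ℝ :=
    Polynomial.C ε * ∏ i ∈ s, (Polynomial.X - Polynomial.C (((i : ℕ) : ℝ) + 1/2)) with hP
  have hPdeg : P.natDegree < d := by
    rw [hP, Polynomial.natDegree_C_mul hε0,
      Polynomial.natDegree_prod _ _ (fun i _ => Polynomial.X_sub_C_ne_zero _)]
    have hdeg1 : ∀ i ∈ s, (Polynomial.X - Polynomial.C (((i : ℕ) : ℝ) + 1/2)).natDegree = 1 :=
      fun i _ => Polynomial.natDegree_X_sub_C _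
    rw [Finset.sum_congr rfl hdeg1, Finset.sum_const, smul_eq_mul, mul_one]
    exact hs
  refine ⟨fun k => P.coeff k, fun j => ?_⟩
  have hval : colF (Wb d n) j (fun k => P.coeff k) = P.eval ((j : ℕ) : ℝ) := by
    rw [Polynomial.eval_eq_sum_range' hPdeg]
    rw [← Fin.sum_univ_eq_sum_range (fun k => P.coeff k * (((j : ℕ) : ℝ)) ^ k) d]
    simp [colF, Wb]
  have hevalP : P.eval ((j : ℕ) : ℝ)
      = ε * ∏ i ∈ s, (((j : ℕ) : ℝ) - (((i : ℕ) : ℝ) + 1/2)) := by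
    simp [hP, Polynomial.eval_prod]
  have hfac : ∀ i : Fin n, ((j : ℕ) : ℝ) - (((i : ℕ) : ℝ) + 1/2) ≠ 0 := by
    intro i h
    have h2 : ((j : ℕ) : ℝ) * 2 = ((i : ℕ) : ℝ) * 2 + 1 := by linarith
    have h3 : (j : ℕ) * 2 = (i : ℕ) * 2 + 1 := by exact_mod_cast h2
    omega
  have hprod0 : (∏ i ∈ s, (((j : ℕ) : ℝ) - (((i : ℕ) : ℝ) + 1/2))) ≠ 0 :=
    Finset.prod_ne_zero_iff.mpr fun i _ => hfac i
  have hppos : (0 < ∏ i ∈ s, (((j : ℕ) : ℝ) - (((i : ℕ) : ℝ) + 1/2)))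
      ↔ (Odd s.card ↔ Odd (cnt s (j : ℕ))) := by
    rw [prod_pos_iff_even s _ (fun i _ => hfac i)]
    have hfilter : (s.filter fun i : Fin n => (((j : ℕ) : ℝ) - (((i : ℕ) : ℝ) + 1/2)) < 0)
        = s.filter fun i : Fin n => ¬ ((i : ℕ) < (j : ℕ)) := by
      apply Finset.filter_congr
      intro i _
      simp only [not_lt, eq_iff_iff]
      constructor
      · intro h
        by_contra hc
        push_neg at hc
        have : ((i : ℕ) : ℝ) + 1 ≤ ((j : ℕ) : ℝ) := by exact_mod_cast hc
        linarith
      · intro h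
        have : ((j : ℕ) : ℝ) ≤ ((i : ℕ) : ℝ) := by exact_mod_cast h
        linarith
    have hcard2 : (s.filter fun i : Fin n => ¬ ((i : ℕ) < (j : ℕ))).card
        = s.card - cnt s (j : ℕ) := by
      have := Finset.card_filter_add_card_filter_not
        (s := s) (p := fun i : Fin n => (i : ℕ) < (j : ℕ))
      unfold cnt
      omega
    rw [hfilter, hcard2, Nat.even_sub (cnt_le s (j : ℕ)), ← Nat.not_odd_iff_even,
      ← Nat.not_odd_iff_even, not_iff_not]
  have hQ1 : decide (Odd s.card) = decide (Odd (cnt s (j : ℕ)))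
      → 0 < ∏ i ∈ s, (((j : ℕ) : ℝ) - (((i : ℕ) : ℝ) + 1/2)) :=
    fun h => hppos.mpr (decide_eq_decide.mp h)
  have hQ2 : decide (Odd s.card) ≠ decide (Odd (cnt s (j : ℕ)))
      → (∏ i ∈ s, (((j : ℕ) : ℝ) - (((i : ℕ) : ℝ) + 1/2))) < 0 := fun h =>
    lt_of_le_of_ne (not_lt.mp fun hp => h (decide_eq_decide.mpr (hppos.mp hp))) hprod0
  rw [hval, hevalP]
  have hsig : sigmaOf b s j = xor b (decide (Odd (cnt s (j : ℕ)))) := rfl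
  cases b <;> cases hdS : decide (Odd s.card) <;> cases hdC : decide (Odd (cnt s (j : ℕ))) <;>
    simp only [hsig, hdS, hdC, hε, Bool.xor_false, Bool.xor_true, Bool.not_true, Bool.not_false,
      if_true, if_false, Bool.false_eq_true, Bool.true_eq_false, ↓reduceIte,
      one_mul, neg_mul, neg_neg] <;>
    first
      | nlinarith [hQ1 (by rw [hdS, hdC])]
      | nlinarith [hQ2 (by rw [hdS, hdC]; simp)]


lemma changes_lt_of_ach {n d : ℕ} (hd : 1 ≤ d) (σ : Fin (n+1) → Bool)
    (hσ : Ach (colF (Wb d n)) σ) :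
    (Finset.univ.filter fun i : Fin n => σ i.castSucc ≠ σ i.succ).card < d := by
  classical
  obtain ⟨x, hx⟩ := hσ
  set P : Polynomial ℝ := ∑ k : Fin d, Polynomial.C (x k) * Polynomial.X ^ (k : ℕ) with hP
  have heval : ∀ j : Fin (n+1), P.eval ((j : ℕ) : ℝ) = colF (Wb d n) j x := by
    intro j
    simp [hP, Polynomial.eval_finset_sum, colF, Wb]
  have hsig : ∀ j : Fin (n+1), if σ j then 0 < P.eval ((j : ℕ) : ℝ)
      else P.eval ((j : ℕ) : ℝ) < 0 := by
    intro j
    rw [heval j]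
    exact hx j
  have hne : ∀ j : Fin (n+1), P.eval ((j : ℕ) : ℝ) ≠ 0 := by
    intro j
    have := hsig j
    split at this
    · exact ne_of_gt this
    · exact ne_of_lt this
  have hP0 : P ≠ 0 := by
    intro h
    have := hne ⟨0, Nat.succ_pos n⟩
    rw [h] at this
    simp at this
  have hPdeg : P.natDegree ≤ d - 1 := by
    apply Polynomial.natDegree_sum_le_of_forall_le
    intro k _
    calc (Polynomial.C (x k) * Polynomial.X ^ (k : ℕ)).natDegree
        ≤ (Polynomial.X ^ (k : ℕ) : Polynomial ℝ).natDegree := Polynomial.natDegree_C_mul_le _ _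
      _ = (k : ℕ) := Polynomial.natDegree_X_pow _
      _ ≤ d - 1 := by omega
  have hroot : ∀ i : Fin n, σ i.castSucc ≠ σ i.succ →
      ∃ r, r ∈ Set.Ioo (((i : ℕ) : ℝ)) (((i : ℕ) : ℝ) + 1) ∧ P.eval r = 0 := by
    intro i hchg
    have h1 := hsig i.castSucc
    have h2 := hsig i.succ
    have hc1 : ((i.castSucc : ℕ) : ℝ) = ((i : ℕ) : ℝ) := by simp
    have hc2 : ((i.succ : ℕ) : ℝ) = ((i : ℕ) : ℝ) + 1 := by simp
    rw [hc1] at h1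
    rw [hc2] at h2
    have hle : ((i : ℕ) : ℝ) ≤ ((i : ℕ) : ℝ) + 1 := by linarith
    have hcont := (Polynomial.continuous P).continuousOn
      (s := Set.Icc (((i : ℕ) : ℝ)) (((i : ℕ) : ℝ) + 1))
    cases hb1 : σ i.castSucc
    · have hb2 : σ i.succ = true := by
        cases hb2 : σ i.succ
        · rw [hb1, hb2] at hchg; exact absurd rfl hchg
        · rfl
      rw [hb1] at h1
      rw [hb2] at h2
      simp only [if_true, Bool.false_eq_true, if_false, ↓reduceIte] at h1 h2
      have := intermediate_value_Ioo hle hcont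
      have h0 : (0 : ℝ) ∈ Set.Ioo (P.eval (((i : ℕ) : ℝ))) (P.eval (((i : ℕ) : ℝ) + 1)) :=
        ⟨h1, h2⟩
      obtain ⟨r, hr, hr0⟩ := this h0
      exact ⟨r, hr, hr0⟩
    · have hb2 : σ i.succ = false := by
        cases hb2 : σ i.succ
        · rfl
        · rw [hb1, hb2] at hchg; exact absurd rfl hchg
      rw [hb1] at h1
      rw [hb2] at h2
      simp only [if_true, Bool.false_eq_true, if_false, ↓reduceIte] at h1 h2
      have := intermediate_value_Ioo' hle hcont
      have h0 : (0 : ℝ) ∈ Set.Ioo (P.eval (((i : ℕ) : ℝ) + 1)) (P.eval (((i : ℕ) : ℝ))) :=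
        ⟨h2, h1⟩
      obtain ⟨r, hr, hr0⟩ := this h0
      exact ⟨r, hr, hr0⟩
  choose! r hrmem hrzero using hroot
  have hinj : Set.InjOn r (Finset.univ.filter fun i : Fin n => σ i.castSucc ≠ σ i.succ) := by
    intro i₁ h₁ i₂ h₂ hr
    have hg₁ := (Finset.mem_filter.mp h₁).2
    have hg₂ := (Finset.mem_filter.mp h₂).2
    have hm₁ := hrmem i₁ hg₁
    have hm₂ := hrmem i₂ hg₂
    have : (i₁ : ℕ) = (i₂ : ℕ) := by
      by_contra hne'
      rcases Nat.lt_or_ge (i₁ : ℕ) (i₂ : ℕ) with hlt | hge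
      · have : ((i₁ : ℕ) : ℝ) + 1 ≤ ((i₂ : ℕ) : ℝ) := by exact_mod_cast hlt
        have := hm₁.2
        have := hm₂.1
        rw [hr] at *
        linarith
      · have hlt : (i₂ : ℕ) < (i₁ : ℕ) := by omega
        have : ((i₂ : ℕ) : ℝ) + 1 ≤ ((i₁ : ℕ) : ℝ) := by exact_mod_cast hlt
        have := hm₂.2
        have := hm₁.1
        rw [hr] at *
        linarith
    exact Fin.ext this
  have hmaps : ∀ i ∈ (Finset.univ.filter fun i : Fin n => σ i.castSucc ≠ σ i.succ),
      r i ∈ P.roots.toFinset := by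
    intro i hi
    have hg := (Finset.mem_filter.mp hi).2
    rw [Multiset.mem_toFinset, Polynomial.mem_roots hP0]
    exact hrzero i hg
  calc (Finset.univ.filter fun i : Fin n => σ i.castSucc ≠ σ i.succ).card
      ≤ P.roots.toFinset.card := Finset.card_le_card_of_injOn r hmaps hinj
    _ ≤ Multiset.card P.roots := Multiset.toFinset_card_le _
    _ ≤ P.natDegree := Polynomial.card_roots' P
    _ ≤ d - 1 := hPdeg
    _ < d := by omega


lemma card_subtype_finsets (n d : ℕ) :
    Nat.card {s : Finset (Fin n) // s.card < d} = ∑ i ∈ Finset.range d, n.choose i := by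
  classical
  rw [Nat.card_eq_fintype_card, Fintype.card_subtype]
  have hsplit : Finset.univ.filter (fun s : Finset (Fin n) => s.card < d)
      = (Finset.range d).biUnion (fun i => Finset.powersetCard i Finset.univ) := by
    ext s
    simp only [Finset.mem_filter, Finset.mem_univ, true_and, Finset.mem_biUnion,
      Finset.mem_range, Finset.mem_powersetCard, Finset.subset_univ]
    constructor
    · intro h
      exact ⟨s.card, h, rfl⟩
    · rintro ⟨i, hi, -, rfl⟩
      exact hi
  rw [hsplit, Finset.card_biUnion]
  · apply Finset.sum_congr rfl
    intro i _
    rw [Finset.card_powersetCard, Finset.card_univ, Fintype.card_fin]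
  · intro i _ j _ hij
    rw [Function.onFun, Finset.disjoint_left]
    intro s hs hs'
    rw [Finset.mem_powersetCard] at hs hs'
    exact hij (hs.2 ▸ hs'.2 ▸ rfl)

lemma count_moment (n d : ℕ) (hd : 1 ≤ d) :
    Nat.card {σ : Fin (n+1) → Bool // Ach (colF (Wb d n)) σ}
      = 2 * ∑ i ∈ Finset.range d, n.choose i := by
  classical
  have hbij : Function.Bijective
      (fun p : Bool × {s : Finset (Fin n) // s.card < d} =>
        (⟨sigmaOf p.1 p.2.1, ach_sigmaOf p.1 p.2.1 p.2.2⟩ :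
          {σ : Fin (n+1) → Bool // Ach (colF (Wb d n)) σ})) := by
    constructor
    · rintro ⟨b₁, s₁, hs₁⟩ ⟨b₂, s₂, hs₂⟩ heq
      have hfn : sigmaOf b₁ s₁ = sigmaOf b₂ s₂ := congrArg Subtype.val heq
      have hb : b₁ = b₂ := by
        have h0 := congrFun hfn ⟨0, Nat.succ_pos n⟩
        rwa [sigmaOf_zero b₁ s₁ _ rfl, sigmaOf_zero b₂ s₂ _ rfl] at h0
      have hset : s₁ = s₂ := by
        ext i
        rw [← sigmaOf_step b₁ s₁ i, ← sigmaOf_step b₂ s₂ i, hfn]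
      rw [Prod.ext_iff]
      exact ⟨hb, Subtype.ext hset⟩
    · rintro ⟨σ, hσ⟩
      refine ⟨(σ ⟨0, Nat.succ_pos n⟩,
        ⟨Finset.univ.filter fun i : Fin n => σ i.castSucc ≠ σ i.succ,
          changes_lt_of_ach hd σ hσ⟩), ?_⟩
      exact Subtype.ext (sigmaOf_reconstruct σ)
  rw [← Nat.card_eq_of_bijective _ hbij, Nat.card_prod, card_subtype_finsets n d]
  simp [Nat.card_eq_fintype_card]


end GnnAux
end

open Matrix GnnAux

/-- Optimal bound on the number of linear regions of a ReLU GNN layer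
`H ↦ ReLU(L(H) · W)` with invertible linear aggregation `L`:
(a) for every weight matrix `W` the number of regions is at most
`(2 Σ_{i<d} C(m−1, i))^{S₀}`, and (b) the bound is attained for some `W`. -/
theorem gnn_layer_linear_regions (S₀ d m : ℕ) (hd : 1 ≤ d) (hm : 1 ≤ m)
    (L : Matrix (Fin S₀) (Fin d) ℝ ≃ₗ[ℝ] Matrix (Fin S₀) (Fin d) ℝ) :
    (∀ W : Matrix (Fin d) (Fin m) ℝ,
      Nat.card (ConnectedComponents
        {H : Matrix (Fin S₀) (Fin d) ℝ // ∀ i j, (L H * W) i j ≠ 0})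
        ≤ (2 * ∑ i ∈ Finset.range d, (m - 1).choose i) ^ S₀) ∧
    (∃ W : Matrix (Fin d) (Fin m) ℝ,
      Nat.card (ConnectedComponents
        {H : Matrix (Fin S₀) (Fin d) ℝ // ∀ i j, (L H * W) i j ≠ 0})
        = (2 * ∑ i ∈ Finset.range d, (m - 1).choose i) ^ S₀) := by
  constructor
  · intro W
    rw [card_components L W]
    apply Nat.pow_le_pow_left
    exact cover_ub m hm (Fin d → ℝ) d (by simp) (colF W)
  · obtain ⟨n, rfl⟩ : ∃ n, m = n + 1 := ⟨m - 1, by omega⟩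
    refine ⟨Wb d n, ?_⟩
    rw [card_components L (Wb d n), count_moment n d hd]
    simp
end

section
/- Fix p ∈ ℕ and, for each n = 0,…,p, natural numbers S_n, and d_n ≥ 1, m_n ≥ 1, and an invertible real S_n×S_n matrix M_n. For weight matrices W_n ∈ ℝ^{d_n×m_n}, consider the region set R(W) = {(H₀,…,H_p) : H_n ∈ ℝ^{S_n×d_n} and (M_n · H_n · W_n)_{ij} ≠ 0 for all n, i, j}. Then: (a) for every choice of W₀,…,W_p, the number of connected components of R(W) is at most ∏_{n=0}^{p} (2 · Σ_{i=0}^{d_n−1} C(m_n−1, i))^{S_n}; and (b) there exist W₀,…,W_p for which equality holds. -/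
open Matrix Finset Polynomial

namespace SCNNProof

variable {V : Type*} [AddCommGroup V] [Module ℝ V]

lemma sign_add_of_abs_lt {a b : ℝ} (ha : a ≠ 0) (h : |b| < |a|) :
    a + b ≠ 0 ∧ ((0 < a + b) ↔ 0 < a) := by
  have hb1 : b < |a| := lt_of_le_of_lt (le_abs_self b) h
  have hb2 : -|a| < b := by
    have h1 := neg_abs_le b; linarith
  rcases ha.lt_or_gt with h' | h'
  · rw [abs_of_neg h'] at hb1 hb2
    exact ⟨ne_of_lt (by linarith), iff_of_false (by linarith) (by linarith)⟩
  · rw [abs_of_pos h'] at hb1 hb2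
    exact ⟨ne_of_gt (by linarith), iff_of_true (by linarith) h'⟩

/-- `x` realizes the sign pattern `σ` for the family of functionals `f`. -/
def Realizes {ι : Type*} (f : ι → V →ₗ[ℝ] ℝ) (x : V) (σ : ι → Bool) : Prop :=
  ∀ j, f j x ≠ 0 ∧ σ j = decide (0 < f j x)

/-- The set of realizable sign patterns. -/
def SignPat {ι : Type*} (f : ι → V →ₗ[ℝ] ℝ) : Set (ι → Bool) :=
  {σ | ∃ x, Realizes f x σ}

lemma realizes_iff {ι : Type*} {f : ι → V →ₗ[ℝ] ℝ} {x : V} {σ : ι → Bool} :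
    Realizes f x σ ↔ ∀ j, (σ j = true → 0 < f j x) ∧ (σ j = false → f j x < 0) := by
  constructor
  · intro h j
    obtain ⟨h1, h2⟩ := h j
    constructor
    · intro hb; rw [hb] at h2; exact of_decide_eq_true h2.symm
    · intro hb; rw [hb] at h2
      have h3 := of_decide_eq_false h2.symm
      exact lt_of_le_of_ne (not_lt.mp h3) h1
  · intro h j
    cases hb : σ j with
    | true =>
      have := (h j).1 hb
      exact ⟨ne_of_gt this, by simp [this]⟩
    | false =>
      have := (h j).2 hb
      exact ⟨ne_of_lt this, by simp [not_lt.mpr this.le]⟩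

lemma convex_realizes {ι : Type*} (f : ι → V →ₗ[ℝ] ℝ) (σ : ι → Bool) :
    Convex ℝ {x | Realizes f x σ} := by
  have hset : {x | Realizes f x σ} =
      ⋂ j, {x | (σ j = true → 0 < f j x) ∧ (σ j = false → f j x < 0)} := by
    ext x; simp only [Set.mem_setOf_eq, Set.mem_iInter, realizes_iff]
  rw [hset]
  refine convex_iInter fun j => ?_
  cases hb : σ j with
  | true =>
    have h2 : {x : V | (true = true → 0 < f j x) ∧ (true = false → f j x < 0)}
        = {x : V | 0 < f j x} := by ext x; simp
    rw [h2]; exact convex_halfSpace_gt (f j).isLinear 0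
  | false =>
    have h2 : {x : V | (false = true → 0 < f j x) ∧ (false = false → f j x < 0)}
        = {x : V | f j x < 0} := by ext x; simp
    rw [h2]; exact convex_halfSpace_lt (f j).isLinear 0

lemma realizes_perturb {ι : Type*} [Fintype ι] {f : ι → V →ₗ[ℝ] ℝ} {x : V} {σ : ι → Bool}
    (hx : Realizes f x σ) (u : V) :
    ∃ ε : ℝ, 0 < ε ∧ ∀ δ : ℝ, |δ| < ε → Realizes f (x + δ • u) σ := by
  classical
  set F : Finset ℝ := insert 1 (Finset.univ.image fun j => |f j x| / (|f j u| + 1)) with hF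
  have hne : F.Nonempty := ⟨1, Finset.mem_insert_self _ _⟩
  refine ⟨F.min' hne, ?_, ?_⟩
  · rw [Finset.lt_min'_iff]
    intro y hy
    rw [hF, Finset.mem_insert] at hy
    rcases hy with rfl | hy
    · norm_num
    · obtain ⟨j, -, rfl⟩ := Finset.mem_image.mp hy
      have := (hx j).1
      positivity
  · intro δ hδ j
    have hj : F.min' hne ≤ |f j x| / (|f j u| + 1) :=
      Finset.min'_le _ _ (Finset.mem_insert_of_mem (Finset.mem_image_of_mem _ (Finset.mem_univ j)))
    have h1 := (hx j).1
    have hu1 : (0:ℝ) < |f j u| + 1 := by positivity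
    have hlt : |δ * f j u| < |f j x| := by
      rw [abs_mul]
      calc |δ| * |f j u| ≤ |δ| * (|f j u| + 1) := by nlinarith [abs_nonneg δ]
        _ < (|f j x| / (|f j u| + 1)) * (|f j u| + 1) :=
            mul_lt_mul_of_pos_right (lt_of_lt_of_le hδ hj) hu1
        _ = |f j x| := div_mul_cancel₀ _ (ne_of_gt hu1)
    have key := sign_add_of_abs_lt h1 hlt
    have heq : f j (x + δ • u) = f j x + δ * f j u := by
      simp [map_add, _root_.map_smul, smul_eq_mul]
    rw [heq]
    exact ⟨key.1, by rw [(hx j).2]; exact (decide_eq_decide.mpr key.2).symm⟩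

lemma exists_functional_ne {f0 : V →ₗ[ℝ] ℝ} (hf0 : f0 ≠ 0) : ∃ u, f0 u ≠ 0 := by
  by_contra h'; push_neg at h'
  exact hf0 (LinearMap.ext fun v => by simp [h' v])

lemma exists_realizes_ne {ι : Type*} [Fintype ι] {g : ι → V →ₗ[ℝ] ℝ} {τ : ι → Bool}
    (h : τ ∈ SignPat g) (f0 : V →ₗ[ℝ] ℝ) (hf0 : f0 ≠ 0) :
    ∃ y, Realizes g y τ ∧ f0 y ≠ 0 := by
  obtain ⟨x, hx⟩ := h
  by_cases hx0 : f0 x ≠ 0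
  · exact ⟨x, hx, hx0⟩
  push_neg at hx0
  obtain ⟨u, hu⟩ := exists_functional_ne hf0
  obtain ⟨ε, hε, hpert⟩ := realizes_perturb hx u
  refine ⟨x + (ε / 2) • u, hpert _ (by rw [abs_of_pos (by linarith)]; linarith), ?_⟩
  have : f0 (x + (ε / 2) • u) = ε / 2 * f0 u := by
    simp [map_add, _root_.map_smul, smul_eq_mul, hx0]
  rw [this]
  exact mul_ne_zero (by positivity) hu

lemma card_signPat_succ {m : ℕ} (f : Fin (m + 1) → V →ₗ[ℝ] ℝ) (hf : f 0 ≠ 0) :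
    Nat.card (SignPat f) =
      Nat.card (SignPat fun j : Fin m => f j.succ) +
      Nat.card (SignPat fun j : Fin m =>
        (f j.succ).domRestrict (LinearMap.ker (f 0))) := by
  classical
  set g : Fin m → V →ₗ[ℝ] ℝ := fun j => f j.succ with hg
  set gK : Fin m → ↥(LinearMap.ker (f 0)) →ₗ[ℝ] ℝ :=
    (fun j => (f j.succ).domRestrict (LinearMap.ker (f 0))) with hgK
  set P : Set (Fin (m + 1) → Bool) := SignPat f with hP
  set Qt : Set (Fin m → Bool) := {τ | Fin.cons true τ ∈ P} with hQt
  set Qf : Set (Fin m → Bool) := {τ | Fin.cons false τ ∈ P} with hQf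
  -- tail realizes
  have tail_real : ∀ (b : Bool) (τ : Fin m → Bool) (x : V),
      Realizes f x (Fin.cons b τ) → Realizes g x τ := by
    intro b τ x hx j
    have := hx j.succ
    rwa [Fin.cons_succ] at this
  have cons_real : ∀ (τ : Fin m → Bool) (y : V), Realizes g y τ → f 0 y ≠ 0 →
      Realizes f y (Fin.cons (decide (0 < f 0 y)) τ) := by
    intro τ y hy hy0 j
    refine Fin.cases ?_ (fun i => ?_) j
    · rw [Fin.cons_zero]; exact ⟨hy0, rfl⟩
    · rw [Fin.cons_succ]; exact hy i
  -- union
  have hunion : Qt ∪ Qf = SignPat g := by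
    ext τ
    constructor
    · rintro (h | h) <;> exact ⟨_, tail_real _ _ _ (Classical.choose_spec h)⟩
    · intro h
      obtain ⟨y, hy, hy0⟩ := exists_realizes_ne h (f 0) hf
      have := cons_real τ y hy hy0
      cases hb : decide (0 < f 0 y)
      · right; rw [hb] at this; exact ⟨y, this⟩
      · left; rw [hb] at this; exact ⟨y, this⟩
  -- intersection
  have hinter : Qt ∩ Qf = SignPat gK := by
    ext τ
    constructor
    · rintro ⟨⟨x, hx⟩, ⟨y, hy⟩⟩
      have hx0 : 0 < f 0 x := by
        have := (hx 0).2; rw [Fin.cons_zero] at this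
        exact of_decide_eq_true this.symm
      have hy0 : f 0 y < 0 := by
        have h2 := (hy 0).2; rw [Fin.cons_zero] at h2
        have := of_decide_eq_false h2.symm
        exact lt_of_le_of_ne (not_lt.mp this) (hy 0).1
      have hden : 0 < f 0 x - f 0 y := by linarith
      set t : ℝ := f 0 x / (f 0 x - f 0 y) with ht
      have ht0 : 0 ≤ t := by positivity
      have ht1 : t ≤ 1 := by rw [ht, div_le_one hden]; linarith
      have hxr : x ∈ {v : V | Realizes g v τ} := tail_real _ _ _ hx
      have hyr : y ∈ {v : V | Realizes g v τ} := tail_real _ _ _ hy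
      have hz := convex_realizes g τ hxr hyr (by linarith : (0:ℝ) ≤ 1 - t) ht0 (by ring)
      set z : V := (1 - t) • x + t • y with hzdef
      have hz0 : f 0 z = 0 := by
        rw [hzdef]
        simp only [map_add, _root_.map_smul, smul_eq_mul]
        rw [ht]; field_simp; ring
      refine ⟨⟨z, LinearMap.mem_ker.mpr hz0⟩, fun j => ?_⟩
      have := hz j
      exact ⟨this.1, this.2⟩
    · rintro ⟨⟨z, hzK⟩, hz⟩
      have hz0 : f 0 z = 0 := LinearMap.mem_ker.mp hzK
      have hzg : Realizes g z τ := fun j => hz j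
      obtain ⟨u, hu⟩ := exists_functional_ne hf
      set u' : V := (f 0 u)⁻¹ • u with hu'
      have hu'1 : f 0 u' = 1 := by
        rw [hu', _root_.map_smul, smul_eq_mul, inv_mul_cancel₀ hu]
      obtain ⟨ε, hε, hpert⟩ := realizes_perturb hzg u'
      have habs : |ε / 2| < ε := by rw [abs_of_pos (by linarith)]; linarith
      have habs' : |(-(ε / 2))| < ε := by rw [abs_neg, abs_of_pos (by linarith)]; linarith
      have hf0p : f 0 (z + (ε / 2) • u') = ε / 2 := by
        simp [map_add, _root_.map_smul, smul_eq_mul, hz0, hu'1]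
      have hf0n : f 0 (z + (-(ε / 2)) • u') = -(ε / 2) := by
        simp [map_add, _root_.map_smul, smul_eq_mul, hz0, hu'1]
      constructor
      · refine ⟨z + (ε / 2) • u', fun j => ?_⟩
        refine Fin.cases ?_ (fun i => ?_) j
        · rw [Fin.cons_zero, hf0p]
          refine ⟨ne_of_gt (by positivity), ?_⟩
          symm; rw [decide_eq_true_eq]; positivity
        · rw [Fin.cons_succ]; exact hpert _ habs i
      · refine ⟨z + (-(ε / 2)) • u', fun j => ?_⟩
        refine Fin.cases ?_ (fun i => ?_) j
        · rw [Fin.cons_zero, hf0n]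
          refine ⟨ne_of_lt (by linarith), ?_⟩
          symm; rw [decide_eq_false_iff_not]
          exact not_lt.mpr (by linarith)
        · rw [Fin.cons_succ]; exact hpert _ habs' i
  -- split P by value at 0
  set consT : (Fin m → Bool) → (Fin (m + 1) → Bool) := fun τ => Fin.cons true τ with hconsT
  set consF : (Fin m → Bool) → (Fin (m + 1) → Bool) := fun τ => Fin.cons false τ with hconsF
  have hinjT : Function.Injective consT :=
    Fin.cons_right_injective (α := fun _ : Fin (m + 1) => Bool) true
  have hinjF : Function.Injective consF :=
    Fin.cons_right_injective (α := fun _ : Fin (m + 1) => Bool) false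
  have hsplit : P = (consT '' Qt) ∪ (consF '' Qf) := by
    ext σ
    constructor
    · intro hσ
      have hcons : Fin.cons (σ 0) (fun j => σ j.succ) = σ := by
        funext j; refine Fin.cases ?_ (fun i => ?_) j
        · rw [Fin.cons_zero]
        · rw [Fin.cons_succ]
      cases hb : σ 0
      · right
        exact ⟨fun j => σ j.succ, by rw [hQf]; show Fin.cons false _ ∈ P; rw [← hb, hcons]; exact hσ,
          by show Fin.cons false (fun j => σ j.succ) = σ; rw [← hb]; exact hcons⟩
      · left
        exact ⟨fun j => σ j.succ, by rw [hQt]; show Fin.cons true _ ∈ P; rw [← hb, hcons]; exact hσ,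
          by show Fin.cons true (fun j => σ j.succ) = σ; rw [← hb]; exact hcons⟩
    · rintro (⟨τ, hτ, rfl⟩ | ⟨τ, hτ, rfl⟩) <;> exact hτ
  have hdisj : Disjoint (consT '' Qt) (consF '' Qf) := by
    rw [Set.disjoint_left]
    rintro σ ⟨τ, -, rfl⟩ ⟨τ', -, hτ'⟩
    have h0 := congrFun hτ' 0
    simp [hconsT, hconsF] at h0
  have hcard : Nat.card P = Nat.card Qt + Nat.card Qf := by
    rw [Nat.card_coe_set_eq, Nat.card_coe_set_eq, Nat.card_coe_set_eq, hsplit,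
      Set.ncard_union_eq hdisj (Set.toFinite _) (Set.toFinite _),
      Set.ncard_image_of_injective _ hinjT, Set.ncard_image_of_injective _ hinjF]
  rw [hcard]
  have h2 : Nat.card ↥Qt + Nat.card ↥Qf = Nat.card ↥(Qt ∪ Qf) + Nat.card ↥(Qt ∩ Qf) := by
    simp only [Nat.card_coe_set_eq]
    exact (Set.ncard_union_add_ncard_inter _ _ (Set.toFinite _) (Set.toFinite _)).symm
  rw [h2, hunion, hinter]

lemma sum_choose_zero : ∀ D : ℕ, 1 ≤ D → ∑ i ∈ range D, Nat.choose 0 i = 1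
  | 1, _ => by simp
  | (e + 2), _ => by
    rw [Finset.sum_range_succ, sum_choose_zero (e + 1) (by omega), Nat.choose_zero_succ]

lemma sum_choose_pascal (M : ℕ) : ∀ e : ℕ,
    ∑ i ∈ range (e + 1), Nat.choose (M + 1) i
      = ∑ i ∈ range (e + 1), Nat.choose M i + ∑ i ∈ range e, Nat.choose M i := by
  intro e
  induction e with
  | zero => simp
  | succ e ih =>
    rw [Finset.sum_range_succ (f := fun i => Nat.choose (M + 1) i) (n := e + 1), ih,
      Finset.sum_range_succ (f := fun i => Nat.choose M i) (n := e + 1),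
      Finset.sum_range_succ (f := fun i => Nat.choose M i) (n := e),
      Nat.choose_succ_succ (M) (e)]
    ring

lemma signPat_empty_of_zero {m : ℕ} {f : Fin m → V →ₗ[ℝ] ℝ} {j0 : Fin m} (h : f j0 = 0) :
    SignPat f = ∅ := by
  ext σ
  simp only [Set.mem_empty_iff_false, iff_false]
  rintro ⟨x, hx⟩
  exact (hx j0).1 (by rw [h]; rfl)

lemma signPat_empty_of_subsingleton {m : ℕ} [Subsingleton V] (f : Fin (m + 1) → V →ₗ[ℝ] ℝ) :
    SignPat f = ∅ :=
  signPat_empty_of_zero (j0 := 0) (LinearMap.ext fun x => by rw [Subsingleton.elim x 0]; simp)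

lemma rank_ker_functional {f0 : V →ₗ[ℝ] ℝ} [FiniteDimensional ℝ V] (hf0 : f0 ≠ 0) :
    Module.finrank ℝ ↥(LinearMap.ker f0) + 1 = Module.finrank ℝ V := by
  obtain ⟨u, hu⟩ := exists_functional_ne hf0
  have hsurj : Function.Surjective f0 := by
    intro c
    refine ⟨(c / f0 u) • u, ?_⟩
    rw [_root_.map_smul, smul_eq_mul, div_mul_cancel₀ _ hu]
  have := LinearMap.finrank_range_add_finrank_ker f0
  rw [LinearMap.range_eq_top.mpr hsurj, finrank_top, Module.finrank_self] at this
  omega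

theorem card_signPat_le : ∀ (m : ℕ), 1 ≤ m → ∀ (d : ℕ) (V : Type) [AddCommGroup V] [Module ℝ V]
    [FiniteDimensional ℝ V], Module.finrank ℝ V ≤ d → ∀ f : Fin m → V →ₗ[ℝ] ℝ,
    Nat.card (SignPat f) ≤ 2 * ∑ i ∈ range d, Nat.choose (m - 1) i
  | 1, _ => by
    intro d V _ _ _ hV f
    by_cases hd : 1 ≤ d
    · have h2 : Nat.card (SignPat f) ≤ Nat.card (Fin 1 → Bool) :=
        Nat.card_le_card_of_injective Subtype.val Subtype.val_injective
      have h3 : Nat.card (Fin 1 → Bool) = 2 := by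
        simp [Nat.card_eq_fintype_card]
      rw [show (1 - 1 : ℕ) = 0 from rfl, sum_choose_zero d hd]
      omega
    · have hd0 : d = 0 := by omega
      subst hd0
      have hzero : Module.finrank ℝ V = 0 := by omega
      have : Subsingleton V := Module.finrank_zero_iff.mp hzero
      rw [signPat_empty_of_subsingleton f]
      simp
  | (k + 2), _ => by
    intro d V _ _ _ hV f
    by_cases hf0 : f 0 = 0
    · rw [signPat_empty_of_zero hf0]; simp
    · have hrk := rank_ker_functional hf0
      have hd : 1 ≤ d := by omega
      rw [card_signPat_succ f hf0]
      have h1 := card_signPat_le (k + 1) (by omega) d V hV (fun j => f j.succ)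
      have h2 := card_signPat_le (k + 1) (by omega) (d - 1) ↥(LinearMap.ker (f 0))
        (by omega) (fun j => (f j.succ).domRestrict (LinearMap.ker (f 0)))
      have hpas := sum_choose_pascal k (d - 1)
      have hd' : d - 1 + 1 = d := by omega
      rw [hd'] at hpas
      simp only [show k + 2 - 1 = k + 1 from rfl] at *
      simp only [show k + 1 - 1 = k from rfl] at h1 h2
      omega

/-- General position, formulated via supported linear relations. -/
def GenPos {m : ℕ} (d : ℕ) (f : Fin m → V →ₗ[ℝ] ℝ) : Prop :=
  ∀ c : Fin m → ℝ, (Finset.univ.filter fun j => c j ≠ 0).card ≤ d →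
    (∑ j, c j • f j) = 0 → ∀ j, c j = 0

lemma genPos_ne_zero {m d : ℕ} {f : Fin m → V →ₗ[ℝ] ℝ} (hgp : GenPos d f) (hd : 1 ≤ d)
    (j : Fin m) : f j ≠ 0 := by
  intro h
  classical
  set cvec : Fin m → ℝ := Pi.single j 1 with hcvec
  have hcard : (Finset.univ.filter fun j' => cvec j' ≠ 0).card ≤ d := by
    have : (Finset.univ.filter fun j' => cvec j' ≠ 0) ⊆ {j} := by
      intro j' hj'
      simp only [Finset.mem_filter] at hj'
      rcases eq_or_ne j' j with rfl | hne
      · simp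
      · exfalso; exact hj'.2 (by rw [hcvec]; exact Pi.single_eq_of_ne hne 1)
    calc _ ≤ ({j} : Finset (Fin m)).card := Finset.card_le_card this
      _ = 1 := Finset.card_singleton j
      _ ≤ d := hd
  have hsum : (∑ j', cvec j' • f j') = 0 := by
    rw [Finset.sum_eq_single j]
    · simp [hcvec, h]
    · intro b _ hb; rw [hcvec]; rw [Pi.single_eq_of_ne hb]; simp
    · intro hj; exact absurd (Finset.mem_univ j) hj
  have := hgp _ hcard hsum j
  rw [hcvec] at this
  simp at this

lemma card_filter_cons {m : ℕ} (b : ℝ) (c : Fin m → ℝ) :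
    (Finset.univ.filter fun j : Fin (m + 1) => (Fin.cons b c : Fin (m + 1) → ℝ) j ≠ 0).card
      = (if b ≠ 0 then 1 else 0) + (Finset.univ.filter fun j => c j ≠ 0).card := by
  classical
  rw [Finset.card_filter, Finset.card_filter, Fin.sum_univ_succ]
  simp only [Fin.cons_zero, Fin.cons_succ]

lemma exists_smul_of_ker {φ f0 : V →ₗ[ℝ] ℝ} (hf0 : f0 ≠ 0)
    (h : ∀ z ∈ LinearMap.ker f0, φ z = 0) : ∃ a : ℝ, φ = a • f0 := by
  obtain ⟨u, hu⟩ := exists_functional_ne hf0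
  refine ⟨φ u / f0 u, LinearMap.ext fun x => ?_⟩
  have hker : x - (f0 x / f0 u) • u ∈ LinearMap.ker f0 := by
    rw [LinearMap.mem_ker, map_sub, _root_.map_smul, smul_eq_mul, div_mul_cancel₀ _ hu, sub_self]
  have h2 := h _ hker
  rw [map_sub, _root_.map_smul, smul_eq_mul, sub_eq_zero] at h2
  rw [LinearMap.smul_apply, smul_eq_mul, h2]
  field_simp

theorem card_signPat_eq : ∀ (m : ℕ), 1 ≤ m → ∀ (d : ℕ) (V : Type) [AddCommGroup V] [Module ℝ V]
    [FiniteDimensional ℝ V], Module.finrank ℝ V = d → ∀ f : Fin m → V →ₗ[ℝ] ℝ, GenPos d f →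
    Nat.card (SignPat f) = 2 * ∑ i ∈ range d, Nat.choose (m - 1) i
  | 1, _ => by
    intro d V _ _ _ hV f hgp
    by_cases hd : 1 ≤ d
    · have hf0 : f 0 ≠ 0 := genPos_ne_zero hgp hd 0
      obtain ⟨u, hu⟩ := exists_functional_ne hf0
      have huniv : SignPat f = Set.univ := by
        ext σ
        simp only [Set.mem_univ, iff_true]
        refine ⟨((if σ 0 then 1 else -1) / f 0 u) • u, fun j => ?_⟩
        have hj : j = 0 := Subsingleton.elim j 0
        subst hj
        have hfx : f 0 (((if σ 0 then 1 else -1) / f 0 u) • u)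
            = (if σ 0 then 1 else -1 : ℝ) := by
          rw [_root_.map_smul, smul_eq_mul, div_mul_cancel₀ _ hu]
        rw [hfx]
        cases hb : σ 0 <;> simp [hb] <;> norm_num
      rw [huniv, show (1 - 1 : ℕ) = 0 from rfl, sum_choose_zero d hd]
      rw [Nat.card_coe_set_eq, Set.ncard_univ]
      simp [Nat.card_eq_fintype_card]
    · have hd0 : d = 0 := by omega
      subst hd0
      have : Subsingleton V := Module.finrank_zero_iff.mp hV
      rw [signPat_empty_of_subsingleton f]
      simp
  | (k + 2), _ => by
    intro d V _ _ _ hV f hgp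
    rcases Nat.eq_zero_or_pos d with rfl | hd
    · have : Subsingleton V := Module.finrank_zero_iff.mp hV
      rw [signPat_empty_of_subsingleton f]
      simp
    · classical
      have hf0 : f 0 ≠ 0 := genPos_ne_zero hgp hd 0
      have hrk := rank_ker_functional hf0
      rw [card_signPat_succ f hf0]
      -- deleted family is in general position
      have hgp_g : GenPos d (fun j : Fin (k + 1) => f j.succ) := by
        intro c hc hsum j
        have hcard : (Finset.univ.filter fun j' : Fin (k + 2) =>
            (Fin.cons 0 c : Fin (k + 2) → ℝ) j' ≠ 0).card ≤ d := by
          rw [card_filter_cons]; simpa using hc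
        have hsum' : (∑ j', (Fin.cons 0 c : Fin (k + 2) → ℝ) j' • f j') = 0 := by
          rw [Fin.sum_univ_succ]
          simpa [Fin.cons_zero, Fin.cons_succ] using hsum
        have := hgp _ hcard hsum' j.succ
        simpa [Fin.cons_succ] using this
      -- restricted family is in general position in the kernel
      have hgp_K : GenPos (d - 1)
          (fun j : Fin (k + 1) => (f j.succ).domRestrict (LinearMap.ker (f 0))) := by
        intro c hc hsum j
        have hker : ∀ z ∈ LinearMap.ker (f 0), (∑ j', c j' • f j'.succ) z = 0 := by
          intro z hz
          have := congrArg (fun (φ : ↥(LinearMap.ker (f 0)) →ₗ[ℝ] ℝ) => φ ⟨z, hz⟩) hsum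
          simpa [LinearMap.sum_apply, LinearMap.smul_apply, LinearMap.domRestrict_apply,
            smul_eq_mul] using this
        obtain ⟨a, ha⟩ := exists_smul_of_ker hf0 hker
        have hcard : (Finset.univ.filter fun j' : Fin (k + 2) =>
            (Fin.cons (-a) c : Fin (k + 2) → ℝ) j' ≠ 0).card ≤ d := by
          rw [card_filter_cons]
          have : (if (-a : ℝ) ≠ 0 then 1 else 0) ≤ 1 := by split <;> omega
          omega
        have hsum' : (∑ j', (Fin.cons (-a) c : Fin (k + 2) → ℝ) j' • f j') = 0 := by
          rw [Fin.sum_univ_succ]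
          simp only [Fin.cons_zero, Fin.cons_succ]
          rw [show (∑ j' : Fin (k+1), c j' • f j'.succ) = a • f 0 from ha]
          exact (add_smul (-a) a (f 0)).symm.trans (by rw [neg_add_cancel, zero_smul])
        have := hgp _ hcard hsum' j.succ
        simpa [Fin.cons_succ] using this
      have h1 := card_signPat_eq (k + 1) (by omega) d V hV (fun j => f j.succ) hgp_g
      have h2 := card_signPat_eq (k + 1) (by omega) (d - 1) ↥(LinearMap.ker (f 0))
        (by omega) (fun j => (f j.succ).domRestrict (LinearMap.ker (f 0))) hgp_K
      have hpas := sum_choose_pascal k (d - 1)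
      have hd' : d - 1 + 1 = d := by omega
      rw [hd'] at hpas
      simp only [show k + 2 - 1 = k + 1 from rfl] at *
      simp only [show k + 1 - 1 = k from rfl] at h1 h2
      omega

/-- The functional given by the `j`-th column of a weight matrix. -/
def colF {D M : ℕ} (W : Matrix (Fin D) (Fin M) ℝ) : Fin M → ((Fin D → ℝ) →ₗ[ℝ] ℝ) :=
  fun j => (LinearMap.proj j).comp W.vecMulLinear

lemma colF_apply {D M : ℕ} (W : Matrix (Fin D) (Fin M) ℝ) (j : Fin M) (x : Fin D → ℝ) :
    colF W j x = ∑ k, x k * W k j := by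
  simp [colF, Matrix.vecMulLinear_apply, Matrix.vecMul, dotProduct]

lemma genPos_vandermonde (D M : ℕ) (hD : 1 ≤ D) :
    GenPos D (colF (Matrix.of fun (k : Fin D) (j : Fin M) => ((j : ℕ) + 1 : ℝ) ^ (k : ℕ))) := by
  classical
  intro c hcard hsum j0
  by_contra hc0
  set t : Fin M → ℝ := fun j => ((j : ℕ) + 1 : ℝ) with ht
  set W : Matrix (Fin D) (Fin M) ℝ :=
    Matrix.of (fun (k : Fin D) (j : Fin M) => ((j : ℕ) + 1 : ℝ) ^ (k : ℕ)) with hW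
  have hk : ∀ k : Fin D, ∑ j, c j * t j ^ (k : ℕ) = 0 := by
    intro k
    set xk : Fin D → ℝ := Pi.single k 1 with hxk
    have h1 := congrArg (fun (φ : (Fin D → ℝ) →ₗ[ℝ] ℝ) => φ xk) hsum
    simp only [LinearMap.sum_apply, LinearMap.smul_apply, smul_eq_mul, LinearMap.zero_apply,
      colF_apply] at h1
    have h2 : ∀ j : Fin M, (∑ k', xk k' * W k' j) = W k j := by
      intro j
      rw [Finset.sum_eq_single k]
      · simp [hxk]
      · intro b _ hb; rw [hxk, Pi.single_eq_of_ne hb]; ring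
      · intro hk'; exact absurd (Finset.mem_univ k) hk'
    rw [show (0:ℝ) = ∑ j : Fin M, c j * W k j from ?_]
    · exact Finset.sum_congr rfl fun j _ => rfl
    · rw [← h1]
      exact (Finset.sum_congr rfl fun j _ => by rw [h2 j]).symm
  set s : Finset (Fin M) := Finset.univ.filter fun j => c j ≠ 0 with hs
  have hj0s : j0 ∈ s := by rw [hs]; simp [hc0]
  set Pq : Polynomial ℝ := ∏ j ∈ s.erase j0, (X - C (t j)) with hPq
  have hdeg : Pq.natDegree < D := by
    have h1 : Pq.natDegree = (s.erase j0).card := by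
      rw [hPq, natDegree_prod_of_monic _ _ (fun j _ => monic_X_sub_C (t j))]
      simp [natDegree_X_sub_C]
    rw [h1, Finset.card_erase_of_mem hj0s]
    have : 1 ≤ s.card := Finset.card_pos.mpr ⟨j0, hj0s⟩
    omega
  have hinj : ∀ j j' : Fin M, t j = t j' → j = j' := by
    intro j j' h
    rw [ht] at h
    have : ((j : ℕ) : ℝ) = ((j' : ℕ) : ℝ) := by simpa using h
    exact Fin.ext (Nat.cast_injective this)
  have key : ∑ j, c j * Pq.eval (t j) = 0 := by
    have h1 : ∀ j : Fin M, Pq.eval (t j) = ∑ i ∈ range D, Pq.coeff i * t j ^ i :=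
      fun j => eval_eq_sum_range' hdeg (t j)
    calc ∑ j, c j * Pq.eval (t j)
        = ∑ j, ∑ i ∈ range D, Pq.coeff i * (c j * t j ^ i) := by
          refine Finset.sum_congr rfl fun j _ => ?_
          rw [h1 j, Finset.mul_sum]
          exact Finset.sum_congr rfl fun i _ => by ring
      _ = ∑ i ∈ range D, Pq.coeff i * ∑ j, c j * t j ^ i := by
          rw [Finset.sum_comm]
          exact Finset.sum_congr rfl fun i _ => by rw [Finset.mul_sum]
      _ = 0 := by
          refine Finset.sum_eq_zero fun i hi => ?_
          rw [show (∑ j, c j * t j ^ i) = 0 from ?_, mul_zero]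
          have := hk ⟨i, Finset.mem_range.mp hi⟩
          simpa using this
  have key2 : ∑ j, c j * Pq.eval (t j) = c j0 * Pq.eval (t j0) := by
    refine Finset.sum_eq_single j0 (fun b _ hb => ?_) (fun h => absurd (Finset.mem_univ j0) h)
    by_cases hcb : c b = 0
    · rw [hcb, zero_mul]
    · have hbmem : b ∈ s.erase j0 := by
        rw [Finset.mem_erase]; exact ⟨hb, by rw [hs]; simp [hcb]⟩
      have : Pq.eval (t b) = 0 := by
        rw [hPq, eval_prod]
        exact Finset.prod_eq_zero hbmem (by simp)
      rw [this, mul_zero]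
  have hPj0 : Pq.eval (t j0) ≠ 0 := by
    rw [hPq, eval_prod]
    refine Finset.prod_ne_zero_iff.mpr fun j hj => ?_
    simp only [eval_sub, eval_X, eval_C]
    rw [sub_ne_zero]
    intro h
    exact (Finset.mem_erase.mp hj).1 (hinj j j0 h.symm)
  rw [key2] at key
  exact hc0 (by rcases mul_eq_zero.mp key with h | h; exact h; exact absurd h hPj0)

lemma card_components {ι : Type*} {V : Type*} [AddCommGroup V] [Module ℝ V]
    [TopologicalSpace V] [IsTopologicalAddGroup V] [ContinuousSMul ℝ V]
    (f : ι → V →ₗ[ℝ] ℝ) (hf : ∀ j, Continuous (f j))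
    (P : V → Prop) (hP : ∀ x, P x ↔ ∀ j, f j x ≠ 0) :
    Nat.card (ConnectedComponents {x : V // P x}) = Nat.card (SignPat f) := by
  classical
  set φ : {x : V // P x} → ι → Bool := fun x j => decide (0 < f j x.1) with hφ
  have hopen : ∀ (j : ι) (b : Bool), IsOpen {x : {x : V // P x} | φ x j = b} := by
    intro j b
    cases b
    · have : {x : {x : V // P x} | φ x j = false} = Subtype.val ⁻¹' (f j ⁻¹' Set.Iio 0) := by
        ext x
        simp only [hφ, Set.mem_setOf_eq, decide_eq_false_iff_not, not_lt, Set.mem_preimage,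
          Set.mem_Iio]
        constructor
        · intro h; exact lt_of_le_of_ne h ((hP x.1).mp x.2 j)
        · intro h; exact le_of_lt h
      rw [this]
      exact (isOpen_Iio.preimage (hf j)).preimage continuous_subtype_val
    · have : {x : {x : V // P x} | φ x j = true} = Subtype.val ⁻¹' (f j ⁻¹' Set.Ioi 0) := by
        ext x
        simp [hφ]
      rw [this]
      exact (isOpen_Ioi.preimage (hf j)).preimage continuous_subtype_val
  have hφc : Continuous φ := by
    refine continuous_pi fun j => ?_
    rw [continuous_discrete_rng]
    intro b
    exact hopen j b
  set Φ : ConnectedComponents {x : V // P x} → ι → Bool := hφc.connectedComponentsLift with hΦ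
  have hΦcoe : ∀ x : {x : V // P x}, Φ (ConnectedComponents.mk x) = φ x := fun x =>
    hφc.connectedComponentsLift_apply_coe x
  have hreal : ∀ x : {x : V // P x}, Realizes f x.1 (φ x) := fun x j => ⟨(hP x.1).mp x.2 j, rfl⟩
  have hmem : ∀ x : {x : V // P x}, φ x ∈ SignPat f := fun x => ⟨x.1, hreal x⟩
  have hΦmem : ∀ a : ConnectedComponents {x : V // P x}, Φ a ∈ SignPat f := by
    intro a
    obtain ⟨x, rfl⟩ := ConnectedComponents.surjective_coe a
    rw [hΦcoe]
    exact hmem x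
  have hΦinj : Function.Injective Φ := by
    intro a b hab
    obtain ⟨x, rfl⟩ := ConnectedComponents.surjective_coe a
    obtain ⟨y, rfl⟩ := ConnectedComponents.surjective_coe b
    rw [hΦcoe, hΦcoe] at hab
    set R : Set V := {v | Realizes f v (φ x)} with hR
    have hxR : x.1 ∈ R := hreal x
    have hyR : y.1 ∈ R := by
      rw [hR]
      intro j
      exact ⟨(hP y.1).mp y.2 j, by rw [hab]⟩
    have hRX : R ⊆ Set.range ((↑) : {x : V | P x} → V) := by
      intro v hv
      exact ⟨⟨v, (hP v).mpr fun j => (hv j).1⟩, rfl⟩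
    have himg : ((↑) : {x : V | P x} → V) '' (((↑) : {x : V | P x} → V) ⁻¹' R) = R :=
      Set.image_preimage_eq_of_subset hRX
    have hpre : IsPreconnected (((↑) : {x : V | P x} → V) ⁻¹' R) := by
      have h2 := Topology.IsInducing.subtypeVal (t := {x : V | P x})
        |>.isPreconnected_image (s := ((↑) : {x : V | P x} → V) ⁻¹' R)
      rw [himg] at h2
      exact h2.mp (convex_realizes f (φ x)).isPreconnected
    have hsub : (((↑) : {x : V | P x} → V) ⁻¹' R) ⊆ connectedComponent x :=
      hpre.subset_connectedComponent hxR
    exact ConnectedComponents.coe_eq_coe.mpr (connectedComponent_eq (hsub hyR))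
  have hΦsurj : ∀ σ ∈ SignPat f, ∃ a, Φ a = σ := by
    rintro σ ⟨x, hx⟩
    refine ⟨ConnectedComponents.mk ⟨x, (hP x).mpr fun j => (hx j).1⟩, ?_⟩
    rw [hΦcoe]
    funext j
    exact ((hx j).2).symm
  have : ConnectedComponents {x : V // P x} ≃ ↥(SignPat f) := by
    refine Equiv.ofBijective (fun a => ⟨Φ a, hΦmem a⟩) ⟨?_, ?_⟩
    · intro a b hab
      exact hΦinj (congrArg Subtype.val hab)
    · rintro ⟨σ, hσ⟩
      obtain ⟨a, ha⟩ := hΦsurj σ hσ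
      exact ⟨a, Subtype.ext ha⟩
  exact Nat.card_congr this

section Key
variable {p : ℕ} (S d m : Fin (p + 1) → ℕ)
  (Mn : ∀ n, Matrix (Fin (S n)) (Fin (S n)) ℝ)

/-- The linear map extracting the `i`-th row of `Mn n * H n`. -/
def rowMap (n : Fin (p + 1)) (i : Fin (S n)) :
    ((∀ n', Matrix (Fin (S n')) (Fin (d n')) ℝ) →ₗ[ℝ] (Fin (d n) → ℝ)) where
  toFun H := fun k => (Mn n * H n) i k
  map_add' H H' := by
    funext k
    show (Mn n * (H n + H' n)) i k = _
    rw [Matrix.mul_add]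
    rfl
  map_smul' r H := by
    funext k
    show (Mn n * (r • H n)) i k = _
    rw [Matrix.mul_smul]
    rfl

/-- All entry functionals of the layer, indexed by a sigma type. -/
def entryF (W : ∀ n, Matrix (Fin (d n)) (Fin (m n)) ℝ)
    (t : Σ n : Fin (p + 1), Fin (S n) × Fin (m n)) :
    ((∀ n', Matrix (Fin (S n')) (Fin (d n')) ℝ) →ₗ[ℝ] ℝ) :=
  (colF (W t.1) t.2.2).comp (rowMap S d Mn t.1 t.2.1)

lemma entryF_apply (W : ∀ n, Matrix (Fin (d n)) (Fin (m n)) ℝ)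
    (t : Σ n : Fin (p + 1), Fin (S n) × Fin (m n))
    (H : ∀ n', Matrix (Fin (S n')) (Fin (d n')) ℝ) :
    entryF S d m Mn W t H = (Mn t.1 * H t.1 * W t.1) t.2.1 t.2.2 := by
  obtain ⟨n, i, j⟩ := t
  show colF (W n) j (fun k => (Mn n * H n) i k) = _
  rw [colF_apply]
  rw [Matrix.mul_apply]

lemma key_card (hMn : ∀ n, IsUnit (Mn n)) (W : ∀ n, Matrix (Fin (d n)) (Fin (m n)) ℝ) :
    Nat.card (ConnectedComponents {H : ∀ n, Matrix (Fin (S n)) (Fin (d n)) ℝ //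
        ∀ n i j, (Mn n * H n * W n) i j ≠ 0})
      = ∏ n, (Nat.card (SignPat (colF (W n)))) ^ S n := by
  classical
  rw [card_components (entryF S d m Mn W)
    (fun t => LinearMap.continuous_of_finiteDimensional _)
    (fun H => ∀ n i j, (Mn n * H n * W n) i j ≠ 0) ?_]
  · -- factorization
    have E : ↥(SignPat (entryF S d m Mn W)) ≃
        ∀ n, Fin (S n) → ↥(SignPat (colF (W n))) :=
    { toFun := fun σ => fun n i => ⟨fun j => σ.1 ⟨n, i, j⟩, by
        obtain ⟨H, hH⟩ := σ.2
        exact ⟨rowMap S d Mn n i H, fun j => hH ⟨n, i, j⟩⟩⟩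
      invFun := fun τ => ⟨fun t => (τ t.1 t.2.1).1 t.2.2, by
        have hwit := fun n i => (τ n i).2
        choose x hx using hwit
        refine ⟨fun n => (Mn n)⁻¹ * Matrix.of (fun i k => x n i k), ?_⟩
        rintro ⟨n, i, j⟩
        have hrow : rowMap S d Mn n i
            (fun n' => (Mn n')⁻¹ * Matrix.of (fun i k => x n' i k)) = x n i := by
          funext k
          show (Mn n * ((Mn n)⁻¹ * Matrix.of (fun i k => x n i k))) i k = x n i k
          rw [← Matrix.mul_assoc,
            Matrix.mul_nonsing_inv _ ((Matrix.isUnit_iff_isUnit_det _).mp (hMn n)),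
            Matrix.one_mul]
          rfl
        show colF (W n) j (rowMap S d Mn n i _) ≠ 0 ∧ _ = decide (0 < colF (W n) j (rowMap S d Mn n i _))
        rw [hrow]
        exact hx n i j⟩
      left_inv := fun σ => Subtype.ext (funext fun t => rfl)
      right_inv := fun τ => funext fun n => funext fun i => Subtype.ext (funext fun j => rfl) }
    rw [Nat.card_congr E, Nat.card_pi]
    refine Finset.prod_congr rfl fun n _ => ?_
    rw [Nat.card_fun]
    congr 1
    simp [Nat.card_eq_fintype_card]
  · intro H
    constructor
    · intro h t
      rw [entryF_apply]
      exact h t.1 t.2.1 t.2.2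
    · intro h n i j
      have := h ⟨n, i, j⟩
      rwa [entryF_apply] at this

end Key
end SCNNProof

open SCNNProof Finset in
/-- Optimal bound on the number of linear regions of a ReLU SCNN layer
`H_n ↦ ReLU(M_n H_n W_n)` for `n = 0, …, p`, with each `M_n` invertible:
(a) for every choice of weights the number of regions is at most
`∏_n (2 Σ_{i<d_n} C(m_n−1, i))^{S_n}`, and (b) the bound is attained. -/
theorem scnn_layer_linear_regions (p : ℕ) (S d m : Fin (p + 1) → ℕ)
    (hd : ∀ n, 1 ≤ d n) (hm : ∀ n, 1 ≤ m n)
    (Mn : ∀ n, Matrix (Fin (S n)) (Fin (S n)) ℝ) (hMn : ∀ n, IsUnit (Mn n)) :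
    (∀ W : ∀ n, Matrix (Fin (d n)) (Fin (m n)) ℝ,
      Nat.card (ConnectedComponents
        {H : ∀ n, Matrix (Fin (S n)) (Fin (d n)) ℝ //
          ∀ n i j, (Mn n * H n * W n) i j ≠ 0})
        ≤ ∏ n, (2 * ∑ i ∈ Finset.range (d n), (m n - 1).choose i) ^ S n) ∧
    (∃ W : ∀ n, Matrix (Fin (d n)) (Fin (m n)) ℝ,
      Nat.card (ConnectedComponents
        {H : ∀ n, Matrix (Fin (S n)) (Fin (d n)) ℝ //
          ∀ n i j, (Mn n * H n * W n) i j ≠ 0})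
        = ∏ n, (2 * ∑ i ∈ Finset.range (d n), (m n - 1).choose i) ^ S n) := by
  constructor
  · intro W
    rw [key_card S d m Mn hMn W]
    refine Finset.prod_le_prod' fun n _ => ?_
    refine Nat.pow_le_pow_left ?_ _
    exact card_signPat_le (m n) (hm n) (d n) (Fin (d n) → ℝ)
      (le_of_eq (Module.finrank_fin_fun ℝ)) (colF (W n))
  · refine ⟨fun n => Matrix.of fun (k : Fin (d n)) (j : Fin (m n)) =>
      ((j : ℕ) + 1 : ℝ) ^ (k : ℕ), ?_⟩
    rw [key_card S d m Mn hMn _]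
    refine Finset.prod_congr rfl fun n _ => ?_
    congr 1
    exact card_signPat_eq (m n) (hm n) (d n) (Fin (d n) → ℝ)
      (Module.finrank_fin_fun ℝ) _ (genPos_vandermonde (d n) (m n) (hd n))
end

section
/- Let W and W′ be real M×N matrices such that for every subset B of the row indices {1,…,M}, rank(W′_{B:}) ≤ rank(W_{B:}), where W_{B:} denotes the submatrix of rows indexed by B. Then the number of connected components of {x ∈ ℝ^N : (W′x)_i ≠ 0 for all i} is at most the number of connected components of {x ∈ ℝ^N : (Wx)_i ≠ 0 for all i}. -/
open Matrix

namespace RegionsAux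

open Set Submodule Module

variable {N : ℕ}

def SgnSet {m : ℕ} (v : Fin m → Fin N → ℝ) : Set (Fin m → Bool) :=
  {s | ∃ x : Fin N → ℝ, ∀ i, v i ⬝ᵥ x ≠ 0 ∧ (0 < v i ⬝ᵥ x ↔ s i = true)}

lemma dot_continuous (v : Fin N → ℝ) : Continuous fun x : Fin N → ℝ => v ⬝ᵥ x := by
  unfold dotProduct
  exact continuous_finset_sum _ fun i _ => continuous_const.mul (continuous_apply i)

lemma sign_iff_mul_pos {a b : ℝ} (ha : a ≠ 0) (hb : b ≠ 0) :
    (0 < a ↔ 0 < b) ↔ 0 < a * b := by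
  rcases ha.lt_or_gt with h1 | h1 <;> rcases hb.lt_or_gt with h2 | h2 <;>
    simp [mul_pos_iff, h1, h2, h1.not_gt, h2.not_gt, h1.asymm, h2.asymm]

lemma dot_self_pos {w : Fin N → ℝ} (hw : w ≠ 0) : 0 < w ⬝ᵥ w := by
  refine lt_of_le_of_ne (Finset.sum_nonneg fun i _ => mul_self_nonneg (w i)) ?_
  exact fun h => hw (dotProduct_self_eq_zero.mp h.symm)

lemma combo_pos {a b t : ℝ} (ha : 0 < a) (hb : 0 < b) (ht0 : 0 ≤ t) (ht1 : t ≤ 1) :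
    0 < (1 - t) * a + t * b := by
  rcases eq_or_lt_of_le ht1 with rfl | ht1
  · simpa
  · exact add_pos_of_pos_of_nonneg (mul_pos (by linarith) ha) (mul_nonneg ht0 hb.le)

noncomputable def proj (w x : Fin N → ℝ) : Fin N → ℝ := x - ((w ⬝ᵥ x) / (w ⬝ᵥ w)) • w

lemma dot_proj (w x : Fin N → ℝ) (hww : w ⬝ᵥ w ≠ 0) : w ⬝ᵥ proj w x = 0 := by
  unfold proj
  rw [dotProduct_sub, dotProduct_smul, smul_eq_mul]
  field_simp
  ring

lemma proj_eq_self (w x : Fin N → ℝ) (h : w ⬝ᵥ x = 0) : proj w x = x := by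
  simp [proj, h]

lemma proj_dot_comm (w a y : Fin N → ℝ) : proj w a ⬝ᵥ y = a ⬝ᵥ proj w y := by
  unfold proj
  rw [sub_dotProduct, dotProduct_sub, smul_dotProduct, dotProduct_smul, smul_eq_mul, smul_eq_mul]
  rw [dotProduct_comm w y]
  ring_nf
  rw [dotProduct_comm w a]
  ring

lemma perturb {m : ℕ} (u : Fin m → Fin N → ℝ) (x w : Fin N → ℝ)
    (hx : ∀ i, u i ⬝ᵥ x ≠ 0) (hxw : w ⬝ᵥ x = 0) (hww : 0 < w ⬝ᵥ w) (b : Bool) :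
    ∃ y, (∀ i, 0 < (u i ⬝ᵥ x) * (u i ⬝ᵥ y)) ∧ w ⬝ᵥ y ≠ 0 ∧ (0 < w ⬝ᵥ y ↔ b = true) := by
  set U : Set (Fin N → ℝ) := ⋂ i, ((fun y => (u i ⬝ᵥ x) * (u i ⬝ᵥ y)) ⁻¹' Ioi 0) with hUdef
  have hU : IsOpen U :=
    isOpen_iInter_of_finite fun i =>
      (isOpen_Ioi).preimage (continuous_const.mul (dot_continuous (u i)))
  have hxU : x ∈ U := by
    simp only [hUdef, mem_iInter, mem_preimage, mem_Ioi]
    exact fun i => mul_self_pos.mpr (hx i)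
  have hf : Continuous fun t : ℝ => x + t • w :=
    continuous_const.add (continuous_id.smul continuous_const)
  have h0 : (fun t : ℝ => x + t • w) ⁻¹' U ∈ nhds (0 : ℝ) := by
    refine (hU.preimage hf).mem_nhds ?_
    simpa using hxU
  obtain ⟨δ, hδ, hball⟩ := Metric.mem_nhds_iff.mp h0
  set t : ℝ := if b then δ / 2 else -(δ / 2) with htdef
  have ht : |t| < δ := by
    have : |t| = δ / 2 := by cases b <;> simp [htdef, abs_of_pos, abs_of_neg, hδ, le_of_lt hδ]
    rw [this]; linarith
  have hmem : x + t • w ∈ U := by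
    apply hball
    simpa [Metric.mem_ball, Real.dist_eq] using ht
  have heq : w ⬝ᵥ (x + t • w) = t * (w ⬝ᵥ w) := by
    rw [dotProduct_add, hxw, dotProduct_smul, zero_add, smul_eq_mul]
  refine ⟨x + t • w, ?_, ?_, ?_⟩
  · intro i
    have := mem_iInter.mp hmem i
    simpa using this
  · rw [heq]
    have htne : t ≠ 0 := by cases b <;> simp [htdef] <;> positivity
    exact mul_ne_zero htne (ne_of_gt hww)
  · rw [heq]
    cases b with
    | true =>
        simp only [htdef, if_true]
        have : 0 < δ / 2 * (w ⬝ᵥ w) := by positivity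
        simpa using this
    | false =>
        simp only [htdef, if_false]
        have : -(δ / 2) * (w ⬝ᵥ w) < 0 := by
          apply mul_neg_of_neg_of_pos _ hww
          linarith
        simp only [Bool.false_eq_true, iff_false, not_lt]
        exact this.le

lemma mem_tail {m : ℕ} {v : Fin (m+1) → Fin N → ℝ} {s : Fin (m+1) → Bool}
    (hs : s ∈ SgnSet v) : Fin.tail s ∈ SgnSet (Fin.tail v) := by
  obtain ⟨x, hx⟩ := hs
  exact ⟨x, fun i => hx i.succ⟩

lemma cons_mem_of_mem_proj {m : ℕ} {v : Fin (m+1) → Fin N → ℝ} (hw : v 0 ≠ 0)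
    {t : Fin m → Bool} (ht : t ∈ SgnSet (fun i : Fin m => proj (v 0) (v i.succ))) (b : Bool) :
    Fin.cons b t ∈ SgnSet v := by
  obtain ⟨y, hy⟩ := ht
  have hww : 0 < v 0 ⬝ᵥ v 0 := dot_self_pos hw
  have hz0 : v 0 ⬝ᵥ proj (v 0) y = 0 := dot_proj _ y hww.ne'
  have hzi : ∀ i : Fin m, v i.succ ⬝ᵥ proj (v 0) y ≠ 0 ∧
      (0 < v i.succ ⬝ᵥ proj (v 0) y ↔ t i = true) := by
    intro i
    have heq : v i.succ ⬝ᵥ proj (v 0) y = proj (v 0) (v i.succ) ⬝ᵥ y :=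
      (proj_dot_comm (v 0) (v i.succ) y).symm
    rw [heq]
    exact hy i
  obtain ⟨y', hy1, hy2, hy3⟩ :=
    perturb (fun i : Fin m => v i.succ) (proj (v 0) y) (v 0)
      (fun i => (hzi i).1) hz0 hww b
  refine ⟨y', fun i => ?_⟩
  refine Fin.cases ?_ ?_ i
  · exact ⟨hy2, by rw [Fin.cons_zero]; exact hy3⟩
  · intro j
    have h1 := hy1 j
    have hne : v j.succ ⬝ᵥ y' ≠ 0 := right_ne_zero_of_mul h1.ne'
    refine ⟨hne, ?_⟩
    rw [Fin.cons_succ]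
    exact ((sign_iff_mul_pos (hzi j).1 hne).mpr h1).symm.trans ((hzi j).2)

lemma exists_cons_mem {m : ℕ} {v : Fin (m+1) → Fin N → ℝ} (hw : v 0 ≠ 0)
    {t : Fin m → Bool} (ht : t ∈ SgnSet (Fin.tail v)) : ∃ b, Fin.cons b t ∈ SgnSet v := by
  obtain ⟨x, hx⟩ := ht
  by_cases h0 : v 0 ⬝ᵥ x = 0
  · have hww : 0 < v 0 ⬝ᵥ v 0 := dot_self_pos hw
    obtain ⟨y, hy1, hy2, hy3⟩ :=
      perturb (fun i : Fin m => v i.succ) x (v 0) (fun i => (hx i).1) h0 hww true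
    refine ⟨true, y, fun i => ?_⟩
    refine Fin.cases ?_ ?_ i
    · exact ⟨hy2, by rw [Fin.cons_zero]; exact hy3⟩
    · intro j
      have h1 := hy1 j
      have hne : v j.succ ⬝ᵥ y ≠ 0 := right_ne_zero_of_mul h1.ne'
      refine ⟨hne, ?_⟩
      rw [Fin.cons_succ]
      exact ((sign_iff_mul_pos (hx j).1 hne).mpr h1).symm.trans ((hx j).2)
  · refine ⟨decide (0 < v 0 ⬝ᵥ x), x, fun i => ?_⟩
    refine Fin.cases ?_ ?_ i
    · refine ⟨h0, ?_⟩
      rw [Fin.cons_zero]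
      simp [decide_eq_true_iff]
    · intro j
      rw [Fin.cons_succ]
      exact hx j

lemma mem_proj_of_cons {m : ℕ} {v : Fin (m+1) → Fin N → ℝ} {t : Fin m → Bool}
    (hpl : Fin.cons true t ∈ SgnSet v) (hmi : Fin.cons false t ∈ SgnSet v) :
    t ∈ SgnSet (fun i : Fin m => proj (v 0) (v i.succ)) := by
  obtain ⟨xp, hxp⟩ := hpl
  obtain ⟨xm, hxm⟩ := hmi
  have hdp : 0 < v 0 ⬝ᵥ xp := (hxp 0).2.mpr (by rw [Fin.cons_zero])
  have hdm : v 0 ⬝ᵥ xm < 0 := by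
    rcases (hxm 0).1.lt_or_gt with h | h
    · exact h
    · exact absurd ((hxm 0).2.mp h) (by rw [Fin.cons_zero]; simp)
  have hsub : (0:ℝ) < v 0 ⬝ᵥ xp - v 0 ⬝ᵥ xm := by linarith
  set τ : ℝ := (v 0 ⬝ᵥ xp) / (v 0 ⬝ᵥ xp - v 0 ⬝ᵥ xm) with hτ
  have hτ0 : 0 ≤ τ := div_nonneg hdp.le hsub.le
  have hτ1 : τ ≤ 1 := (div_le_one hsub).mpr (by linarith)
  set z := (1 - τ) • xp + τ • xm with hzdef
  have hdotz : ∀ u : Fin N → ℝ, u ⬝ᵥ z = (1 - τ) * (u ⬝ᵥ xp) + τ * (u ⬝ᵥ xm) := by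
    intro u
    rw [hzdef, dotProduct_add, dotProduct_smul, dotProduct_smul, smul_eq_mul, smul_eq_mul]
  have hz0 : v 0 ⬝ᵥ z = 0 := by
    rw [hdotz, hτ]
    field_simp
    ring
  have hsigns : ∀ i : Fin m, v i.succ ⬝ᵥ z ≠ 0 ∧ (0 < v i.succ ⬝ᵥ z ↔ t i = true) := by
    intro i
    have pp := hxp i.succ
    have pm := hxm i.succ
    rw [Fin.cons_succ] at pp pm
    have hab : 0 < (v i.succ ⬝ᵥ xp) * (v i.succ ⬝ᵥ xm) :=
      (sign_iff_mul_pos pp.1 pm.1).mp (pp.2.trans pm.2.symm)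
    have hcombo : 0 < (v i.succ ⬝ᵥ xp) * (v i.succ ⬝ᵥ z) := by
      rw [hdotz]
      rcases mul_pos_iff.mp hab with ⟨h1, h2⟩ | ⟨h1, h2⟩
      · exact mul_pos h1 (combo_pos h1 h2 hτ0 hτ1)
      · have h3 := combo_pos (neg_pos.mpr h1) (neg_pos.mpr h2) hτ0 hτ1
        nlinarith
    have hne : v i.succ ⬝ᵥ z ≠ 0 := right_ne_zero_of_mul hcombo.ne'
    exact ⟨hne, ((sign_iff_mul_pos pp.1 hne).mpr hcombo).symm.trans pp.2⟩
  refine ⟨z, fun i => ?_⟩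
  have heq : proj (v 0) (v i.succ) ⬝ᵥ z = v i.succ ⬝ᵥ z := by
    rw [proj_dot_comm, proj_eq_self _ _ hz0]
  rw [heq]
  exact hsigns i

lemma sgn_ncard_cons {m : ℕ} (v : Fin (m+1) → Fin N → ℝ) (hw : v 0 ≠ 0) :
    (SgnSet v).ncard = (SgnSet (Fin.tail v)).ncard
      + (SgnSet (fun i : Fin m => proj (v 0) (v i.succ))).ncard := by
  classical
  rw [Set.ncard_eq_toFinset_card (SgnSet v) (Set.toFinite _),
    Set.ncard_eq_toFinset_card (SgnSet (Fin.tail v)) (Set.toFinite _),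
    Set.ncard_eq_toFinset_card (SgnSet (fun i : Fin m => proj (v 0) (v i.succ))) (Set.toFinite _)]
  have hmap : ∀ s ∈ (Set.toFinite (SgnSet v)).toFinset,
      Fin.tail s ∈ (Set.toFinite (SgnSet (Fin.tail v))).toFinset := by
    intro s hs
    rw [Set.Finite.mem_toFinset] at *
    exact mem_tail hs
  rw [Finset.card_eq_sum_card_fiberwise hmap]
  have hfiber : ∀ t ∈ (Set.toFinite (SgnSet (Fin.tail v))).toFinset,
      (((Set.toFinite (SgnSet v)).toFinset).filter fun s => Fin.tail s = t).card
        = 1 + (if t ∈ SgnSet (fun i : Fin m => proj (v 0) (v i.succ)) then 1 else 0) := by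
    intro t ht
    rw [Set.Finite.mem_toFinset] at ht
    have himg : ((Set.toFinite (SgnSet v)).toFinset).filter (fun s => Fin.tail s = t)
        = (Finset.univ.filter fun b : Bool => Fin.cons b t ∈ SgnSet v).image
            (fun b => Fin.cons b t) := by
      ext s
      simp only [Finset.mem_filter, Finset.mem_image, Finset.mem_univ, true_and,
        Set.Finite.mem_toFinset]
      constructor
      · rintro ⟨hs, ht'⟩
        subst ht'
        exact ⟨s 0, by rwa [Fin.cons_self_tail], Fin.cons_self_tail s⟩
      · rintro ⟨b, hb, rfl⟩
        exact ⟨hb, by simp⟩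
    rw [himg, Finset.card_image_of_injective _ (fun b1 b2 h => by simpa using congrFun h 0)]
    by_cases hT : t ∈ SgnSet (fun i : Fin m => proj (v 0) (v i.succ))
    · have hall : ∀ b : Bool, Fin.cons b t ∈ SgnSet v := fun b => cons_mem_of_mem_proj hw hT b
      rw [Finset.filter_true_of_mem (fun b _ => hall b), if_pos hT]
      simp
    · obtain ⟨b, hb⟩ := exists_cons_mem hw ht
      have hnot : ¬ (Fin.cons true t ∈ SgnSet v ∧ Fin.cons false t ∈ SgnSet v) :=
        fun h => hT (mem_proj_of_cons h.1 h.2)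
      have hsingle : Finset.univ.filter (fun b : Bool => Fin.cons b t ∈ SgnSet v) = {b} := by
        ext c
        simp only [Finset.mem_filter, Finset.mem_univ, true_and, Finset.mem_singleton]
        constructor
        · intro hc
          by_contra hne
          exact hnot (by cases b <;> cases c <;> simp_all)
        · rintro rfl
          exact hb
      rw [hsingle, if_neg hT]; simp
  rw [Finset.sum_congr rfl hfiber, Finset.sum_add_distrib, Finset.sum_const, smul_eq_mul, mul_one]
  congr 1
  rw [← Finset.card_filter]
  congr 1
  ext u
  simp only [Finset.mem_filter, Set.Finite.mem_toFinset]
  constructor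
  · exact fun h => h.2
  · intro hu
    refine ⟨?_, hu⟩
    have := mem_tail (cons_mem_of_mem_proj hw hu true)
    rwa [Fin.tail_cons] at this

/-- The linear functional `x ↦ w ⬝ᵥ x`. -/
def dotL (w : Fin N → ℝ) : (Fin N → ℝ) →ₗ[ℝ] ℝ where
  toFun x := w ⬝ᵥ x
  map_add' a b := dotProduct_add w a b
  map_smul' t a := by simp [dotProduct_smul]

lemma finrank_span_proj_image (w : Fin N → ℝ) (hw : w ≠ 0) (A : Set (Fin N → ℝ)) :
    finrank ℝ (span ℝ (proj w '' A)) + 1 = finrank ℝ (span ℝ (insert w A)) := by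
  have hww : (0:ℝ) < w ⬝ᵥ w := dot_self_pos hw
  have hspan : span ℝ (insert w A) = span ℝ {w} ⊔ span ℝ (proj w '' A) := by
    rw [span_insert]
    apply le_antisymm
    · refine sup_le le_sup_left (span_le.mpr fun a ha => ?_)
      have heq : a = ((w ⬝ᵥ a) / (w ⬝ᵥ w)) • w + proj w a := by
        unfold proj; ring_nf
      rw [heq]
      exact add_mem
        (smul_mem _ _ (mem_sup_left (subset_span (mem_singleton w))))
        (mem_sup_right (subset_span (mem_image_of_mem _ ha)))
    · refine sup_le le_sup_left (span_le.mpr fun p hp => ?_)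
      obtain ⟨a, ha, rfl⟩ := hp
      unfold proj
      exact sub_mem (mem_sup_right (subset_span ha))
        (smul_mem _ _ (mem_sup_left (subset_span (mem_singleton w))))
  have hker : span ℝ (proj w '' A) ≤ LinearMap.ker (dotL w) := by
    rw [span_le]
    rintro p ⟨a, _, rfl⟩
    simp only [SetLike.mem_coe, LinearMap.mem_ker]
    exact dot_proj w a (ne_of_gt hww)
  have hinf : span ℝ {w} ⊓ span ℝ (proj w '' A) = ⊥ := by
    rw [eq_bot_iff]
    rintro x ⟨hx1, hx2⟩
    obtain ⟨c, rfl⟩ := mem_span_singleton.mp hx1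
    have hzero : w ⬝ᵥ (c • w) = 0 := hker hx2
    rw [dotProduct_smul, smul_eq_mul] at hzero
    have hc : c = 0 := by
      rcases mul_eq_zero.mp hzero with h | h
      · exact h
      · exact absurd h (ne_of_gt hww)
    simp [hc]
  have hdim := Submodule.finrank_sup_add_finrank_inf_eq (span ℝ {w}) (span ℝ (proj w '' A))
  rw [hinf, finrank_bot, add_zero, finrank_span_singleton hw] at hdim
  rw [hspan, hdim, add_comm]

lemma sgn_ncard_le : ∀ (m : ℕ) (v v' : Fin m → Fin N → ℝ),
    (∀ B : Finset (Fin m),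
      finrank ℝ (span ℝ (v' '' ↑B)) ≤ finrank ℝ (span ℝ (v '' ↑B))) →
    (SgnSet v').ncard ≤ (SgnSet v).ncard := by
  intro m
  induction m with
  | zero =>
      intro v v' _
      have h1 : SgnSet v = univ := eq_univ_of_forall fun s => ⟨0, fun i => i.elim0⟩
      have h2 : SgnSet v' = univ := eq_univ_of_forall fun s => ⟨0, fun i => i.elim0⟩
      rw [h1, h2]
  | succ m ih =>
      intro v v' h
      by_cases hw' : v' 0 = 0
      · have hempty : SgnSet v' = ∅ := by
          rw [Set.eq_empty_iff_forall_notMem]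
          rintro s ⟨x, hx⟩
          exact (hx 0).1 (by rw [hw', zero_dotProduct])
        simp [hempty]
      · have h0 : v 0 ≠ 0 := by
          intro hv0
          have hB := h {0}
          rw [Finset.coe_singleton, Set.image_singleton, Set.image_singleton, hv0,
            span_zero_singleton, finrank_bot, finrank_span_singleton hw'] at hB
          omega
        rw [sgn_ncard_cons v h0, sgn_ncard_cons v' hw']
        have himgeq : ∀ (u : Fin (m+1) → Fin N → ℝ) (B : Finset (Fin m)),
            u '' ↑(B.map (Fin.succEmb m)) = Fin.tail u '' ↑B := by
          intro u B
          rw [Finset.coe_map, Set.image_image]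
          rfl
        have himgeq2 : ∀ (u : Fin (m+1) → Fin N → ℝ) (B : Finset (Fin m)),
            u '' ↑(insert (0 : Fin (m+1)) (B.map (Fin.succEmb m)))
              = insert (u 0) (Fin.tail u '' ↑B) := by
          intro u B
          rw [Finset.coe_insert, Set.image_insert_eq, Finset.coe_map, Set.image_image]
          rfl
        have htail : (SgnSet (Fin.tail v')).ncard ≤ (SgnSet (Fin.tail v)).ncard := by
          apply ih
          intro B
          have hB := h (B.map (Fin.succEmb m))
          rw [himgeq v B, himgeq v' B] at hB
          exact hB
        have hproj : (SgnSet fun i : Fin m => proj (v' 0) (v' i.succ)).ncard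
            ≤ (SgnSet fun i : Fin m => proj (v 0) (v i.succ)).ncard := by
          apply ih
          intro B
          have hB := h (insert 0 (B.map (Fin.succEmb m)))
          rw [himgeq2 v B, himgeq2 v' B] at hB
          have e1 := finrank_span_proj_image (v' 0) hw' (Fin.tail v' '' ↑B)
          have e2 := finrank_span_proj_image (v 0) h0 (Fin.tail v '' ↑B)
          have hrw1 : proj (v' 0) '' (Fin.tail v' '' ↑B)
              = (fun i : Fin m => proj (v' 0) (v' i.succ)) '' ↑B := by
            rw [Set.image_image]; rfl
          have hrw2 : proj (v 0) '' (Fin.tail v '' ↑B)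
              = (fun i : Fin m => proj (v 0) (v i.succ)) '' ↑B := by
            rw [Set.image_image]; rfl
          rw [hrw1] at e1
          rw [hrw2] at e2
          omega
        omega

lemma card_components_eq {m : ℕ} (v : Fin m → Fin N → ℝ) :
    Nat.card (ConnectedComponents {x : Fin N → ℝ // ∀ i, v i ⬝ᵥ x ≠ 0})
      = (SgnSet v).ncard := by
  classical
  set X := {x : Fin N → ℝ // ∀ i, v i ⬝ᵥ x ≠ 0} with hX
  let f : X → (Fin m → Bool) := fun p i => decide (0 < v i ⬝ᵥ p.val)
  have hopen : ∀ x0 : Fin N → ℝ,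
      IsOpen {z : Fin N → ℝ | ∀ i, 0 < (v i ⬝ᵥ x0) * (v i ⬝ᵥ z)} := by
    intro x0
    have heq : {z : Fin N → ℝ | ∀ i, 0 < (v i ⬝ᵥ x0) * (v i ⬝ᵥ z)}
        = ⋂ i, ((fun z => (v i ⬝ᵥ x0) * (v i ⬝ᵥ z)) ⁻¹' Ioi 0) := by
      ext z; simp [mem_iInter]
    rw [heq]
    exact isOpen_iInter_of_finite fun i =>
      isOpen_Ioi.preimage (continuous_const.mul (dot_continuous (v i)))
  have hlc : IsLocallyConstant f := by
    rw [IsLocallyConstant.iff_exists_open]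
    intro p
    refine ⟨Subtype.val ⁻¹' {z | ∀ i, 0 < (v i ⬝ᵥ p.val) * (v i ⬝ᵥ z)},
      (hopen p.val).preimage continuous_subtype_val,
      fun i => mul_self_pos.mpr (p.2 i), ?_⟩
    intro q hq
    funext i
    exact decide_eq_decide.mpr ((sign_iff_mul_pos (p.2 i) (q.2 i)).mpr (hq i)).symm
  have hcont : Continuous f := hlc.continuous
  let g := hcont.connectedComponentsLift
  have hg : ∀ p : X, g (ConnectedComponents.mk p) = f p := fun p => rfl
  have hinj : Function.Injective g := by
    intro c1 c2 hc
    obtain ⟨p, rfl⟩ := ConnectedComponents.surjective_coe c1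
    obtain ⟨q, rfl⟩ := ConnectedComponents.surjective_coe c2
    rw [hg p, hg q] at hc
    rw [ConnectedComponents.coe_eq_coe']
    set R := {z : Fin N → ℝ | ∀ i, 0 < (v i ⬝ᵥ q.val) * (v i ⬝ᵥ z)} with hR
    have hconv : Convex ℝ R := by
      have heq : R = ⋂ i, {z : Fin N → ℝ | 0 < (v i ⬝ᵥ q.val) * (v i ⬝ᵥ z)} := by
        ext z; simp [hR, mem_iInter]
      rw [heq]
      refine convex_iInter fun i => ?_
      exact convex_halfSpace_gt
        ⟨fun a b => by rw [dotProduct_add]; ring,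
         fun c a => by rw [dotProduct_smul, smul_eq_mul, smul_eq_mul]; ring⟩ 0
    have hsub : R ⊆ Set.range (Subtype.val : X → (Fin N → ℝ)) := by
      intro z hz
      rw [Subtype.range_coe_subtype]
      exact fun i => right_ne_zero_of_mul (hz i).ne'
    have himg : Subtype.val '' (Subtype.val ⁻¹' R : Set X) = R :=
      Set.image_preimage_eq_of_subset hsub
    have hRpre : IsPreconnected (Subtype.val '' (Subtype.val ⁻¹' R : Set X)) := by
      rw [himg]; exact hconv.isPreconnected
    have hpre : IsPreconnected (Subtype.val ⁻¹' R : Set X) :=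
      Topology.IsInducing.subtypeVal.isPreconnected_image.mp hRpre
    have hqR : q ∈ (Subtype.val ⁻¹' R : Set X) := fun i => mul_self_pos.mpr (q.2 i)
    have hpR : p ∈ (Subtype.val ⁻¹' R : Set X) := by
      intro i
      have hiff : (0 < v i ⬝ᵥ p.val) ↔ (0 < v i ⬝ᵥ q.val) :=
        decide_eq_decide.mp (congrFun hc i)
      exact (sign_iff_mul_pos (q.2 i) (p.2 i)).mp hiff.symm
    exact hpre.subset_connectedComponent hqR hpR
  have hrange : Set.range g = SgnSet v := by
    ext s
    constructor
    · rintro ⟨c, rfl⟩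
      obtain ⟨p, rfl⟩ := ConnectedComponents.surjective_coe c
      refine ⟨p.val, fun i => ⟨p.2 i, ?_⟩⟩
      rw [hg p]
      simp [f]
    · rintro ⟨x, hx⟩
      refine ⟨ConnectedComponents.mk ⟨x, fun i => (hx i).1⟩, ?_⟩
      rw [hg]
      funext i
      show decide (0 < v i ⬝ᵥ x) = s i
      cases hb : s i with
      | true => exact decide_eq_true ((hx i).2.mpr (by rw [hb]))
      | false =>
          refine decide_eq_false fun h => ?_
          have := (hx i).2.mp h
          rw [hb] at this
          exact Bool.false_ne_true this
  calc Nat.card (ConnectedComponents X)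
      = Nat.card (Set.range g) := Nat.card_congr (Equiv.ofInjective g hinj)
    _ = (SgnSet v).ncard := by rw [hrange, Nat.card_coe_set_eq]

lemma rank_submatrix_eq {M : ℕ} (W : Matrix (Fin M) (Fin N) ℝ) (B : Finset (Fin M)) :
    (W.submatrix (fun i : B => (i : Fin M)) id).rank
      = finrank ℝ (span ℝ ((fun i => W i) '' ↑B)) := by
  rw [Matrix.rank_eq_finrank_span_row]
  have heq : Set.range (W.submatrix (fun i : B => (i : Fin M)) id)
      = (fun i => W i) '' ↑B := by
    ext r
    constructor
    · rintro ⟨i, rfl⟩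
      exact ⟨↑i, i.2, rfl⟩
    · rintro ⟨j, hj, rfl⟩
      exact ⟨⟨j, hj⟩, rfl⟩
  rw [← heq]; rfl

end RegionsAux

open RegionsAux in
/-- If every row-submatrix of `W'` has rank at most that of the corresponding
row-submatrix of `W`, then the central arrangement with normals the rows of `W'`
has at most as many regions as the one with normals the rows of `W`. -/
theorem card_regions_mono_of_rank_le {M N : ℕ}
    (W W' : Matrix (Fin M) (Fin N) ℝ)
    (hrank : ∀ B : Finset (Fin M),
      (W'.submatrix (fun i : B => (i : Fin M)) id).rank
        ≤ (W.submatrix (fun i : B => (i : Fin M)) id).rank) :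
    Nat.card (ConnectedComponents {x : Fin N → ℝ // ∀ i, W'.mulVec x i ≠ 0})
      ≤ Nat.card (ConnectedComponents {x : Fin N → ℝ // ∀ i, W.mulVec x i ≠ 0}) := by
  have e' : Nat.card (ConnectedComponents {x : Fin N → ℝ // ∀ i, W'.mulVec x i ≠ 0})
      = (SgnSet fun i => W' i).ncard := card_components_eq fun i => W' i
  have e : Nat.card (ConnectedComponents {x : Fin N → ℝ // ∀ i, W.mulVec x i ≠ 0})
      = (SgnSet fun i => W i).ncard := card_components_eq fun i => W i
  rw [e', e]
  apply sgn_ncard_le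
  intro B
  have hB := hrank B
  rw [rank_submatrix_eq, rank_submatrix_eq] at hB
  exact hB
end

section
/- Let ψ : ℝ → ℝ be an odd function (ψ(−x) = −ψ(x) for all x). Let B₁ ∈ ℝ^{a×b}, B₂ ∈ ℝ^{b×c}, feature matrices H₋ ∈ ℝ^{a×d₁}, H ∈ ℝ^{b×d₂}, H₊ ∈ ℝ^{c×d₃}, and weights W₁, W₂, W₃ ∈ ℝ^{d₂×m}, W₄ ∈ ℝ^{d₁×m}, W₅ ∈ ℝ^{d₃×m}. Define the layer f(B₁, B₂, H₋, H, H₊) = ψ∘(B₁ᵀB₁ H W₁ + H W₂ + B₂B₂ᵀ H W₃ + B₁ᵀ H₋ W₄ + B₂ H₊ W₅), where ψ is applied entrywise. Let T₋ ∈ ℝ^{a×a}, T ∈ ℝ^{b×b}, T₊ ∈ ℝ^{c×c} be diagonal matrices all of whose diagonal entries are 1 or −1. Then f(T₋ B₁ T, T B₂ T₊, T₋ H₋, T H, T₊ H₊) = T · f(B₁, B₂, H₋, H, H₊). -/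
open Matrix

/-- The linear MPSN layer of equation (22):
`f(B₁, B₂, H₋, H, H₊) = ψ∘(B₁ᵀB₁ H W₁ + H W₂ + B₂B₂ᵀ H W₃ + B₁ᵀ H₋ W₄ + B₂ H₊ W₅)`,
with `ψ` applied entrywise. -/
noncomputable def mpsnLinearLayer {a b c d₁ d₂ d₃ m : ℕ} (ψ : ℝ → ℝ)
    (B₁ : Matrix (Fin a) (Fin b) ℝ) (B₂ : Matrix (Fin b) (Fin c) ℝ)
    (Hm : Matrix (Fin a) (Fin d₁) ℝ) (H : Matrix (Fin b) (Fin d₂) ℝ)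
    (Hp : Matrix (Fin c) (Fin d₃) ℝ)
    (W₁ W₂ W₃ : Matrix (Fin d₂) (Fin m) ℝ) (W₄ : Matrix (Fin d₁) (Fin m) ℝ)
    (W₅ : Matrix (Fin d₃) (Fin m) ℝ) : Matrix (Fin b) (Fin m) ℝ :=
  (B₁ᵀ * B₁ * H * W₁ + H * W₂ + B₂ * B₂ᵀ * H * W₃
    + B₁ᵀ * Hm * W₄ + B₂ * Hp * W₅).map ψ

lemma diag_sq {n : ℕ} (ε : Fin n → ℝ) (hε : ∀ i, ε i = 1 ∨ ε i = -1) :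
    diagonal ε * diagonal ε = (1 : Matrix (Fin n) (Fin n) ℝ) := by
  rw [diagonal_mul_diagonal, show (fun i => ε i * ε i) = fun _ : Fin n => (1 : ℝ) from
    funext fun i => by rcases hε i with h | h <;> simp [h], diagonal_one]

lemma diag_diag_mul {n k : ℕ} (ε : Fin n → ℝ) (hε : ∀ i, ε i = 1 ∨ ε i = -1)
    (M : Matrix (Fin n) (Fin k) ℝ) : diagonal ε * (diagonal ε * M) = M := by
  rw [← Matrix.mul_assoc, diag_sq ε hε, Matrix.one_mul]

lemma map_diag_mul {n k : ℕ} (ψ : ℝ → ℝ) (hψ : ∀ x : ℝ, ψ (-x) = -ψ x)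
    (ε : Fin n → ℝ) (hε : ∀ i, ε i = 1 ∨ ε i = -1) (M : Matrix (Fin n) (Fin k) ℝ) :
    (diagonal ε * M).map ψ = diagonal ε * M.map ψ := by
  ext i j
  simp only [Matrix.map_apply, Matrix.diagonal_mul]
  rcases hε i with h | h <;> simp [h, hψ]

/-- The linear MPSN layer with an odd entrywise nonlinearity `ψ` is orientation
equivariant: transforming the boundary matrices by `B₁ ↦ T₋ B₁ T`, `B₂ ↦ T B₂ T₊` and
the features by `H₋ ↦ T₋ H₋`, `H ↦ T H`, `H₊ ↦ T₊ H₊`, where `T₋ = diagonal εm`,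
`T = diagonal ε`, `T₊ = diagonal εp` are diagonal matrices with `±1` diagonal entries,
multiplies the output by `T`. -/
theorem mpsnLinearLayer_orientation_equivariant {a b c d₁ d₂ d₃ m : ℕ}
    (ψ : ℝ → ℝ) (hψ : ∀ x : ℝ, ψ (-x) = -ψ x)
    (B₁ : Matrix (Fin a) (Fin b) ℝ) (B₂ : Matrix (Fin b) (Fin c) ℝ)
    (Hm : Matrix (Fin a) (Fin d₁) ℝ) (H : Matrix (Fin b) (Fin d₂) ℝ)
    (Hp : Matrix (Fin c) (Fin d₃) ℝ)
    (W₁ W₂ W₃ : Matrix (Fin d₂) (Fin m) ℝ) (W₄ : Matrix (Fin d₁) (Fin m) ℝ)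
    (W₅ : Matrix (Fin d₃) (Fin m) ℝ)
    (εm : Fin a → ℝ) (ε : Fin b → ℝ) (εp : Fin c → ℝ)
    (hεm : ∀ i, εm i = 1 ∨ εm i = -1) (hε : ∀ i, ε i = 1 ∨ ε i = -1)
    (hεp : ∀ i, εp i = 1 ∨ εp i = -1) :
    mpsnLinearLayer ψ (diagonal εm * B₁ * diagonal ε) (diagonal ε * B₂ * diagonal εp)
        (diagonal εm * Hm) (diagonal ε * H) (diagonal εp * Hp) W₁ W₂ W₃ W₄ W₅
      = diagonal ε * mpsnLinearLayer ψ B₁ B₂ Hm H Hp W₁ W₂ W₃ W₄ W₅ := by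
  have hTm := diag_sq εm hεm
  have hT := diag_sq ε hε
  have hTp := diag_sq εp hεp
  have key : (diagonal εm * B₁ * diagonal ε)ᵀ * (diagonal εm * B₁ * diagonal ε)
        * (diagonal ε * H) * W₁ + (diagonal ε * H) * W₂
      + (diagonal ε * B₂ * diagonal εp) * (diagonal ε * B₂ * diagonal εp)ᵀ
        * (diagonal ε * H) * W₃
      + (diagonal εm * B₁ * diagonal ε)ᵀ * (diagonal εm * Hm) * W₄
      + (diagonal ε * B₂ * diagonal εp) * (diagonal εp * Hp) * W₅
      = diagonal ε * (B₁ᵀ * B₁ * H * W₁ + H * W₂ + B₂ * B₂ᵀ * H * W₃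
        + B₁ᵀ * Hm * W₄ + B₂ * Hp * W₅) := by
    simp only [Matrix.transpose_mul, Matrix.diagonal_transpose, Matrix.mul_add,
      Matrix.mul_assoc, diag_diag_mul εm hεm, diag_diag_mul ε hε, diag_diag_mul εp hεp]
  unfold mpsnLinearLayer
  rw [key, map_diag_mul ψ hψ ε hε]
end

section
/- Let ψ : ℝ → ℝ be an arbitrary function. Let B₁ ∈ ℝ^{a×b}, B₂ ∈ ℝ^{b×c}, feature matrices H₋ ∈ ℝ^{a×d₁}, H ∈ ℝ^{b×d₂}, H₊ ∈ ℝ^{c×d₃}, and weights W₁, W₂, W₃ ∈ ℝ^{d₂×m}, W₄ ∈ ℝ^{d₁×m}, W₅ ∈ ℝ^{d₃×m}. Define the layer f(B₁, B₂, H₋, H, H₊) = ψ∘(B₁ᵀB₁ H W₁ + H W₂ + B₂B₂ᵀ H W₃ + B₁ᵀ H₋ W₄ + B₂ H₊ W₅), where ψ is applied entrywise. Let σ₋, σ, σ₊ be permutations of the index sets of sizes a, b, c respectively, with permutation matrices P₋, P, P₊. Then f(P₋ B₁ Pᵀ, P B₂ P₊ᵀ, P₋ H₋, P H, P₊ H₊)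 = P · f(B₁, B₂, H₋, H, H₊). -/
open Matrix

/-- The permutation matrix of a permutation `σ` of `Fin n`. -/
def permMat {n : ℕ} (σ : Equiv.Perm (Fin n)) : Matrix (Fin n) (Fin n) ℝ :=
  Matrix.of fun i j => if σ j = i then 1 else 0


lemma permMat_mul {n p : ℕ} (σ : Equiv.Perm (Fin n)) (M : Matrix (Fin n) (Fin p) ℝ) :
    permMat σ * M = M.submatrix σ.symm id := by
  ext i j
  simp only [Matrix.mul_apply, permMat, Matrix.of_apply, submatrix_apply, id]
  rw [Finset.sum_eq_single (σ.symm i)]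
  · simp
  · intro k _ hk
    simp [show ¬ σ k = i from fun h => hk (by simp [← h])]
  · simp

lemma permMat_transpose {n : ℕ} (σ : Equiv.Perm (Fin n)) :
    (permMat σ)ᵀ = permMat σ⁻¹ := by
  ext i j
  simp only [transpose_apply, permMat, Matrix.of_apply]
  have : σ i = j ↔ σ⁻¹ j = i := by
    constructor
    · intro h; simp [← h]
    · intro h; simp [← h]
  simp [this]

lemma permMat_mul_permMat {n : ℕ} (σ τ : Equiv.Perm (Fin n)) :
    permMat σ * permMat τ = permMat (σ * τ) := by
  rw [permMat_mul]
  ext i j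
  simp only [submatrix_apply, permMat, Matrix.of_apply, id, Equiv.Perm.mul_apply,
    Equiv.eq_symm_apply, Equiv.symm_apply_eq]
  split_ifs <;> simp_all

lemma permMat_one {n : ℕ} : permMat (1 : Equiv.Perm (Fin n)) = 1 := by
  ext i j
  simp [permMat, Matrix.one_apply, eq_comm]

lemma permMat_transpose_mul_self {n : ℕ} (σ : Equiv.Perm (Fin n)) :
    (permMat σ)ᵀ * permMat σ = 1 := by
  rw [permMat_transpose, permMat_mul_permMat, inv_mul_cancel, permMat_one]

lemma permMat_mul_transpose_self {n : ℕ} (σ : Equiv.Perm (Fin n)) :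
    permMat σ * (permMat σ)ᵀ = 1 := by
  rw [permMat_transpose, permMat_mul_permMat, mul_inv_cancel, permMat_one]

lemma permMat_mul_map {n p : ℕ} (σ : Equiv.Perm (Fin n)) (M : Matrix (Fin n) (Fin p) ℝ)
    (ψ : ℝ → ℝ) : (permMat σ * M).map ψ = permMat σ * M.map ψ := by
  rw [permMat_mul, permMat_mul]
  ext i j
  simp

lemma permMat_cancel₁ {n p : ℕ} (σ : Equiv.Perm (Fin n)) (M : Matrix (Fin n) (Fin p) ℝ) :
    (permMat σ)ᵀ * (permMat σ * M) = M := by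
  rw [← Matrix.mul_assoc, permMat_transpose_mul_self, Matrix.one_mul]

lemma permMat_cancel₂ {n p : ℕ} (σ : Equiv.Perm (Fin n)) (M : Matrix (Fin n) (Fin p) ℝ) :
    permMat σ * ((permMat σ)ᵀ * M) = M := by
  rw [← Matrix.mul_assoc, permMat_mul_transpose_self, Matrix.one_mul]

/-- The linear MPSN layer is (simplex) permutation equivariant: relabeling the simplices
by permutations `σ₋, σ, σ₊` with permutation matrices `P₋, P, P₊`, i.e. transforming the
boundary matrices by `B₁ ↦ P₋ B₁ Pᵀ`, `B₂ ↦ P B₂ P₊ᵀ` and the features by `H₋ ↦ P₋ H₋`,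
`H ↦ P H`, `H₊ ↦ P₊ H₊`, multiplies the output by `P`. -/
theorem mpsnLinearLayer_permutation_equivariant {a b c d₁ d₂ d₃ m : ℕ}
    (ψ : ℝ → ℝ)
    (B₁ : Matrix (Fin a) (Fin b) ℝ) (B₂ : Matrix (Fin b) (Fin c) ℝ)
    (Hm : Matrix (Fin a) (Fin d₁) ℝ) (H : Matrix (Fin b) (Fin d₂) ℝ)
    (Hp : Matrix (Fin c) (Fin d₃) ℝ)
    (W₁ W₂ W₃ : Matrix (Fin d₂) (Fin m) ℝ) (W₄ : Matrix (Fin d₁) (Fin m) ℝ)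
    (W₅ : Matrix (Fin d₃) (Fin m) ℝ)
    (σm : Equiv.Perm (Fin a)) (σ : Equiv.Perm (Fin b)) (σp : Equiv.Perm (Fin c)) :
    mpsnLinearLayer ψ (permMat σm * B₁ * (permMat σ)ᵀ) (permMat σ * B₂ * (permMat σp)ᵀ)
        (permMat σm * Hm) (permMat σ * H) (permMat σp * Hp) W₁ W₂ W₃ W₄ W₅
      = permMat σ * mpsnLinearLayer ψ B₁ B₂ Hm H Hp W₁ W₂ W₃ W₄ W₅ := by
  unfold mpsnLinearLayer
  rw [← permMat_mul_map]
  simp only [transpose_mul, transpose_transpose, Matrix.mul_assoc, permMat_cancel₁,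
    permMat_cancel₂, Matrix.mul_add]
end

section
/- Let V be a real vector space (module over ℝ) and W an additive commutative group. Let A* : V → Multiset V → W be an odd local aggregator, i.e. A*(−h, s.map(x ↦ −x)) = −A*(h, s) for all h ∈ V and all multisets s over V. Define A : V → Multiset (ℝ × V) → W by A(h, q) = A*(h, q.map((o, x) ↦ o • x)). Then: (i) for all h and all multisets q₁, q₂ over ℝ × V related elementwise by the relation 'p′ = p or p′ = (−p.1, −p.2)' (in the sense of Multiset.Rel), A(h, q₂) = A(h, q₁); and (ii) for all h and q, A(−h, q.map((o, x) ↦ (−o, x))) = −A(h, q). -/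
/-- If `Astar` is an odd local aggregator, i.e. `Astar (−h) (s.map (x ↦ −x)) = −Astar h s`,
then `A h q := Astar h (q.map ((o, x) ↦ o • x))` satisfies:
(i) invariance under jointly flipping the sign of the relative orientation and the
feature of any subset of neighbours (Eq. 24), and
(ii) oddness under flipping the feature of the central simplex together with all
relative orientations (Eq. 25). -/
theorem odd_aggregator_orientation_conditions {V W : Type*}
    [AddCommGroup V] [Module ℝ V] [AddCommGroup W]
    (Astar : V → Multiset V → W)
    (hodd : ∀ (h : V) (s : Multiset V),
      Astar (-h) (s.map fun x => -x) = -Astar h s) :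
    (∀ (h : V) (q₁ q₂ : Multiset (ℝ × V)),
      Multiset.Rel (fun p p' => p' = p ∨ p' = (-p.1, -p.2)) q₁ q₂ →
        Astar h (q₂.map fun p => p.1 • p.2) = Astar h (q₁.map fun p => p.1 • p.2)) ∧
    (∀ (h : V) (q : Multiset (ℝ × V)),
      Astar (-h) ((q.map fun p => (-p.1, p.2)).map fun p => p.1 • p.2)
        = -Astar h (q.map fun p => p.1 • p.2)) := by
  constructor
  · intro h q₁ q₂ hrel
    have : q₁.map (fun p => p.1 • p.2) = q₂.map (fun p => p.1 • p.2) := by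
      rw [← Multiset.rel_eq, Multiset.rel_map]
      refine hrel.mono ?_
      rintro p p' _ _ (rfl | rfl)
      · rfl
      · simp [neg_smul, smul_neg]
    rw [this]
  · intro h q
    rw [Multiset.map_map]
    have : q.map ((fun p : ℝ × V => p.1 • p.2) ∘ (fun p => (-p.1, p.2)))
        = (q.map fun p => p.1 • p.2).map fun x => -x := by
      rw [Multiset.map_map]
      refine Multiset.map_congr rfl ?_
      intro p _
      simp [neg_smul]
    rw [this, hodd]
end
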